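/- arXiv:1611.02246 — 6 statements merged into one kernel-verified Lean document; each statement's English description precedes it below -/
import Mathlib

section
/- For every ε > 0 there exists n₀ such that for every n ≥ n₀ and every order-n Steiner triple system S with n divisible by 3, the number of perfect matchings of S is at most ((1+ε)·n/(2e²))^{n/3}. -/
/-!
Order the vertices by a uniformly random permutation `π` and reveal a perfect matching `M` along
it: at time `t`, if the vertex `π⁻¹ t` is still uncovered, its `M`-edge is revealed, as one of the
`C` edges of `S` that start at time `t` and avoid every edge revealed so far. For fixed `π` these
choices form a decision tree, so `∑_M ∏_{e ∈ M} 1 / C ≤ 1` (a Kraft inequality), and concavity of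
`log` turns this into `log #PM ≤ 𝔼 ∑_{e ∈ M} log C`, the average taken over `M` and `π`.

Fix `e ∈ M`, its first vertex `v` and its time `t`. Any other candidate is an edge `f ∋ v` (at most
`n / 2` of them) whose two other vertices lie in two further edges of `M` that are not yet
revealed: six more vertices after time `t`, which conditionally happens with probability at most
`((n - 1 - t) / (n - 8)) ^ 6`. Jensen gives
`𝔼[log C | v, t] ≤ log (1 + n / 2 * ((n - 1 - t) / (n - 8)) ^ 6)`, and averaging over `t` is a
Riemann sum for `∫₀¹ 3x² log (n / 2 * x⁶) dx = log (n / 2) - 2`, whence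
`log #PM ≤ n / 3 * (log (n / 2) - 2 + o(1))`.
-/

open scoped Classical

noncomputable section

/-- `S` is an order-`n` Steiner triple system on vertex set `Fin n`. -/
def IsSTS (n : ℕ) (S : Finset (Finset (Fin n))) : Prop :=
  (∀ e ∈ S, e.card = 3) ∧
  ∀ p : Finset (Fin n), p.card = 2 → ∃! e, e ∈ S ∧ p ⊆ e

/-- `M` is a matching of the 3-uniform hypergraph `S`. -/
def IsMatching (n : ℕ) (S M : Finset (Finset (Fin n))) : Prop :=
  M ⊆ S ∧ ∀ e ∈ M, ∀ f ∈ M, e ≠ f → Disjoint e f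

/-- The number of perfect matchings (matchings with `n/3` hyperedges) of `S`. -/
def numPM (n : ℕ) (S : Finset (Finset (Fin n))) : ℕ :=
  (Finset.univ.filter (fun M : Finset (Finset (Fin n)) =>
    IsMatching n S M ∧ M.card = n / 3)).card

open Finset Equiv Filter Topology
open scoped Nat

section PermutationCounting

open Function

variable {α : Type*} [Fintype α] [DecidableEq α]

theorem card_perm_eqOn (K : Finset α) {g : α → α} (hg : Set.InjOn g K) :
    #{σ : Perm α | ∀ x ∈ K, σ x = g x} = (Fintype.card α - #K)! := by
  obtain ⟨σ₀, hσ₀⟩ := Perm.exists_extending_pair (Subtype.val : K → α) (fun x => g x)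
    Subtype.val_injective (fun x y h => Subtype.ext (hg x.2 y.2 h))
  have hfix : #{τ : Perm α | ∀ x ∈ K, τ x = x} = (Fintype.card α - #K)! := by
    have : ∀ τ : Perm α, (∀ x ∈ K, τ x = x) ↔ ∀ x, ¬x ∉ K → τ x = x := by simp
    simp_rw [this, ← Fintype.card_subtype]
    rw [← Fintype.card_congr (Perm.subtypeEquivSubtypePerm (· ∉ K)),
      Fintype.card_perm, Fintype.card_subtype_compl, Fintype.card_coe]
  rw [← hfix]
  refine card_nbij' (σ₀⁻¹ * ·) (σ₀ * ·) ?_ ?_ (fun σ _ => by simp) (fun τ _ => by simp)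
  · intro σ hσ
    simp only [coe_filter, Set.mem_ofPred_eq, mem_univ, true_and] at hσ ⊢
    intro x hx
    rw [Perm.mul_apply, hσ x hx, Perm.inv_eq_iff_eq, hσ₀ ⟨x, hx⟩]
  · intro τ hτ
    simp only [coe_filter, Set.mem_ofPred_eq, mem_univ, true_and] at hτ ⊢
    intro x hx
    rw [Perm.mul_apply, hτ x hx, hσ₀ ⟨x, hx⟩]

theorem filter_perm_eqOn_mapsTo_insert {K D T : Finset α} {g : α → α} {d : α} (hdK : d ∉ K)
    (hdD : d ∉ D) :
    ({σ : Perm α | (∀ x ∈ K, σ x = g x) ∧ ∀ a ∈ insert d D, σ a ∈ T} : Finset (Perm α))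
      = T.biUnion fun u => {σ : Perm α |
          (∀ x ∈ insert d K, σ x = update g d u x) ∧ ∀ a ∈ D, σ a ∈ T.erase u} := by
  ext σ
  simp only [mem_filter, mem_univ, true_and, mem_biUnion, forall_mem_insert, update_self,
    mem_erase]
  constructor
  · rintro ⟨hK, hd, hD⟩
    refine ⟨σ d, hd, ⟨rfl, fun x hx => ?_⟩, fun a ha => ⟨?_, hD a ha⟩⟩
    · rw [update_of_ne (fun h : x = d => hdK (h ▸ hx)), hK x hx]
    · exact σ.injective.ne (fun h : a = d => hdD (h ▸ ha))
  · rintro ⟨u, hu, ⟨hd, hK⟩, hD⟩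
    refine ⟨fun x hx => ?_, hd ▸ hu, fun a ha => (hD a ha).2⟩
    rw [hK x hx, update_of_ne (fun h : x = d => hdK (h ▸ hx))]

theorem card_perm_eqOn_mapsTo (D K T : Finset α) {g : α → α} (hg : Set.InjOn g K)
    (hKD : Disjoint K D) (hgT : Disjoint (K.image g) T) :
    #{σ : Perm α | (∀ x ∈ K, σ x = g x) ∧ ∀ a ∈ D, σ a ∈ T}
      = (#T).descFactorial #D * (Fintype.card α - #K - #D)! := by
  induction D using Finset.induction_on generalizing K T g with
  | empty => simpa using card_perm_eqOn K hg
  | @insert d D hdD ih =>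
    have hdK : d ∉ K := fun h => disjoint_left.1 hKD h (mem_insert_self d D)
    have hKD' : Disjoint K D := disjoint_of_subset_right (subset_insert d D) hKD
    have hpiece : ∀ u ∈ T, #{σ : Perm α |
            (∀ x ∈ insert d K, σ x = update g d u x) ∧ ∀ a ∈ D, σ a ∈ T.erase u}
          = (#T - 1).descFactorial #D * (Fintype.card α - #K - (#D + 1))! := by
      intro u hu
      have hgK : ∀ x ∈ K, update g d u x = g x := fun x hx =>
        update_of_ne (fun h : x = d => hdK (h ▸ hx)) _ _
      have hinj : Set.InjOn (update g d u) ↑(insert d K) := by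
        rw [coe_insert, Set.injOn_insert hdK]
        refine ⟨hg.congr fun x hx => (hgK x hx).symm, ?_⟩
        rintro ⟨x, hx, hxu⟩
        rw [hgK x hx, update_self] at hxu
        exact disjoint_left.1 hgT (mem_image_of_mem g hx) (hxu ▸ hu)
      have himage : Disjoint ((insert d K).image (update g d u)) (T.erase u) := by
        rw [image_insert, update_self, image_congr (fun x hx => hgK x hx),
          disjoint_insert_left]
        exact ⟨notMem_erase u T, disjoint_of_subset_right (erase_subset u T) hgT⟩
      rw [ih (insert d K) (T.erase u) hinj (disjoint_insert_left.2 ⟨hdD, hKD'⟩) himage,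
        card_erase_of_mem hu, card_insert_of_notMem hdK]
      congr 2
      omega
    rw [filter_perm_eqOn_mapsTo_insert hdK hdD, card_biUnion, sum_congr rfl hpiece, sum_const,
      smul_eq_mul, card_insert_of_notMem hdD]
    · cases #T with
      | zero => simp
      | succ m => rw [Nat.succ_descFactorial_succ, Nat.add_sub_cancel, mul_assoc]
    · intro u _ u' _ huu'
      simp only [Function.onFun, disjoint_left, mem_filter, mem_univ, true_and]
      rintro σ ⟨hσ, -⟩ ⟨hσ', -⟩
      have hu := (hσ d (mem_insert_self d K)).symm.trans (hσ' d (mem_insert_self d K))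
      exact huu' (by simpa using hu)

theorem card_perm_apply_eq_and_lt {n : ℕ} (v t : Fin n) {D : Finset (Fin n)} (hv : v ∉ D) :
    #{σ : Perm (Fin n) | σ v = t ∧ ∀ a ∈ D, t < σ a}
      = (n - 1 - t).descFactorial #D * (n - 1 - #D)! := by
  have h := card_perm_eqOn_mapsTo D {v} (Ioi t) (g := fun _ => t) (by simp)
    (by simpa using hv) (by simp)
  simpa [Fin.card_Ioi] using h

end PermutationCounting

section Inequalities

open Real

theorem sum_log_le_card_mul_log {ι : Type*} (s : Finset ι) {y : ι → ℝ}
    (hy : ∀ i ∈ s, 0 < y i) {b : ℝ} (hb : 0 < b) (hsum : ∑ i ∈ s, y i ≤ #s * b) :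
    ∑ i ∈ s, log (y i) ≤ #s * log b := by
  have hpt : ∀ i ∈ s, log (y i) ≤ log b + (y i / b - 1) := fun i hi => by
    have h := log_le_sub_one_of_pos (div_pos (hy i hi) hb)
    rw [log_div (hy i hi).ne' hb.ne'] at h
    linarith
  have hmean : ∑ i ∈ s, (y i / b - 1) ≤ 0 := by
    rw [sum_sub_distrib, ← sum_div, sum_const, nsmul_one, sub_nonpos, div_le_iff₀ hb]
    exact hsum
  calc ∑ i ∈ s, log (y i) ≤ ∑ i ∈ s, (log b + (y i / b - 1)) := sum_le_sum hpt
    _ ≤ #s * log b := by rw [sum_add_distrib, sum_const, nsmul_eq_mul]; linarith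

theorem descFactorial_eight_mul_factorial_le {n : ℕ} (hn : 9 ≤ n) (r : ℕ) :
    ((r.descFactorial 8 * (n - 9)! : ℕ) : ℝ)
      ≤ (r.descFactorial 2 * (n - 3)! : ℕ) * ((r : ℝ) / (n - 8)) ^ 6 := by
  have hr : r.descFactorial 8 = (r - 2).descFactorial 6 * r.descFactorial 2 :=
    (Nat.descFactorial_mul_descFactorial (by norm_num)).symm
  have hn' : (n - 3)! = (n - 9)! * (n - 3).descFactorial 6 := by
    rw [← Nat.factorial_mul_descFactorial (by omega : 6 ≤ n - 3),
      show n - 3 - 6 = n - 9 by omega]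
  have h1 : (r - 2).descFactorial 6 ≤ r ^ 6 :=
    (Nat.descFactorial_le_pow _ 6).trans (Nat.pow_le_pow_left (Nat.sub_le r 2) 6)
  have h2 : (n - 8) ^ 6 ≤ (n - 3).descFactorial 6 := by
    simpa [show n - 3 + 1 - 6 = n - 8 by omega] using Nat.pow_sub_le_descFactorial (n - 3) 6
  have hnat : r.descFactorial 8 * (n - 9)! * (n - 8) ^ 6
      ≤ r.descFactorial 2 * (n - 3)! * r ^ 6 := by
    rw [hr, hn']
    calc (r - 2).descFactorial 6 * r.descFactorial 2 * (n - 9)! * (n - 8) ^ 6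
        = r.descFactorial 2 * (n - 9)! * ((r - 2).descFactorial 6 * (n - 8) ^ 6) := by
          ring
      _ ≤ r.descFactorial 2 * (n - 9)! * (r ^ 6 * (n - 3).descFactorial 6) := by
          gcongr
      _ = r.descFactorial 2 * ((n - 9)! * (n - 3).descFactorial 6) * r ^ 6 := by ring
  have h8 : (0 : ℝ) < n - 8 := by
    have : (9 : ℝ) ≤ n := by exact_mod_cast hn
    linarith
  rw [div_pow, ← mul_div_assoc, le_div_iff₀ (pow_pos h8 6),
    show (n : ℝ) - 8 = ((n - 8 : ℕ) : ℝ) by rw [Nat.cast_sub (by omega)]; norm_num]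
  exact_mod_cast hnat

theorem factorial_eq_mul_factorial_sub_three {n : ℕ} (hn : 3 ≤ n) :
    (n ! : ℝ) = n * (n - 1) * (n - 2) * (n - 3)! := by
  obtain ⟨m, rfl⟩ := Nat.exists_eq_add_of_le' hn
  simp only [Nat.add_sub_cancel, Nat.factorial_succ]
  push_cast
  ring

theorem log_le_rpow_sub_one_div {z α : ℝ} (hz : 0 < z) (hα : 0 < α) :
    log z ≤ (z ^ α - 1) / α := by
  have h := log_le_sub_one_of_pos (rpow_pos_of_pos hz α)
  rw [log_rpow hz, ← le_div_iff₀' hα] at h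
  exact h

theorem log_one_add_le_log_add {a : ℝ} (ha : 0 < a) : log (1 + a) ≤ log a + 2 / √a := by
  have hsplit : log (1 + a) = log a + log (1 + a⁻¹) := by
    rw [← log_mul ha.ne' (by positivity), mul_add, mul_inv_cancel₀ ha.ne', mul_one, add_comm]
  have hsqrt : √(1 + a⁻¹) ≤ 1 + √a⁻¹ := by
    rw [sqrt_le_left (by positivity)]
    nlinarith [sq_sqrt (inv_nonneg.2 ha.le), sqrt_nonneg a⁻¹]
  have h := log_le_rpow_sub_one_div (z := 1 + a⁻¹) (by positivity)
    (by norm_num : (0 : ℝ) < 1 / 2)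
  rw [← sqrt_eq_rpow] at h
  rw [sqrt_inv] at hsqrt
  rw [hsplit, div_eq_mul_inv 2]
  linarith

theorem sum_range_rpow_le {β : ℝ} (hβ : 0 ≤ β) (n : ℕ) :
    ∑ s ∈ range n, (s : ℝ) ^ β ≤ (n : ℝ) ^ (β + 1) / (β + 1) := by
  have hmono : MonotoneOn (· ^ β) (Set.Icc (0 : ℝ) (0 + n)) := fun x hx y _ hxy =>
    rpow_le_rpow hx.1 hxy hβ
  have h := hmono.sum_le_integral
  rw [integral_rpow (Or.inl (by linarith)), zero_add, zero_rpow (by linarith), sub_zero] at h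
  simpa using h

-- The `s = 0` term is `0⁻¹ = 0`.
theorem sum_range_inv_le_one_add_log (n : ℕ) :
    ∑ s ∈ range n, (s : ℝ)⁻¹ ≤ 1 + log n := by
  have hharm : ∑ s ∈ range (n + 1), (s : ℝ)⁻¹ = harmonic n := by
    rw [sum_range_succ', harmonic]
    push_cast
    simp
  calc ∑ s ∈ range n, (s : ℝ)⁻¹ ≤ ∑ s ∈ range (n + 1), (s : ℝ)⁻¹ :=
        sum_le_sum_of_subset_of_nonneg (range_subset_range.2 n.le_succ) fun _ _ _ => by positivity
    _ ≤ 1 + log n := hharm ▸ harmonic_le_one_add_log n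

theorem sum_range_three_mul_mul_sub_one (n : ℕ) :
    ∑ s ∈ range n, 3 * (s : ℝ) * (s - 1) = n * (n - 1) * (n - 2) := by
  induction n with
  | zero => simp
  | succ k ih =>
    rw [sum_range_succ, ih]
    push_cast
    ring

theorem tendsto_one_add_log_div_sqrt :
    Tendsto (fun n : ℕ => (1 + log n) / √n) atTop (𝓝 0) := by
  have hlog : Tendsto (fun x : ℝ => log x / x ^ (1 / 2 : ℝ)) atTop (𝓝 0) :=
    (isLittleO_log_rpow_atTop (by norm_num)).tendsto_div_nhds_zero
  have hinv : Tendsto (fun x : ℝ => (x ^ (1 / 2 : ℝ))⁻¹) atTop (𝓝 0) :=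
    tendsto_inv_atTop_zero.comp (tendsto_rpow_atTop (by norm_num))
  simpa [sqrt_eq_rpow, add_div, one_div, Function.comp_def] using
    (hinv.add hlog).comp tendsto_natCast_atTop_atTop

end Inequalities

section CandidateBound

open Real

-- The probability that the first vertex of a fixed triple sits at position `n - 1 - s`.
def candidateWeight (n s : ℕ) : ℝ :=
  3 * s * (s - 1) / (n * (n - 1) * (n - 2))

theorem candidateWeight_nonneg (n s : ℕ) : 0 ≤ candidateWeight n s := by
  have hs : (0 : ℝ) ≤ s * (s - 1) := by
    rcases Nat.eq_zero_or_pos s with rfl | hs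
    · simp
    · have : (1 : ℝ) ≤ s := by exact_mod_cast hs
      exact mul_nonneg (by linarith) (by linarith)
  have hn : (0 : ℝ) ≤ n * (n - 1) * (n - 2) := by
    by_cases h : 2 ≤ n
    · have : (2 : ℝ) ≤ n := by exact_mod_cast h
      exact mul_nonneg (mul_nonneg (by linarith) (by linarith)) (by linarith)
    · interval_cases n <;> norm_num
  unfold candidateWeight
  rw [mul_assoc]
  positivity

theorem sum_candidateWeight {n : ℕ} (hn : 3 ≤ n) :
    ∑ s ∈ range n, candidateWeight n s = 1 := by
  have : (3 : ℝ) ≤ n := by exact_mod_cast hn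
  simp only [candidateWeight]
  rw [← sum_div, sum_range_three_mul_mul_sub_one,
    div_self (mul_ne_zero (mul_ne_zero (by linarith) (by linarith)) (by linarith))]

theorem sum_candidateWeight_mul_rpow_le {α : ℝ} (hα : 0 < α) {n : ℕ} (hn : 3 ≤ n) :
    ∑ s ∈ range n, candidateWeight n s * (s / n : ℝ) ^ α
      ≤ 3 / (3 + α) * (n / (n - 1) * (n / (n - 2))) := by
  have hn' : (3 : ℝ) ≤ n := by exact_mod_cast hn
  have hD : (0 : ℝ) < n * (n - 1) * (n - 2) :=
    mul_pos (mul_pos (by linarith) (by linarith)) (by linarith)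
  have hnα : (0 : ℝ) < (n : ℝ) ^ α := rpow_pos_of_pos (by linarith) α
  have hpt : ∀ s ∈ range n, candidateWeight n s * (s / n : ℝ) ^ α
      ≤ 3 / (n * (n - 1) * (n - 2) * n ^ α) * (s : ℝ) ^ (α + 2) := fun s _ => by
    have hsα : (0 : ℝ) ≤ (s : ℝ) ^ α := rpow_nonneg (Nat.cast_nonneg s) α
    rw [candidateWeight, div_rpow (Nat.cast_nonneg s) (by linarith),
      rpow_add' (Nat.cast_nonneg s) (by linarith), rpow_two, div_mul_div_comm,
      div_mul_eq_mul_div (3 : ℝ)]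
    gcongr ?_ / _
    nlinarith [mul_nonneg (Nat.cast_nonneg s : (0 : ℝ) ≤ s) hsα]
  have hpow : (n : ℝ) ^ (α + 2 + 1) = n ^ α * n ^ 3 := by
    rw [add_assoc, rpow_add (by linarith), show (2 : ℝ) + 1 = (3 : ℕ) by norm_num, rpow_natCast]
  calc ∑ s ∈ range n, candidateWeight n s * (s / n : ℝ) ^ α
      ≤ 3 / (n * (n - 1) * (n - 2) * n ^ α) * ∑ s ∈ range n, (s : ℝ) ^ (α + 2) := by
        rw [mul_sum]
        exact sum_le_sum hpt
    _ ≤ 3 / (n * (n - 1) * (n - 2) * n ^ α) * ((n : ℝ) ^ (α + 2 + 1) / (α + 2 + 1)) := by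
        gcongr
        exact sum_range_rpow_le (by linarith) n
    _ = 3 / (3 + α) * (n / (n - 1) * (n / (n - 2))) := by
        rw [hpow]
        field_simp
        ring

-- `log x ≤ (x ^ α - 1) / α` trades the Riemann sum of `3 x² log x`, which is not monotone, for
-- that of `3 x ^ (2 + α)`.
theorem sum_candidateWeight_mul_log_le {α : ℝ} (hα : 0 < α) {n : ℕ} (hn : 3 ≤ n) :
    ∑ s ∈ range n, candidateWeight n s * log (s / n)
      ≤ (3 / (3 + α) * (n / (n - 1) * (n / (n - 2))) - 1) / α := by
  have hpt : ∀ s ∈ range n, candidateWeight n s * log (s / n)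
      ≤ (candidateWeight n s * (s / n : ℝ) ^ α - candidateWeight n s) / α := fun s _ => by
    rcases Nat.eq_zero_or_pos s with rfl | hs
    · simp [candidateWeight, zero_rpow hα.ne']
    · have h := mul_le_mul_of_nonneg_left
        (log_le_rpow_sub_one_div (z := s / n) (by positivity) hα) (candidateWeight_nonneg n s)
      exact h.trans_eq (by ring)
  calc _ ≤ ∑ s ∈ range n,
          (candidateWeight n s * (s / n : ℝ) ^ α - candidateWeight n s) / α := sum_le_sum hpt
    _ = (∑ s ∈ range n, candidateWeight n s * (s / n : ℝ) ^ α - 1) / α := by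
        rw [← sum_div, sum_sub_distrib, sum_candidateWeight hn]
    _ ≤ _ := by
        gcongr
        exact sum_candidateWeight_mul_rpow_le hα hn

theorem log_one_add_half_mul_pow_six_le {n s : ℕ} (hn : 9 ≤ n) (hs : 0 < s) :
    log (1 + n / 2 * (s / (n - 8 : ℝ)) ^ 6)
      ≤ log (n / 2) + 6 * log (s / n) + 6 * log (n / (n - 8))
        + 2 * √2 * ((n - 8) / s : ℝ) ^ 3 / √n := by
  have hn' : (9 : ℝ) ≤ n := by exact_mod_cast hn
  have hs' : (0 : ℝ) < s := by exact_mod_cast hs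
  have hn8 : (0 : ℝ) < n - 8 := by linarith
  have ha : (0 : ℝ) < n / 2 * (s / (n - 8)) ^ 6 := by positivity
  have hlog : log (n / 2 * (s / (n - 8 : ℝ)) ^ 6)
      = log (n / 2) + 6 * log (s / n) + 6 * log (n / (n - 8)) := by
    have hsplit : (s / (n - 8) : ℝ) = s / n * (n / (n - 8)) := by field_simp
    rw [log_mul (by positivity) (by positivity), log_pow, hsplit,
      log_mul (by positivity) (by positivity)]
    push_cast
    ring
  have hsqrt :
      2 / √(n / 2 * (s / (n - 8 : ℝ)) ^ 6) = 2 * √2 * ((n - 8) / s : ℝ) ^ 3 / √n := by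
    rw [show (s / (n - 8 : ℝ)) ^ 6 = ((s / (n - 8)) ^ 3) ^ 2 by ring,
      sqrt_mul (by positivity), sqrt_sq (by positivity), sqrt_div (by positivity)]
    have : (0 : ℝ) < √n := sqrt_pos.2 (by linarith)
    have : (0 : ℝ) < √2 := sqrt_pos.2 (by norm_num)
    field_simp
  have h := log_one_add_le_log_add ha
  rw [hlog, hsqrt] at h
  exact h

theorem sum_candidateWeight_mul_le {n : ℕ} (hn : 9 ≤ n) :
    ∑ s ∈ range n, candidateWeight n s * (2 * √2 * ((n - 8) / s : ℝ) ^ 3 / √n)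
      ≤ 6 * √2 * (1 + log n) / √n := by
  have hn' : (9 : ℝ) ≤ n := by exact_mod_cast hn
  have hpt : ∀ s ∈ range n, candidateWeight n s * (2 * √2 * ((n - 8) / s : ℝ) ^ 3 / √n)
      ≤ 6 * √2 / √n * (s : ℝ)⁻¹ := fun s _ => by
    rcases Nat.eq_zero_or_pos s with rfl | hs
    · simp [candidateWeight]
    have hs' : (1 : ℝ) ≤ s := by exact_mod_cast hs
    have hcube : ((s : ℝ) - 1) * (n - 8) ^ 3 ≤ s * (n * (n - 1) * (n - 2)) := by
      have h1 : ((n : ℝ) - 8) ^ 3 ≤ n * (n - 1) * (n - 2) := by nlinarith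
      nlinarith
    have : (0 : ℝ) < √n := sqrt_pos.2 (by linarith)
    have : (0 : ℝ) < √2 := sqrt_pos.2 (by norm_num)
    have hD : (0 : ℝ) < n * (n - 1) * (n - 2) :=
      mul_pos (mul_pos (by linarith) (by linarith)) (by linarith)
    calc candidateWeight n s * (2 * √2 * ((n - 8) / s : ℝ) ^ 3 / √n)
        = 6 * √2 / √n * ((s - 1) * (n - 8) ^ 3 / (s ^ 2 * (n * (n - 1) * (n - 2)))) := by
          rw [candidateWeight]
          field_simp
          ring
      _ ≤ 6 * √2 / √n * (s : ℝ)⁻¹ := by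
          gcongr
          rw [div_le_iff₀ (by positivity),
            show (s : ℝ)⁻¹ * (s ^ 2 * (n * (n - 1) * (n - 2))) = s * (n * (n - 1) * (n - 2)) by
              field_simp]
          exact hcube
  calc _ ≤ ∑ s ∈ range n, 6 * √2 / √n * (s : ℝ)⁻¹ := sum_le_sum hpt
    _ ≤ 6 * √2 / √n * (1 + log n) := by
        rw [← mul_sum]
        gcongr
        exact sum_range_inv_le_one_add_log n
    _ = _ := by ring

def candidateBound (n : ℕ) : ℝ :=
  ∑ s ∈ range n, candidateWeight n s * log (1 + n / 2 * (s / (n - 8 : ℝ)) ^ 6)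

theorem candidateBound_le {α : ℝ} (hα : 0 < α) {n : ℕ} (hn : 9 ≤ n) :
    candidateBound n ≤ log (n / 2) + 6 * ((3 / (3 + α) * (n / (n - 1) * (n / (n - 2))) - 1) / α)
      + 6 * log (n / (n - 8)) + 6 * √2 * (1 + log n) / √n := by
  set T : ℕ → ℝ := fun s => 2 * √2 * ((n - 8) / s : ℝ) ^ 3 / √n
  have hpt : ∀ s ∈ range n, candidateWeight n s * log (1 + n / 2 * (s / (n - 8 : ℝ)) ^ 6)
      ≤ candidateWeight n s * log (n / 2) + 6 * (candidateWeight n s * log (s / n))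
        + 6 * log (n / (n - 8)) * candidateWeight n s + candidateWeight n s * T s := fun s _ => by
    rcases Nat.eq_zero_or_pos s with rfl | hs
    · simp [candidateWeight]
    · have h := mul_le_mul_of_nonneg_left (log_one_add_half_mul_pow_six_le hn hs)
        (candidateWeight_nonneg n s)
      exact h.trans_eq (by ring)
  have hsum := sum_le_sum hpt
  rw [sum_add_distrib, sum_add_distrib, sum_add_distrib, ← sum_mul, ← mul_sum, ← mul_sum,
    sum_candidateWeight (by omega)] at hsum
  have h1 := sum_candidateWeight_mul_log_le hα (by omega : 3 ≤ n)
  have h2 := sum_candidateWeight_mul_le hn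
  rw [candidateBound]
  linarith

theorem eventually_candidateBound_le {ε : ℝ} (hε : 0 < ε) :
    ∀ᶠ n : ℕ in atTop, candidateBound n ≤ log ((1 + ε) * n / (2 * exp 1 ^ 2)) := by
  set α := log (1 + ε)
  have hα : 0 < α := log_pos (by linarith)
  have hdiv (c : ℝ) : Tendsto (fun n : ℕ => (n : ℝ) / (n - c)) atTop (𝓝 1) := by
    simpa [sub_eq_add_neg] using tendsto_natCast_div_add_atTop (-c : ℝ)
  have hlim : Tendsto (fun n : ℕ => 6 * ((3 / (3 + α) * (n / (n - 1) * (n / (n - 2))) - 1) / α)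
      + 6 * log (n / (n - 8)) + 6 * √2 * ((1 + log n) / √n)) atTop
      (𝓝 (6 * ((3 / (3 + α) * (1 * 1) - 1) / α) + 6 * log 1 + 6 * √2 * 0)) :=
    ((((tendsto_const_nhds.mul ((hdiv 1).mul (hdiv 2))).sub tendsto_const_nhds).div_const α
      |>.const_mul 6).add (((continuousAt_log one_ne_zero).tendsto.comp (hdiv 8)).const_mul 6)).add
      (tendsto_one_add_log_div_sqrt.const_mul _)
  -- The limit is `-6 / (3 + α) = -2 + 2α / (3 + α)`, and `2α / (3 + α) < α = log (1 + ε)`.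
  have hL : 6 * ((3 / (3 + α) * (1 * 1) - 1) / α) + 6 * log 1 + 6 * √2 * 0 < α - 2 := by
    have hlimit : 6 * ((3 / (3 + α) * (1 * 1) - 1) / α) = -6 / (3 + α) := by
      field_simp
      ring
    rw [hlimit, log_one, mul_zero, mul_zero, add_zero, add_zero, div_lt_iff₀ (by linarith)]
    nlinarith
  filter_upwards [hlim.eventually (gt_mem_nhds (by simpa using hL)), eventually_ge_atTop 9]
    with n hE hn
  have hn' : (0 : ℝ) < n := by exact_mod_cast (by omega : 0 < n)
  have hbound := candidateBound_le hα hn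
  rw [log_div (by positivity) (by positivity), log_mul (by positivity) hn'.ne',
    log_mul two_ne_zero (by positivity), log_pow, log_exp]
  rw [log_div hn'.ne' two_ne_zero] at hbound
  rw [mul_div_assoc (6 * √2)] at hbound
  push_cast
  linarith

end CandidateBound

section SteinerTripleSystem

variable {n : ℕ} {S M : Finset (Finset (Fin n))}

theorem IsSTS.eq_of_mem_of_mem (hS : IsSTS n S) {e f : Finset (Fin n)} (he : e ∈ S)
    (hf : f ∈ S) {a b : Fin n} (hab : a ≠ b) (hae : a ∈ e) (hbe : b ∈ e) (haf : a ∈ f)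
    (hbf : b ∈ f) : e = f :=
  (hS.2 {a, b} (card_pair hab)).unique ⟨he, by simp [insert_subset_iff, hae, hbe]⟩
    ⟨hf, by simp [insert_subset_iff, haf, hbf]⟩

theorem IsSTS.two_mul_card_filter_mem_le (hS : IsSTS n S) (v : Fin n) :
    2 * #{f ∈ S | v ∈ f} ≤ n - 1 := by
  have hdisj : (({f ∈ S | v ∈ f} : Finset _) : Set (Finset (Fin n))).PairwiseDisjoint
      (·.erase v) := by
    intro f hf f' hf' hne
    simp only [coe_filter, Set.mem_ofPred_eq] at hf hf'
    refine disjoint_left.2 fun b hb hb' => hne ?_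
    rw [mem_erase] at hb hb'
    exact hS.eq_of_mem_of_mem hf.1 hf'.1 (Ne.symm hb.1) hf.2 hb.2 hf'.2 hb'.2
  have hsub : ({f ∈ S | v ∈ f} : Finset _).biUnion (·.erase v) ⊆ univ.erase v :=
    fun b hb => by
      obtain ⟨f, -, hbf⟩ := mem_biUnion.1 hb
      exact mem_erase.2 ⟨(mem_erase.1 hbf).1, mem_univ b⟩
  have hcard : ∀ f ∈ ({f ∈ S | v ∈ f} : Finset _), #(f.erase v) = 2 := fun f hf => by
    rw [mem_filter] at hf
    rw [card_erase_of_mem hf.2, hS.1 f hf.1]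
  have h := card_le_card hsub
  rw [card_biUnion hdisj, sum_congr rfl hcard, sum_const, smul_eq_mul,
    card_erase_of_mem (mem_univ v), card_univ, Fintype.card_fin] at h
  omega

theorem IsMatching.eq_of_mem_of_mem (hM : IsMatching n S M) {e f : Finset (Fin n)}
    (he : e ∈ M) (hf : f ∈ M) {v : Fin n} (hve : v ∈ e) (hvf : v ∈ f) : e = f := by
  by_contra hne
  exact disjoint_left.1 (hM.2 e he f hf hne) hve hvf

def perfectMatchings (n : ℕ) (S : Finset (Finset (Fin n))) : Finset (Finset (Finset (Fin n))) :=
  univ.filter fun M => IsMatching n S M ∧ M.card = n / 3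

theorem numPM_eq_card_perfectMatchings : numPM n S = #(perfectMatchings n S) := rfl

theorem isMatching_of_mem_perfectMatchings (hM : M ∈ perfectMatchings n S) : IsMatching n S M :=
  (mem_filter.1 hM).2.1

theorem card_eq_three_of_mem_perfectMatchings (hS : IsSTS n S) (hM : M ∈ perfectMatchings n S)
    {e : Finset (Fin n)} (he : e ∈ M) : #e = 3 :=
  hS.1 e ((isMatching_of_mem_perfectMatchings hM).1 he)

theorem exists_mem_of_mem_perfectMatchings (hS : IsSTS n S) (h3 : 3 ∣ n)
    (hM : M ∈ perfectMatchings n S) (v : Fin n) : ∃ e ∈ M, v ∈ e := by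
  have hcover : M.biUnion (fun e => e) = univ := by
    refine eq_univ_of_card _ ?_
    rw [card_biUnion (isMatching_of_mem_perfectMatchings hM).2,
      sum_congr rfl fun e he => card_eq_three_of_mem_perfectMatchings hS hM he, sum_const,
      smul_eq_mul, (mem_filter.1 hM).2.2, Nat.div_mul_cancel h3, Fintype.card_fin]
  simpa using (hcover ▸ mem_univ v : v ∈ M.biUnion fun e => e)

theorem nonempty_of_mem_perfectMatchings (hS : IsSTS n S) (hM : M ∈ perfectMatchings n S)
    {e : Finset (Fin n)} (he : e ∈ M) : e.Nonempty :=
  card_pos.1 (by rw [card_eq_three_of_mem_perfectMatchings hS hM he]; norm_num)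

section RevealingProcess

variable (π : Perm (Fin n))

def firstTime (e : Finset (Fin n)) : ℕ :=
  sInf ((fun v => (π v : ℕ)) '' e)

def revealedBefore (M : Finset (Finset (Fin n))) (t : ℕ) : Finset (Finset (Fin n)) :=
  M.filter fun e => firstTime π e < t

def candidates (S : Finset (Finset (Fin n))) (t : ℕ) (R : Finset (Finset (Fin n))) :
    Finset (Finset (Fin n)) :=
  S.filter fun f => firstTime π f = t ∧ ∀ g ∈ R, Disjoint f g

def numCandidates (S M : Finset (Finset (Fin n))) (e : Finset (Fin n)) : ℕ :=
  #(candidates π S (firstTime π e) (revealedBefore π M (firstTime π e)))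

variable {π} {e : Finset (Fin n)}

theorem firstTime_le {v : Fin n} (hv : v ∈ e) : firstTime π e ≤ π v :=
  Nat.sInf_le ⟨v, hv, rfl⟩

theorem exists_apply_eq_firstTime (he : e.Nonempty) : ∃ v ∈ e, (π v : ℕ) = firstTime π e :=
  Nat.sInf_mem ((coe_nonempty.2 he).image _)

theorem firstTime_lt (he : e.Nonempty) : firstTime π e < n := by
  obtain ⟨v, -, hv⟩ := exists_apply_eq_firstTime (π := π) he
  exact hv ▸ (π v).isLt

theorem firstTime_eq_of_forall_le {v : Fin n} (hv : v ∈ e)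
    (hmin : ∀ u ∈ e, (π v : ℕ) ≤ π u) : firstTime π e = π v := by
  obtain ⟨u, hu, hut⟩ := exists_apply_eq_firstTime (π := π) ⟨v, hv⟩
  exact le_antisymm (firstTime_le hv) (hut ▸ hmin u hu)

theorem mem_of_apply_eq_firstTime (he : e.Nonempty) {v : Fin n}
    (hv : (π v : ℕ) = firstTime π e) : v ∈ e := by
  obtain ⟨u, hu, hut⟩ := exists_apply_eq_firstTime (π := π) he
  rwa [π.injective (Fin.ext (hut.trans hv.symm))] at hu

theorem mem_candidates_self (hM : IsMatching n S M) (he : e ∈ M) :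
    e ∈ candidates π S (firstTime π e) (revealedBefore π M (firstTime π e)) := by
  refine mem_filter.2 ⟨hM.1 he, rfl, fun g hg => ?_⟩
  obtain ⟨hgM, hlt⟩ := mem_filter.1 hg
  exact hM.2 e he g hgM (fun h => (h ▸ hlt).false)

end RevealingProcess

section Kraft

variable {π : Perm (Fin n)} {t : ℕ}

theorem one_le_numCandidates (hM : IsMatching n S M) {e : Finset (Fin n)} (he : e ∈ M) :
    1 ≤ numCandidates π S M e :=
  card_pos.2 ⟨e, mem_candidates_self hM he⟩

theorem revealedBefore_succ (M : Finset (Finset (Fin n))) :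
    revealedBefore π M (t + 1) = revealedBefore π M t ∪ M.filter (firstTime π · = t) := by
  ext e
  simp only [revealedBefore, mem_union, mem_filter, Nat.lt_succ_iff_lt_or_eq, and_or_left]

theorem filter_le_firstTime (M : Finset (Finset (Fin n))) :
    M.filter (t ≤ firstTime π ·)
      = M.filter (firstTime π · = t) ∪ M.filter (t + 1 ≤ firstTime π ·) := by
  ext e
  simp only [mem_union, mem_filter, ← and_or_left]
  exact and_congr_right fun _ => by omega

def IsCoveredAt (π : Perm (Fin n)) (t : ℕ) (R : Finset (Finset (Fin n))) : Prop :=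
  ∃ g ∈ R, ∃ u ∈ g, (π u : ℕ) = t

theorem filter_firstTime_eq_of_isCoveredAt (hS : IsSTS n S) (hM : M ∈ perfectMatchings n S)
    (hcov : IsCoveredAt π t (revealedBefore π M t)) : M.filter (firstTime π · = t) = ∅ := by
  obtain ⟨g, hg, u, hug, hut⟩ := hcov
  obtain ⟨hgM, hgt⟩ := mem_filter.1 hg
  refine filter_eq_empty_iff.2 fun e he het => ?_
  have hue := mem_of_apply_eq_firstTime (nonempty_of_mem_perfectMatchings hS hM he)
    (hut.trans het.symm)
  rw [← (isMatching_of_mem_perfectMatchings hM).eq_of_mem_of_mem he hgM hue hug, het] at hgt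
  exact lt_irrefl _ hgt

theorem exists_filter_firstTime_eq_of_not_isCoveredAt (hS : IsSTS n S) (h3 : 3 ∣ n)
    (hM : M ∈ perfectMatchings n S) (ht : t < n)
    (hcov : ¬IsCoveredAt π t (revealedBefore π M t)) :
    ∃ e ∈ candidates π S t (revealedBefore π M t), M.filter (firstTime π · = t) = {e} := by
  have hMm := isMatching_of_mem_perfectMatchings hM
  set v := π.symm ⟨t, ht⟩
  have hvt : (π v : ℕ) = t := by simp [v]
  obtain ⟨e, he, hve⟩ := exists_mem_of_mem_perfectMatchings hS h3 hM v
  have het : firstTime π e = t := by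
    refine le_antisymm (hvt ▸ firstTime_le hve) (not_lt.1 fun hlt => hcov ?_)
    exact ⟨e, mem_filter.2 ⟨he, hlt⟩, v, hve, hvt⟩
  refine ⟨e, het ▸ mem_candidates_self hMm he, eq_singleton_iff_unique_mem.2
    ⟨mem_filter.2 ⟨he, het⟩, fun e' he' => ?_⟩⟩
  obtain ⟨he'M, he't⟩ := mem_filter.1 he'
  exact hMm.eq_of_mem_of_mem he'M he (mem_of_apply_eq_firstTime
    (nonempty_of_mem_perfectMatchings hS hM he'M) (hvt.trans he't.symm)) hve

variable (S π) in
def tailProduct (M : Finset (Finset (Fin n))) (t : ℕ) : ℝ :=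
  ∏ e ∈ M.filter (t ≤ firstTime π ·), (numCandidates π S M e : ℝ)⁻¹

theorem tailProduct_nonneg (M : Finset (Finset (Fin n))) (t : ℕ) : 0 ≤ tailProduct S π M t :=
  prod_nonneg fun _ _ => by positivity

theorem tailProduct_eq_of_isCoveredAt (hS : IsSTS n S) (hM : M ∈ perfectMatchings n S)
    (hcov : IsCoveredAt π t (revealedBefore π M t)) :
    revealedBefore π M (t + 1) = revealedBefore π M t ∧
      tailProduct S π M t = tailProduct S π M (t + 1) := by
  have hnew := filter_firstTime_eq_of_isCoveredAt hS hM hcov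
  rw [revealedBefore_succ, tailProduct, tailProduct, filter_le_firstTime, hnew, union_empty,
    empty_union]
  exact ⟨rfl, rfl⟩

theorem tailProduct_eq_of_not_isCoveredAt (hS : IsSTS n S) (h3 : 3 ∣ n)
    (hM : M ∈ perfectMatchings n S) (ht : t < n)
    (hcov : ¬IsCoveredAt π t (revealedBefore π M t)) :
    ∃ e ∈ candidates π S t (revealedBefore π M t),
      revealedBefore π M (t + 1) = insert e (revealedBefore π M t) ∧
      tailProduct S π M t =
        (#(candidates π S t (revealedBefore π M t)) : ℝ)⁻¹ * tailProduct S π M (t + 1) := by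
  obtain ⟨e, hec, hnew⟩ := exists_filter_firstTime_eq_of_not_isCoveredAt hS h3 hM ht hcov
  have het : firstTime π e = t := (mem_filter.1 hec).2.1
  refine ⟨e, hec, by rw [revealedBefore_succ, hnew, union_singleton], ?_⟩
  rw [tailProduct, tailProduct, filter_le_firstTime, hnew, singleton_union,
    prod_insert (by simp [het]), numCandidates, het]

-- The Kraft sum over the subtree of histories that have revealed exactly `R` before time `t`.
variable (S π) in
def tailWeight (t : ℕ) (R : Finset (Finset (Fin n))) : ℝ :=
  ∑ M ∈ (perfectMatchings n S).filter (revealedBefore π · t = R), tailProduct S π M t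

theorem tailWeight_le_one_of_eq (hS : IsSTS n S) (R : Finset (Finset (Fin n))) :
    tailWeight S π n R ≤ 1 := by
  have hrev : ∀ M ∈ perfectMatchings n S, revealedBefore π M n = M := fun M hM =>
    filter_true_of_mem fun e he => firstTime_lt (nonempty_of_mem_perfectMatchings hS hM he)
  have hone : ∀ M ∈ perfectMatchings n S, tailProduct S π M n = 1 := fun M hM => by
    rw [tailProduct, filter_false_of_mem fun e he =>
      not_le.2 (firstTime_lt (nonempty_of_mem_perfectMatchings hS hM he)), prod_empty]
  have hsub : (perfectMatchings n S).filter (revealedBefore π · n = R) ⊆ {R} := fun M hM => by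
    rw [mem_filter] at hM
    rw [mem_singleton, ← hM.2, hrev M hM.1]
  calc tailWeight S π n R
      = #((perfectMatchings n S).filter (revealedBefore π · n = R)) := by
        rw [tailWeight, sum_congr rfl fun M hM => hone M (mem_filter.1 hM).1, sum_const,
          nsmul_one]
    _ ≤ 1 := by exact_mod_cast (card_le_card hsub).trans_eq (card_singleton R)

theorem tailWeight_le_of_isCoveredAt (hS : IsSTS n S) {R : Finset (Finset (Fin n))}
    (hcov : IsCoveredAt π t R) : tailWeight S π t R ≤ tailWeight S π (t + 1) R := by
  have hstep : ∀ M ∈ (perfectMatchings n S).filter (revealedBefore π · t = R),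
      revealedBefore π M (t + 1) = R ∧ tailProduct S π M t = tailProduct S π M (t + 1) := by
    intro M hMR
    obtain ⟨hM, rfl⟩ := mem_filter.1 hMR
    exact tailProduct_eq_of_isCoveredAt hS hM hcov
  rw [tailWeight, sum_congr rfl fun M hM => (hstep M hM).2]
  refine sum_le_sum_of_subset_of_nonneg (fun M hM => ?_) (fun M _ _ => tailProduct_nonneg M _)
  exact mem_filter.2 ⟨(mem_filter.1 hM).1, (hstep M hM).1⟩

theorem tailWeight_le_one_of_not_isCoveredAt (hS : IsSTS n S) (h3 : 3 ∣ n) (ht : t < n)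
    {R : Finset (Finset (Fin n))} (hcov : ¬IsCoveredAt π t R)
    (hnext : ∀ R', tailWeight S π (t + 1) R' ≤ 1) : tailWeight S π t R ≤ 1 := by
  set c := #(candidates π S t R)
  set A := (perfectMatchings n S).filter (revealedBefore π · t = R)
  have hstep : ∀ M ∈ A, ∃ e ∈ candidates π S t R,
      revealedBefore π M (t + 1) = insert e R ∧
        tailProduct S π M t = (c : ℝ)⁻¹ * tailProduct S π M (t + 1) := by
    intro M hMA
    obtain ⟨hM, rfl⟩ := mem_filter.1 hMA
    exact tailProduct_eq_of_not_isCoveredAt hS h3 hM ht hcov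
  have hmaps : ∀ M ∈ A,
      revealedBefore π M (t + 1) ∈ (candidates π S t R).image (insert · R) := fun M hM => by
    obtain ⟨e, hec, hrev, -⟩ := hstep M hM
    exact mem_image.2 ⟨e, hec, hrev.symm⟩
  calc tailWeight S π t R
      = (c : ℝ)⁻¹ * ∑ R' ∈ (candidates π S t R).image (insert · R),
          ∑ M ∈ A with revealedBefore π M (t + 1) = R', tailProduct S π M (t + 1) := by
        rw [sum_fiberwise_of_maps_to hmaps, mul_sum]
        exact sum_congr rfl fun M hM => (hstep M hM).choose_spec.2.2
    _ ≤ (c : ℝ)⁻¹ * ∑ R' ∈ (candidates π S t R).image (insert · R), 1 := by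
        gcongr with R' _
        refine le_trans (sum_le_sum_of_subset_of_nonneg (fun M hM => ?_)
          (fun M _ _ => tailProduct_nonneg M _)) (hnext R')
        simp only [A, mem_filter] at hM ⊢
        exact ⟨hM.1.1, hM.2⟩
    _ ≤ (c : ℝ)⁻¹ * c := by
        rw [sum_const, nsmul_one]
        gcongr
        exact card_image_le
    _ ≤ 1 := by
        obtain hc | hc := eq_or_ne (c : ℝ) 0
        · simp [hc]
        · rw [inv_mul_cancel₀ hc]

theorem sum_prod_inv_numCandidates_le_one (hS : IsSTS n S) (h3 : 3 ∣ n) (π : Perm (Fin n)) :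
    ∑ M ∈ perfectMatchings n S, ∏ e ∈ M, (numCandidates π S M e : ℝ)⁻¹ ≤ 1 := by
  have hall : ∀ t ≤ n, ∀ R, tailWeight S π t R ≤ 1 := fun t ht =>
    Nat.decreasingInduction (motive := fun t _ => ∀ R, tailWeight S π t R ≤ 1)
      (fun t ht hnext R => by
        by_cases hcov : IsCoveredAt π t R
        · exact (tailWeight_le_of_isCoveredAt hS hcov).trans (hnext R)
        · exact tailWeight_le_one_of_not_isCoveredAt hS h3 ht hcov hnext)
      (tailWeight_le_one_of_eq hS) ht
  simpa [tailWeight, tailProduct, revealedBefore] using hall 0 (Nat.zero_le n) ∅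

end Kraft

section Rivals

def matchingCover (M : Finset (Finset (Fin n))) (s : Finset (Fin n)) : Finset (Fin n) :=
  (M.filter fun g => ¬Disjoint g s).biUnion id

def rivals (π : Perm (Fin n)) (S M : Finset (Finset (Fin n))) (e : Finset (Fin n)) (v : Fin n) :
    Finset (Finset (Fin n)) :=
  {f ∈ (S.filter (v ∈ ·)).erase e | ∀ u ∈ matchingCover M (f.erase v), π v < π u}

variable {e f : Finset (Fin n)} {v : Fin n}

theorem matchingCover_pair (hM : IsMatching n S M) {b c : Fin n} {gb gc : Finset (Fin n)}
    (hgb : gb ∈ M) (hgc : gc ∈ M) (hb : b ∈ gb) (hc : c ∈ gc) :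
    matchingCover M {b, c} = gb ∪ gc := by
  have hfilter : M.filter (fun g => ¬Disjoint g {b, c}) = {gb, gc} := by
    ext g
    simp only [mem_filter, disjoint_insert_right, disjoint_singleton_right, not_and_or, not_not,
      mem_insert, mem_singleton]
    constructor
    · rintro ⟨hg, hbg | hcg⟩
      · exact Or.inl (hM.eq_of_mem_of_mem hg hgb hbg hb)
      · exact Or.inr (hM.eq_of_mem_of_mem hg hgc hcg hc)
    · rintro (rfl | rfl)
      · exact ⟨hgb, Or.inl hb⟩
      · exact ⟨hgc, Or.inr hc⟩
  rw [matchingCover, hfilter, biUnion_insert, singleton_biUnion, id, id]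

theorem card_erase_union_matchingCover (hS : IsSTS n S) (h3 : 3 ∣ n)
    (hM : M ∈ perfectMatchings n S) (he : e ∈ M) (hve : v ∈ e) (hf : f ∈ S) (hvf : v ∈ f)
    (hfe : f ≠ e) :
    #(e.erase v ∪ matchingCover M (f.erase v)) = 8 ∧
      v ∉ e.erase v ∪ matchingCover M (f.erase v) := by
  have hMm := isMatching_of_mem_perfectMatchings hM
  obtain ⟨b, c, hbc, hfbc⟩ := card_eq_two.1 (by rw [card_erase_of_mem hvf, hS.1 f hf] :
    #(f.erase v) = 2)
  have hbf : b ∈ f.erase v := hfbc ▸ mem_insert_self b {c}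
  have hcf : c ∈ f.erase v := hfbc ▸ mem_insert_of_mem (mem_singleton_self c)
  obtain ⟨gb, hgb, hbgb⟩ := exists_mem_of_mem_perfectMatchings hS h3 hM b
  obtain ⟨gc, hgc, hcgc⟩ := exists_mem_of_mem_perfectMatchings hS h3 hM c
  -- Two edges of `S` share at most one vertex, so the `M`-edges through `b` and `c` are distinct
  -- and both differ from `e`.
  have hne : ∀ {x g}, x ∈ f.erase v → g ∈ M → x ∈ g → g ≠ e := by
    intro x g hx _ hxg hge
    rw [mem_erase] at hx
    exact hfe (hS.eq_of_mem_of_mem hf (hMm.1 he) hx.1.symm hvf hx.2 hve (hge ▸ hxg))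
  have hgbc : gb ≠ gc := fun h => by
    have hfgc : f = gc := hS.eq_of_mem_of_mem hf (hMm.1 hgc) hbc (mem_of_mem_erase hbf)
      (mem_of_mem_erase hcf) (h ▸ hbgb) hcgc
    exact hne hcf hgc hcgc (hMm.eq_of_mem_of_mem hgc he (hfgc ▸ hvf) hve)
  have hvg : ∀ {g}, g ∈ M → g ≠ e → v ∉ g := fun hg hge hvg =>
    hge (hMm.eq_of_mem_of_mem hg he hvg hve)
  have hdisj : ∀ {g}, g ∈ M → g ≠ e → Disjoint (e.erase v) g := fun hg hge =>
    disjoint_of_subset_left (erase_subset v e) (hMm.2 e he _ hg (Ne.symm hge))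
  rw [hfbc, matchingCover_pair hMm hgb hgc hbgb hcgc]
  refine ⟨?_, ?_⟩
  · rw [card_union_of_disjoint (disjoint_union_right.2
        ⟨hdisj hgb (hne hbf hgb hbgb), hdisj hgc (hne hcf hgc hcgc)⟩),
      card_union_of_disjoint (hMm.2 gb hgb gc hgc hgbc), card_erase_of_mem hve,
      card_eq_three_of_mem_perfectMatchings hS hM he,
      card_eq_three_of_mem_perfectMatchings hS hM hgb,
      card_eq_three_of_mem_perfectMatchings hS hM hgc]
  · simp only [mem_union, mem_erase, ne_eq, not_true_eq_false, false_and, false_or, not_or]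
    exact ⟨hvg hgb (hne hbf hgb hbgb), hvg hgc (hne hcf hgc hcgc)⟩

theorem numCandidates_le (hS : IsSTS n S) (hM : M ∈ perfectMatchings n S) (he : e ∈ M)
    (hve : v ∈ e) {π : Perm (Fin n)} (hfirst : firstTime π e = π v) :
    numCandidates π S M e ≤ 1 + #(rivals π S M e v) := by
  have hMm := isMatching_of_mem_perfectMatchings hM
  have hsub :
      candidates π S (π v) (revealedBefore π M (π v)) ⊆ insert e (rivals π S M e v) := by
    intro f hf
    obtain ⟨hfS, hft, hfR⟩ := mem_filter.1 hf
    by_cases hfe : f = e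
    · exact hfe ▸ mem_insert_self f _
    have hvf : v ∈ f :=
      mem_of_apply_eq_firstTime (card_pos.1 (by rw [hS.1 f hfS]; norm_num)) hft.symm
    refine mem_insert_of_mem (mem_filter.2 ⟨mem_erase.2 ⟨hfe, mem_filter.2 ⟨hfS, hvf⟩⟩,
      fun u hu => ?_⟩)
    obtain ⟨g, hg, hug⟩ := mem_biUnion.1 hu
    obtain ⟨hgM, hgf⟩ := mem_filter.1 hg
    obtain ⟨b, hbg, hbf⟩ := not_disjoint_iff.1 hgf
    have hgR : ¬firstTime π g < π v := fun hlt =>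
      disjoint_left.1 (hfR g (mem_filter.2 ⟨hgM, hlt⟩)) (mem_of_mem_erase hbf) hbg
    have huv : u ≠ v := by
      rintro rfl
      have hge : g = e := hMm.eq_of_mem_of_mem hgM he hug hve
      exact hfe (hS.eq_of_mem_of_mem hfS (hMm.1 he) (ne_of_mem_erase hbf) (mem_of_mem_erase hbf)
        hvf (hge ▸ hbg) hve)
    exact lt_of_le_of_ne (Fin.le_def.2 ((not_lt.1 hgR).trans (firstTime_le hug)))
      (π.injective.ne huv).symm
  rw [numCandidates, hfirst, add_comm]
  exact (card_le_card hsub).trans (card_insert_le _ _)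

end Rivals

section EdgeBound

variable {e : Finset (Fin n)}

def firstVertexFiber (e : Finset (Fin n)) (v t : Fin n) : Finset (Perm (Fin n)) :=
  {π | π v = t ∧ ∀ a ∈ e.erase v, t < π a}

theorem sum_perm_eq_sum_first_vertex (he : e.Nonempty) (F : Perm (Fin n) → ℝ) :
    ∑ π, F π = ∑ v ∈ e, ∑ t : Fin n, ∑ π ∈ firstVertexFiber e v t, F π := by
  have hunion :
      (e.biUnion fun v => {π : Perm (Fin n) | ∀ a ∈ e.erase v, π v < π a}) = univ := by
    refine eq_univ_of_forall fun π => ?_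
    obtain ⟨v, hv, hvt⟩ := exists_apply_eq_firstTime (π := π) he
    refine mem_biUnion.2 ⟨v, hv, mem_filter.2 ⟨mem_univ π, fun a ha => ?_⟩⟩
    exact lt_of_le_of_ne (Fin.le_def.2 (hvt ▸ firstTime_le (mem_of_mem_erase ha)))
      (π.injective.ne (ne_of_mem_erase ha).symm)
  have hdisj : (e : Set (Fin n)).PairwiseDisjoint
      fun v => ({π | ∀ a ∈ e.erase v, π v < π a} : Finset (Perm (Fin n))) := by
    intro v hv v' hv' hvv'
    refine disjoint_left.2 fun π hπ hπ' => ?_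
    rw [mem_filter] at hπ hπ'
    exact lt_asymm (hπ.2 v' (mem_erase.2 ⟨Ne.symm hvv', hv'⟩))
      (hπ'.2 v (mem_erase.2 ⟨hvv', hv⟩))
  have hsum := sum_biUnion hdisj (f := F)
  rw [hunion] at hsum
  rw [hsum]
  refine sum_congr rfl fun v _ => ?_
  rw [← sum_fiberwise _ (· v)]
  refine sum_congr rfl fun t _ => sum_congr ?_ fun _ _ => rfl
  ext π
  simp only [firstVertexFiber, mem_filter, mem_univ, true_and]
  constructor
  · rintro ⟨h, rfl⟩
    exact ⟨rfl, h⟩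
  · rintro ⟨rfl, h⟩
    exact ⟨h, rfl⟩

theorem card_firstVertexFiber (he : #e = 3) {v : Fin n} (hve : v ∈ e) (t : Fin n) :
    #(firstVertexFiber e v t) = (n - 1 - t).descFactorial 2 * (n - 3)! := by
  rw [firstVertexFiber, card_perm_apply_eq_and_lt v t (notMem_erase v e), card_erase_of_mem hve,
    he]
  rfl

theorem sum_card_rivals (hS : IsSTS n S) (h3 : 3 ∣ n) (hn : 9 ≤ n)
    (hM : M ∈ perfectMatchings n S) (he : e ∈ M) {v : Fin n} (hve : v ∈ e) (t : Fin n) :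
    ∑ π ∈ firstVertexFiber e v t, #(rivals π S M e v)
      = #((S.filter (v ∈ ·)).erase e) * ((n - 1 - t).descFactorial 8 * (n - 9)!) := by
  refine (sum_card_bipartiteAbove_eq_sum_card_bipartiteBelow (t := (S.filter (v ∈ ·)).erase e)
    (r := fun (π : Perm (Fin n)) (f : Finset (Fin n)) =>
      ∀ u ∈ matchingCover M (f.erase v), π v < π u)).trans
    ((sum_congr rfl fun f hf => ?_).trans (sum_const _))
  obtain ⟨hfe, hfS, hvf⟩ := by simpa using hf
  obtain ⟨h8, hv8⟩ := card_erase_union_matchingCover hS h3 hM he hve hfS hvf hfe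
  rw [bipartiteBelow, firstVertexFiber, filter_filter, ← show n - 1 - 8 = n - 9 by omega, ← h8,
    ← card_perm_apply_eq_and_lt v t hv8]
  congr 1
  refine filter_congr fun π _ => ?_
  rw [forall_mem_union]
  constructor
  · rintro ⟨⟨hπv, hπa⟩, hπW⟩
    exact ⟨hπv, hπa, hπv ▸ hπW⟩
  · rintro ⟨hπv, hπa, hπW⟩
    exact ⟨⟨hπv, hπa⟩, hπv ▸ hπW⟩

theorem sum_log_numCandidates_fiber_le (hS : IsSTS n S) (h3 : 3 ∣ n) (hn : 9 ≤ n)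
    (hM : M ∈ perfectMatchings n S) (he : e ∈ M) {v : Fin n} (hve : v ∈ e) (t : Fin n) :
    ∑ π ∈ firstVertexFiber e v t, Real.log (numCandidates π S M e)
      ≤ ((n - 1 - t).descFactorial 2 * (n - 3)! : ℕ) *
          Real.log (1 + n / 2 * ((n - 1 - t : ℕ) / (n - 8 : ℝ)) ^ 6) := by
  set G := firstVertexFiber e v t
  set r := n - 1 - (t : ℕ)
  have hG : #G = r.descFactorial 2 * (n - 3)! :=
    card_firstVertexFiber (card_eq_three_of_mem_perfectMatchings hS hM he) hve t
  have hC : ∀ π ∈ G, numCandidates π S M e ≤ 1 + #(rivals π S M e v) := fun π hπ => by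
    obtain ⟨hπv, hπa⟩ := (mem_filter.1 hπ).2
    refine numCandidates_le hS hM he hve (firstTime_eq_of_forall_le hve fun u hu => ?_)
    by_cases huv : u = v
    · rw [huv]
    · exact Fin.le_def.1 (hπv ▸ hπa u (mem_erase.2 ⟨huv, hu⟩)).le
  have hrivals :
      ∑ π ∈ G, (#(rivals π S M e v) : ℝ) ≤ #G * (n / 2 * ((r : ℝ) / (n - 8)) ^ 6) := by
    have hdeg : (#((S.filter (v ∈ ·)).erase e) : ℝ) ≤ n / 2 := by
      have h1 : #((S.filter (v ∈ ·)).erase e) ≤ #(S.filter (v ∈ ·)) := card_erase_le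
      have h2 := hS.two_mul_card_filter_mem_le v
      rw [le_div_iff₀ two_pos]
      exact_mod_cast (by omega : #((S.filter (v ∈ ·)).erase e) * 2 ≤ n)
    rw [← Nat.cast_sum, sum_card_rivals hS h3 hn hM he hve t, Nat.cast_mul, hG]
    calc _ ≤ (n / 2 : ℝ) * ((r.descFactorial 2 * (n - 3)! : ℕ) * ((r : ℝ) / (n - 8)) ^ 6) :=
          mul_le_mul hdeg (descFactorial_eight_mul_factorial_le hn r) (by positivity)
            (by positivity)
      _ = _ := by ring
  have hsum : ∑ π ∈ G, ((1 + #(rivals π S M e v) : ℕ) : ℝ)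
      ≤ #G * (1 + n / 2 * ((r : ℝ) / (n - 8)) ^ 6) := by
    push_cast
    rw [sum_add_distrib, sum_const, nsmul_one, mul_add, mul_one]
    linarith
  calc ∑ π ∈ G, Real.log (numCandidates π S M e)
      ≤ ∑ π ∈ G, Real.log ((1 + #(rivals π S M e v) : ℕ) : ℝ) :=
        sum_le_sum fun π hπ => Real.log_le_log (Nat.cast_pos.2 (one_le_numCandidates
          (isMatching_of_mem_perfectMatchings hM) he)) (by exact_mod_cast hC π hπ)
    _ ≤ #G * Real.log (1 + n / 2 * ((r : ℝ) / (n - 8)) ^ 6) :=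
        sum_log_le_card_mul_log G (fun _ _ => by positivity) (by positivity) hsum
    _ = _ := by rw [hG]

theorem sum_log_numCandidates_le (hS : IsSTS n S) (h3 : 3 ∣ n) (hn : 9 ≤ n)
    (hM : M ∈ perfectMatchings n S) (he : e ∈ M) :
    ∑ π : Perm (Fin n), Real.log (numCandidates π S M e) ≤ n ! * candidateBound n := by
  set g : ℕ → ℝ := fun s => ((s.descFactorial 2 * (n - 3)! : ℕ) : ℝ) *
    Real.log (1 + n / 2 * ((s : ℕ) / (n - 8 : ℝ)) ^ 6)
  have hn9 : (9 : ℝ) ≤ n := by exact_mod_cast hn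
  have hn1 : (n : ℝ) - 1 ≠ 0 := by linarith
  have hn2 : (n : ℝ) - 2 ≠ 0 := by linarith
  rw [sum_perm_eq_sum_first_vertex (nonempty_of_mem_perfectMatchings hS hM he)]
  calc _ ≤ ∑ v ∈ e, ∑ t : Fin n, g (n - 1 - t) :=
        sum_le_sum fun v hv => sum_le_sum fun t _ =>
          sum_log_numCandidates_fiber_le hS h3 hn hM he hv t
    _ = 3 * ∑ s ∈ range n, g s := by
        rw [sum_const, card_eq_three_of_mem_perfectMatchings hS hM he, nsmul_eq_mul,
          Fin.sum_univ_eq_sum_range (fun t => g (n - 1 - t)), sum_range_reflect g n]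
        norm_num
    _ = n ! * candidateBound n := by
        rw [candidateBound, mul_sum, mul_sum]
        refine sum_congr rfl fun s _ => ?_
        simp only [g, candidateWeight, Nat.cast_mul, Nat.cast_descFactorial_two,
          factorial_eq_mul_factorial_sub_three (by omega : 3 ≤ n)]
        field_simp

end EdgeBound

theorem sum_sum_sum_log_numCandidates_le (hS : IsSTS n S) (h3 : 3 ∣ n) (hn : 9 ≤ n) :
    ∑ M ∈ perfectMatchings n S, ∑ π : Perm (Fin n), ∑ e ∈ M, Real.log (numCandidates π S M e)
      ≤ #(perfectMatchings n S) * n ! * ((n / 3 : ℕ) * candidateBound n) := by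
  calc _ = ∑ M ∈ perfectMatchings n S, ∑ e ∈ M, ∑ π : Perm (Fin n),
        Real.log (numCandidates π S M e) := sum_congr rfl fun M _ => sum_comm
    _ ≤ ∑ M ∈ perfectMatchings n S, ∑ _e ∈ M, (n ! * candidateBound n) :=
        sum_le_sum fun M hM => sum_le_sum fun e he => sum_log_numCandidates_le hS h3 hn hM he
    _ = _ := by
        rw [sum_congr rfl fun M hM => by rw [sum_const, (mem_filter.1 hM).2.2], sum_const,
          nsmul_eq_mul, nsmul_eq_mul]
        ring

theorem log_card_perfectMatchings_le (hS : IsSTS n S) (h3 : 3 ∣ n) (hn : 9 ≤ n)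
    (hne : (perfectMatchings n S).Nonempty) :
    Real.log #(perfectMatchings n S) ≤ (n / 3 : ℕ) * candidateBound n := by
  set N := #(perfectMatchings n S)
  set I := perfectMatchings n S ×ˢ (univ : Finset (Perm (Fin n)))
  have hN : (0 : ℝ) < N := by exact_mod_cast hne.card_pos
  have hI : (#I : ℝ) = N * n ! := by
    rw [card_product, card_univ, Fintype.card_perm, Fintype.card_fin, Nat.cast_mul]
  have hC : ∀ p ∈ I, ∀ e ∈ p.1, (0 : ℝ) < numCandidates p.2 S p.1 e := fun p hp e he =>
    Nat.cast_pos.2 (one_le_numCandidates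
      (isMatching_of_mem_perfectMatchings (mem_product.1 hp).1) he)
  have hsum :
      ∑ p ∈ I, ∏ e ∈ p.1, (numCandidates p.2 S p.1 e : ℝ)⁻¹ ≤ #I * (1 / N) := by
    rw [hI, sum_product_right, mul_one_div, mul_div_cancel_left₀ _ hN.ne']
    calc _ ≤ ∑ _π : Perm (Fin n), (1 : ℝ) :=
          sum_le_sum fun π _ => sum_prod_inv_numCandidates_le_one hS h3 π
      _ = n ! := by
          rw [sum_const, nsmul_one, card_univ, Fintype.card_perm, Fintype.card_fin]
  have hlog := sum_log_le_card_mul_log I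
    (fun p hp => prod_pos fun e he => inv_pos.2 (hC p hp e he)) (one_div_pos.2 hN) hsum
  have hlogx : ∀ p ∈ I, Real.log (∏ e ∈ p.1, (numCandidates p.2 S p.1 e : ℝ)⁻¹)
      = -∑ e ∈ p.1, Real.log (numCandidates p.2 S p.1 e) := fun p hp => by
    rw [Real.log_prod fun e he => (inv_pos.2 (hC p hp e he)).ne', ← sum_neg_distrib]
    exact sum_congr rfl fun e _ => Real.log_inv _
  rw [sum_congr rfl hlogx, sum_neg_distrib, sum_product, one_div, Real.log_inv, hI] at hlog
  have hedges := sum_sum_sum_log_numCandidates_le hS h3 hn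
  have hpos : (0 : ℝ) < N * n ! := by positivity
  exact le_of_mul_le_mul_left (by linarith) hpos

end SteinerTripleSystem

/-- Any order-`n` Steiner triple system has at most `((1+ε) n / (2e²))^(n/3)`
perfect matchings, for `n` large. -/
theorem STS_max_perfect_matchings :
    ∀ ε : ℝ, 0 < ε → ∃ n₀ : ℕ, ∀ n : ℕ, n₀ ≤ n → 3 ∣ n →
    ∀ S : Finset (Finset (Fin n)), IsSTS n S →
    (numPM n S : ℝ) ≤ ((1 + ε) * n / (2 * Real.exp 1 ^ 2)) ^ (n / 3) := by
  intro ε hε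
  obtain ⟨n₁, hn₁⟩ := eventually_atTop.1 (eventually_candidateBound_le hε)
  refine ⟨max n₁ 9, fun n hn h3 S hS => ?_⟩
  rw [numPM_eq_card_perfectMatchings]
  rcases (perfectMatchings n S).eq_empty_or_nonempty with h | hne
  · rw [h, card_empty, Nat.cast_zero]
    positivity
  have hn0 : (0 : ℝ) < n := by exact_mod_cast (by omega : 0 < n)
  have hbase : 0 < (1 + ε) * n / (2 * Real.exp 1 ^ 2) := by positivity
  rw [← Real.exp_log (Nat.cast_pos.2 hne.card_pos), ← Real.exp_log (pow_pos hbase _),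
    Real.exp_le_exp, Real.log_pow]
  calc Real.log #(perfectMatchings n S)
      ≤ (n / 3 : ℕ) * candidateBound n :=
        log_card_perfectMatchings_le hS h3 (le_of_max_le_right hn) hne
    _ ≤ (n / 3 : ℕ) * Real.log ((1 + ε) * n / (2 * Real.exp 1 ^ 2)) := by
        gcongr
        exact hn₁ n (le_of_max_le_left hn)
end
end

section
/- Let n ∈ ℕ, p ∈ [0,1], K > 0 and t > 0. Let ω = (ω₁,…,ωₙ) be independent random variables with Pr(ωᵢ = 1) = p and Pr(ωᵢ = 0) = 1 − p, and let f : {0,1}ⁿ → ℝ satisfy |f(x) − f(y)| ≤ K for all pairs x, y ∈ {0,1}ⁿ differing in exactly one coordinate. Then Pr(|f(ω) − E f(ω)| > t) ≤ 2·exp(−t² / (4K²np + 2Kt)). -/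
/-!
Reveal the coordinates one at a time. Averaging `f` over its first coordinate gives a function of
the remaining `n` coordinates with the same bounded differences, and `f` minus that average is a
centred two-point variable with jump at most `K`. For `λK ≤ 1` the bound `eˣ ≤ 1 + x + x²` on
`|x| ≤ 1` caps its moment generating function by `exp (p λ² K²)`, so by induction
`E exp (λ (f - E f)) ≤ exp (n p λ² K²)`. Markov's inequality with `λ = t / (2K²np + Kt)`
bounds each tail by `exp (-t² / (4K²np + 2Kt))`.
-/

open scoped Classical

noncomputable section

/-- The probability of the outcome `x` under the product Bernoulli(p) measure
on `{0,1}^n` (here modelled as `Fin n → Bool`). -/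
def bweight (n : ℕ) (p : ℝ) (x : Fin n → Bool) : ℝ :=
  ∏ i : Fin n, (if x i then p else 1 - p)

open Finset Real

def bexpect (n : ℕ) (p : ℝ) (f : (Fin n → Bool) → ℝ) : ℝ :=
  ∑ x, bweight n p x * f x

def BoundedDifferences {n : ℕ} {α : Type*} (K : ℝ) (f : (Fin n → α) → ℝ) : Prop :=
  ∀ x i b, |f x - f (Function.update x i b)| ≤ K

namespace BoundedDifferences

variable {n : ℕ} {α : Type*} {K : ℝ}

lemma neg {f : (Fin n → α) → ℝ} (hf : BoundedDifferences K f) :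
    BoundedDifferences K (-f) := fun x i b => by
  simpa only [Pi.neg_apply, neg_sub_neg, abs_sub_comm] using hf x i b

lemma abs_sub_cons_le {f : (Fin (n + 1) → α) → ℝ} (hf : BoundedDifferences K f)
    (a b : α) (y : Fin n → α) : |f (Fin.cons a y) - f (Fin.cons b y)| ≤ K := by
  simpa only [Fin.update_cons_zero] using hf (Fin.cons a y) 0 b

lemma convex_comb_cons {f : (Fin (n + 1) → α) → ℝ} (hf : BoundedDifferences K f)
    {p : ℝ} (hp0 : 0 ≤ p) (hp1 : p ≤ 1) (a b : α) :
    BoundedDifferences K (fun y => p * f (Fin.cons a y) + (1 - p) * f (Fin.cons b y)) := by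
  intro y i c
  have ha := hf (Fin.cons a y) i.succ c
  have hb := hf (Fin.cons b y) i.succ c
  rw [← Fin.cons_update] at ha hb
  calc _ = |p * (f (Fin.cons a y) - f (Fin.cons a (Function.update y i c)))
          + (1 - p) * (f (Fin.cons b y) - f (Fin.cons b (Function.update y i c)))| := by
        ring_nf
    _ ≤ p * K + (1 - p) * K := by
        refine (abs_add_le _ _).trans ?_
        rw [abs_mul, abs_mul, abs_of_nonneg hp0, abs_of_nonneg (sub_nonneg.2 hp1)]
        gcongr
    _ = K := by ring

end BoundedDifferences

lemma Fintype.sum_fin_succ_pi {α M : Type*} [Fintype α] [AddCommMonoid M] {n : ℕ}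
    (g : (Fin (n + 1) → α) → M) :
    ∑ x, g x = ∑ y : Fin n → α, ∑ a, g (Fin.cons a y) := by
  rw [← (Fin.consEquiv fun _ => α).sum_comp, Fintype.sum_prod_type, Finset.sum_comm]
  rfl

section Cube

variable {n : ℕ} {p : ℝ}

lemma bweight_nonneg (hp0 : 0 ≤ p) (hp1 : p ≤ 1) (x : Fin n → Bool) : 0 ≤ bweight n p x :=
  prod_nonneg fun i _ => by cases x i <;> simp [hp0, hp1]

lemma bweight_cons (b : Bool) (y : Fin n → Bool) :
    bweight (n + 1) p (Fin.cons b y) = (if b then p else 1 - p) * bweight n p y := by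
  simp [bweight, Fin.prod_univ_succ]

lemma bexpect_succ (f : (Fin (n + 1) → Bool) → ℝ) :
    bexpect (n + 1) p f
      = bexpect n p (fun y => p * f (Fin.cons true y) + (1 - p) * f (Fin.cons false y)) := by
  rw [bexpect, bexpect, Fintype.sum_fin_succ_pi]
  refine sum_congr rfl fun y _ => ?_
  simp only [Fintype.sum_bool, bweight_cons, if_true, Bool.false_eq_true, if_false]
  ring

lemma bexpect_mono (hp0 : 0 ≤ p) (hp1 : p ≤ 1) {f g : (Fin n → Bool) → ℝ}
    (h : ∀ x, f x ≤ g x) : bexpect n p f ≤ bexpect n p g :=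
  sum_le_sum fun x _ => mul_le_mul_of_nonneg_left (h x) (bweight_nonneg hp0 hp1 x)

lemma bexpect_const_mul (c : ℝ) (f : (Fin n → Bool) → ℝ) :
    bexpect n p (fun x => c * f x) = c * bexpect n p f := by
  rw [bexpect, bexpect, mul_sum]
  exact sum_congr rfl fun x _ => by ring

lemma bexpect_neg (f : (Fin n → Bool) → ℝ) : bexpect n p (-f) = -bexpect n p f := by
  simp [bexpect]

end Cube

lemma bernoulli_centered_exp_le {p x : ℝ} (hp0 : 0 ≤ p) (hx : |x| ≤ 1) :
    p * exp ((1 - p) * x) + (1 - p) * exp (-(p * x)) ≤ exp (p * x ^ 2) :=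
  calc _ = (1 + p * (exp x - 1)) * exp (-(p * x)) := by
        rw [show (1 - p) * x = x + -(p * x) by ring, exp_add]
        ring
    _ ≤ exp (p * (exp x - 1)) * exp (-(p * x)) := by
        gcongr
        linarith [add_one_le_exp (p * (exp x - 1))]
    _ = exp (p * (exp x - 1 - x)) := by
        rw [← exp_add]
        ring_nf
    _ ≤ exp (p * x ^ 2) := by
        gcongr
        exact (le_abs_self _).trans (abs_exp_sub_one_sub_id_le hx)

lemma two_point_exp_le {p l a b c : ℝ} (hp0 : 0 ≤ p) (h : |l * (a - b)| ≤ 1) :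
    p * exp (l * (a - c)) + (1 - p) * exp (l * (b - c))
      ≤ exp (p * (l * (a - b)) ^ 2) * exp (l * (p * a + (1 - p) * b - c)) := by
  set x := l * (a - b)
  set m := l * (p * a + (1 - p) * b - c)
  have ha : l * (a - c) = (1 - p) * x + m := by ring
  have hb : l * (b - c) = -(p * x) + m := by ring
  calc _ = (p * exp ((1 - p) * x) + (1 - p) * exp (-(p * x))) * exp m := by
        rw [ha, hb, exp_add, exp_add]
        ring
    _ ≤ exp (p * x ^ 2) * exp m := by
        gcongr
        exact bernoulli_centered_exp_le hp0 h

lemma exists_chernoff_parameter {v K t : ℝ} (hv : 0 ≤ v) (hK : 0 < K) (ht : 0 < t) :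
    ∃ l, 0 ≤ l ∧ l * K ≤ 1 ∧
      v * (l * K) ^ 2 - l * t ≤ -(t ^ 2) / (4 * K ^ 2 * v + 2 * K * t) := by
  set D := 2 * K ^ 2 * v + K * t with hD_def
  have hD : 0 < D := by positivity
  refine ⟨t / D, by positivity, ?_, ?_⟩
  · rw [div_mul_eq_mul_div, div_le_one hD, hD_def]
    nlinarith [mul_nonneg (sq_nonneg K) hv]
  · have key : v * (t / D * K) ^ 2 - t / D * t = -(t ^ 2) / (2 * D) - t ^ 3 * K / (2 * D ^ 2) := by
      field_simp
      ring
    have : 0 ≤ t ^ 3 * K / (2 * D ^ 2) := by positivity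
    rw [key, show 4 * K ^ 2 * v + 2 * K * t = 2 * D by ring]
    linarith

lemma sum_filter_lt_abs_le {ι : Type*} (s : Finset ι) (w g : ι → ℝ) (hw : ∀ i, 0 ≤ w i)
    (t : ℝ) :
    ∑ i ∈ s.filter (fun i => t < |g i|), w i
      ≤ ∑ i ∈ s.filter (fun i => t < g i), w i
        + ∑ i ∈ s.filter (fun i => t < -g i), w i := by
  simp_rw [lt_abs]
  rw [filter_or, ← sum_union_inter]
  exact le_add_of_nonneg_right (sum_nonneg fun i _ => hw i)

section Concentration

variable {p K l : ℝ} (hp0 : 0 ≤ p) (hp1 : p ≤ 1)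
include hp0 hp1

theorem bexpect_exp_sub_bexpect_le (hl : 0 ≤ l) (hlK : l * K ≤ 1) {n : ℕ}
    {f : (Fin n → Bool) → ℝ} (hf : BoundedDifferences K f) :
    bexpect n p (fun x => exp (l * (f x - bexpect n p f))) ≤ exp (n * p * (l * K) ^ 2) := by
  induction n with
  | zero => simp [bexpect, bweight]
  | succ n ih =>
    set g := fun y => p * f (Fin.cons true y) + (1 - p) * f (Fin.cons false y)
    have step : ∀ y, p * exp (l * (f (Fin.cons true y) - bexpect (n + 1) p f))
          + (1 - p) * exp (l * (f (Fin.cons false y) - bexpect (n + 1) p f))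
        ≤ exp (p * (l * K) ^ 2) * exp (l * (g y - bexpect n p g)) := by
      intro y
      have hjump : |l * (f (Fin.cons true y) - f (Fin.cons false y))| ≤ l * K := by
        rw [abs_mul, abs_of_nonneg hl]
        exact mul_le_mul_of_nonneg_left (hf.abs_sub_cons_le true false y) hl
      rw [bexpect_succ f]
      refine (two_point_exp_le hp0 (hjump.trans hlK)).trans ?_
      gcongr exp (p * ?_) * _
      exact sq_le_sq.2 (hjump.trans (le_abs_self _))
    calc _ = bexpect n p (fun y => p * exp (l * (f (Fin.cons true y) - bexpect (n + 1) p f))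
            + (1 - p) * exp (l * (f (Fin.cons false y) - bexpect (n + 1) p f))) :=
          bexpect_succ _
      _ ≤ bexpect n p (fun y => exp (p * (l * K) ^ 2) * exp (l * (g y - bexpect n p g))) :=
          bexpect_mono hp0 hp1 step
      _ ≤ exp (p * (l * K) ^ 2) * exp (n * p * (l * K) ^ 2) := by
          rw [bexpect_const_mul]
          gcongr
          exact ih (hf.convex_comb_cons hp0 hp1 true false)
      _ = exp ((n + 1 : ℕ) * p * (l * K) ^ 2) := by
          rw [← exp_add]
          push_cast
          ring_nf

lemma sum_bweight_filter_lt_le (hl : 0 ≤ l) {n : ℕ} (g : (Fin n → Bool) → ℝ) (t : ℝ) :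
    ∑ x ∈ univ.filter (fun x => t < g x), bweight n p x
      ≤ exp (-(l * t)) * bexpect n p (fun x => exp (l * g x)) := by
  rw [bexpect, mul_sum]
  calc _ ≤ ∑ x ∈ univ.filter (fun x => t < g x),
        exp (-(l * t)) * (bweight n p x * exp (l * g x)) := by
        refine sum_le_sum fun x hx => ?_
        have hlt : l * t ≤ l * g x := by gcongr; exact (mem_filter.1 hx).2.le
        have : 1 ≤ exp (-(l * t)) * exp (l * g x) := by
          rw [← exp_add]
          exact one_le_exp (by linarith)
        nlinarith [bweight_nonneg hp0 hp1 x]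
    _ ≤ _ := sum_le_sum_of_subset_of_nonneg (filter_subset _ _) fun x _ _ => by
        have := bweight_nonneg hp0 hp1 x
        positivity

theorem sum_bweight_upper_tail_le (hl : 0 ≤ l) (hlK : l * K ≤ 1) {n : ℕ}
    {f : (Fin n → Bool) → ℝ} (hf : BoundedDifferences K f) (t : ℝ) :
    ∑ x ∈ univ.filter (fun x => t < f x - bexpect n p f), bweight n p x
      ≤ exp (n * p * (l * K) ^ 2 - l * t) := by
  refine (sum_bweight_filter_lt_le hp0 hp1 hl _ t).trans ?_
  rw [sub_eq_neg_add, exp_add]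
  gcongr
  exact bexpect_exp_sub_bexpect_le hp0 hp1 hl hlK hf

end Concentration

/-- A bounded-differences inequality with Bernstein-type tails for product
Bernoulli(p) measure. -/
theorem bernstein_type_bounded_differences
    (n : ℕ) (p : ℝ) (hp0 : 0 ≤ p) (hp1 : p ≤ 1) (K t : ℝ) (hK : 0 < K) (ht : 0 < t)
    (f : (Fin n → Bool) → ℝ)
    (hf : ∀ x : Fin n → Bool, ∀ i : Fin n, ∀ b : Bool,
      |f x - f (Function.update x i b)| ≤ K) :
    (∑ x ∈ Finset.univ.filter (fun x : Fin n → Bool =>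
        t < |f x - ∑ y : Fin n → Bool, bweight n p y * f y|), bweight n p x)
      ≤ 2 * Real.exp (-(t ^ 2) / (4 * K ^ 2 * n * p + 2 * K * t)) := by
  obtain ⟨l, hl, hlK, hexponent⟩ := exists_chernoff_parameter (v := n * p) (by positivity) hK ht
  have tail : ∀ g : (Fin n → Bool) → ℝ, BoundedDifferences K g →
      ∑ x ∈ univ.filter (fun x => t < g x - bexpect n p g), bweight n p x
        ≤ exp (-(t ^ 2) / (4 * K ^ 2 * n * p + 2 * K * t)) := fun g hg =>
    (sum_bweight_upper_tail_le hp0 hp1 hl hlK hg t).trans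
      (exp_le_exp.2 (by convert hexponent using 2; ring))
  have lower : ∑ x ∈ univ.filter (fun x => t < -(f x - bexpect n p f)), bweight n p x
      ≤ exp (-(t ^ 2) / (4 * K ^ 2 * n * p + 2 * K * t)) := by
    simpa only [bexpect_neg, Pi.neg_apply, neg_sub_neg, neg_sub] using
      tail (-f) (BoundedDifferences.neg hf)
  calc _ ≤ _ := sum_filter_lt_abs_le _ _ _ (bweight_nonneg hp0 hp1) t
    _ ≤ _ := add_le_add (tail f hf) lower
    _ = _ := (two_mul _).symm
end
end

section
/- Let (Ω, F, P) be a probability space with a filtration (F_i)_{i≥0}, and let X(0), X(1), X(2), … be a supermartingale with respect to (F_i) such that |X(i+1) − X(i)| ≤ K almost surely for all i, where K > 0. Define V(i) = Σ_{j=0}^{i−1} E[(X(j+1) − X(j))² | F_j]. Then for any t, v > 0, P( there exists i ≥ 0 with X(i) ≥ X(0) + t and V(i) ≤ v ) ≤ exp( −t² / (2(v + Kt)) ). -/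
/-!
Put `λ = t / (v + K t)` and `c = λ² / (2 (1 - λ K))`, so that `λ K < 1`. Summing the exponential
series against a geometric one gives `eˣ ≤ 1 + x + x² / (2 (1 - u))` for `|x| ≤ u < 1`; applied
to `x = λ ΔXᵢ` and conditioned on `ℱᵢ`, where `E[ΔXᵢ | ℱᵢ] ≤ 0`, it yields
`E[exp (λ ΔXᵢ) | ℱᵢ] ≤ exp (c E[ΔXᵢ² | ℱᵢ])`. Hence `Zₙ = exp (λ (Xₙ - X₀) - c Vₙ)` is a
nonnegative supermartingale with `Z₀ = 1`. On the event in question some `Zᵢ` is at least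
`exp (λ t - c v) = exp (t² / (2 (v + K t)))`, and Ville's maximal inequality for nonnegative
supermartingales bounds the probability of that by `exp (-t² / (2 (v + K t)))`.
-/

open MeasureTheory Real Finset
open scoped Nat

theorem Real.exp_le_one_add_add_sq_div {x u : ℝ} (hxu : |x| ≤ u) (hu : u < 1) :
    exp x ≤ 1 + x + x ^ 2 / (2 * (1 - u)) := by
  have hu0 : 0 ≤ u := (abs_nonneg x).trans hxu
  have hexp : HasSum (fun n => x ^ n / n !) (exp x) := by
    rw [exp_eq_exp_ℝ]; exact NormedSpace.expSeries_div_hasSum_exp x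
  have htail : HasSum (fun n => x ^ (n + 2) / (n + 2)!) (exp x - 1 - x) := by
    rw [← hasSum_nat_add_iff' 2] at hexp
    simpa [sum_range_succ, sub_sub] using hexp
  have hgeom : HasSum (fun n => x ^ 2 / 2 * u ^ n) (x ^ 2 / 2 * (1 - u)⁻¹) :=
    (hasSum_geometric_of_lt_one hu0 hu).mul_left _
  have hterm (n : ℕ) : x ^ (n + 2) / (n + 2)! ≤ x ^ 2 / 2 * u ^ n := by
    have hfact : (2 : ℝ) ≤ (n + 2)! := mod_cast Nat.factorial_le (m := 2) (by omega)
    calc x ^ (n + 2) / (n + 2)! ≤ |x| ^ (n + 2) / 2 := by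
          rw [← abs_pow]
          exact div_le_div₀ (abs_nonneg _) (le_abs_self _) two_pos hfact
      _ = x ^ 2 / 2 * |x| ^ n := by rw [pow_add, sq_abs]; ring
      _ ≤ x ^ 2 / 2 * u ^ n := by gcongr
  have htail_le := hasSum_le hterm htail hgeom
  rw [← div_eq_mul_inv, div_div] at htail_le
  linarith

namespace MeasureTheory

namespace Supermartingale

variable {Ω : Type*} {m0 : MeasurableSpace Ω} {μ : Measure Ω} [IsFiniteMeasure μ]
  {ℱ : Filtration ℕ m0} {Z : ℕ → Ω → ℝ}

theorem integral_stoppedValue_le_integral_zero (hZ : Supermartingale Z ℱ μ) {τ : Ω → ℕ∞}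
    (hτ : IsStoppingTime ℱ τ) {N : ℕ} (hτN : ∀ ω, τ ω ≤ N) :
    ∫ ω, stoppedValue Z τ ω ∂μ ≤ ∫ ω, Z 0 ω ∂μ := by
  have := hZ.neg.expected_stoppedValue_mono (isStoppingTime_const ℱ 0) hτ (fun _ => bot_le) hτN
  simpa [stoppedValue, integral_neg] using this

theorem mul_measureReal_exists_le_le_integral_zero (hZ : Supermartingale Z ℱ μ)
    (hZ_nonneg : ∀ i ω, 0 ≤ Z i ω) {a : ℝ} (ha : 0 ≤ a) (n : ℕ) :
    a * μ.real {ω | ∃ i ≤ n, a ≤ Z i ω} ≤ ∫ ω, Z 0 ω ∂μ := by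
  set τ : Ω → ℕ∞ := fun ω => (hittingBtwn Z {y | a ≤ y} 0 n ω : ℕ)
  have hτ : IsStoppingTime ℱ τ :=
    hZ.stronglyAdapted.adapted.isStoppingTime_hittingBtwn measurableSet_Ici
  have hτn (ω : Ω) : τ ω ≤ n := WithTop.coe_le_coe.2 (hittingBtwn_le ω)
  have hsub : {ω | ∃ i ≤ n, a ≤ Z i ω} ⊆ {ω | a ≤ stoppedValue Z τ ω} :=
    fun ω ⟨i, hin, hi⟩ => stoppedValue_hittingBtwn_mem ⟨i, ⟨Nat.zero_le i, hin⟩, hi⟩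
  calc a * μ.real {ω | ∃ i ≤ n, a ≤ Z i ω}
      ≤ a * μ.real {ω | a ≤ stoppedValue Z τ ω} :=
        mul_le_mul_of_nonneg_left (measureReal_mono hsub) ha
    _ ≤ ∫ ω, stoppedValue Z τ ω ∂μ :=
        mul_meas_ge_le_integral_of_nonneg (ae_of_all _ fun ω => hZ_nonneg _ ω)
          (integrable_stoppedValue ℕ hτ hZ.integrable hτn) a
    _ ≤ ∫ ω, Z 0 ω ∂μ := hZ.integral_stoppedValue_le_integral_zero hτ hτn

theorem measure_exists_le_le (hZ : Supermartingale Z ℱ μ) (hZ_nonneg : ∀ i ω, 0 ≤ Z i ω)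
    {a : ℝ} (ha : 0 < a) :
    μ {ω | ∃ i, a ≤ Z i ω} ≤ ENNReal.ofReal ((∫ ω, Z 0 ω ∂μ) / a) := by
  rw [Set.ofPred_exists, measure_iUnion_eq_iSup_accumulate]
  refine iSup_le fun n => ?_
  rw [← ofReal_measureReal]
  refine ENNReal.ofReal_le_ofReal ((le_div_iff₀' ha).2 ?_)
  have hacc : Set.accumulate (fun i => {ω | a ≤ Z i ω}) n = {ω | ∃ i ≤ n, a ≤ Z i ω} := by
    ext; simp
  simpa only [hacc] using hZ.mul_measureReal_exists_le_le_integral_zero hZ_nonneg ha.le n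

end Supermartingale

variable {Ω : Type*} {m0 : MeasurableSpace Ω} {μ : Measure Ω}

theorem integrable_exp_of_ae_le [IsFiniteMeasure μ] {f : Ω → ℝ} (hf : AEStronglyMeasurable f μ)
    {C : ℝ} (hfC : ∀ᵐ ω ∂μ, f ω ≤ C) : Integrable (fun ω => exp (f ω)) μ := by
  refine (integrable_const (exp C)).mono' (continuous_exp.comp_aestronglyMeasurable hf) ?_
  filter_upwards [hfC] with ω hω
  rwa [norm_of_nonneg (exp_pos _).le, exp_le_exp]

theorem integrable_exp_mul_of_ae_abs_le [IsFiniteMeasure μ] {D : Ω → ℝ} {K l : ℝ}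
    (hD : AEStronglyMeasurable D μ) (hDK : ∀ᵐ ω ∂μ, |D ω| ≤ K) (hl : 0 ≤ l) :
    Integrable (fun ω => exp (l * D ω)) μ :=
  integrable_exp_of_ae_le (hD.const_mul l) <| by
    filter_upwards [hDK] with ω hω
    exact mul_le_mul_of_nonneg_left ((le_abs_self _).trans hω) hl

section CondExp

variable [IsFiniteMeasure μ] {m : MeasurableSpace Ω} {D : Ω → ℝ} {K l : ℝ}

theorem condExp_one_add_mul_add_mul_sq (hm : m ≤ m0) (hD : Integrable D μ)
    (hD_sq : Integrable (fun ω => D ω ^ 2) μ) (a b : ℝ) :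
    μ[fun ω => 1 + a * D ω + b * D ω ^ 2|m] =ᵐ[μ]
      fun ω => 1 + a * μ[D|m] ω + b * μ[fun ω => D ω ^ 2|m] ω := by
  have h1 : μ[fun ω => 1 + a * D ω + b * D ω ^ 2|m] =ᵐ[μ]
      μ[fun ω => 1 + a * D ω|m] + μ[fun ω => b * D ω ^ 2|m] :=
    condExp_add ((integrable_const 1).add (hD.const_mul a)) (hD_sq.const_mul b) m
  have h2 : μ[fun ω => 1 + a * D ω|m] =ᵐ[μ] μ[fun _ => 1|m] + μ[fun ω => a * D ω|m] :=
    condExp_add (integrable_const 1) (hD.const_mul a) m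
  have h3 : μ[fun ω => a * D ω|m] =ᵐ[μ] fun ω => a * μ[D|m] ω := condExp_smul a D m
  have h4 : μ[fun ω => b * D ω ^ 2|m] =ᵐ[μ] fun ω => b * μ[fun ω => D ω ^ 2|m] ω :=
    condExp_smul b (fun ω => D ω ^ 2) m
  filter_upwards [h1, h2, h3, h4] with ω h1 h2 h3 h4
  rw [h1, Pi.add_apply, h2, Pi.add_apply, h3, h4, condExp_const hm]

theorem condExp_exp_mul_le_exp_mul_condExp_sq (hm : m ≤ m0) (hD : Integrable D μ)
    (hDK : ∀ᵐ ω ∂μ, |D ω| ≤ K) (hD_mean : μ[D|m] ≤ᵐ[μ] 0) (hl : 0 ≤ l) (hlK : l * K < 1) :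
    μ[fun ω => exp (l * D ω)|m] ≤ᵐ[μ]
      fun ω => exp (l ^ 2 / (2 * (1 - l * K)) * μ[fun ω => D ω ^ 2|m] ω) := by
  set c := l ^ 2 / (2 * (1 - l * K))
  have hD_sq : Integrable (fun ω => D ω ^ 2) μ := by
    refine (integrable_const (K ^ 2)).mono' (hD.aestronglyMeasurable.pow 2) ?_
    filter_upwards [hDK] with ω hω
    rw [norm_pow, Real.norm_eq_abs]
    exact pow_le_pow_left₀ (abs_nonneg _) hω 2
  have hpt : ∀ᵐ ω ∂μ, exp (l * D ω) ≤ 1 + l * D ω + c * D ω ^ 2 := by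
    filter_upwards [hDK] with ω hω
    have habs : |l * D ω| ≤ l * K := by rw [abs_mul, abs_of_nonneg hl]; gcongr
    convert exp_le_one_add_add_sq_div habs hlK using 2
    ring
  have hmono : μ[fun ω => exp (l * D ω)|m] ≤ᵐ[μ] μ[fun ω => 1 + l * D ω + c * D ω ^ 2|m] :=
    condExp_mono (integrable_exp_mul_of_ae_abs_le hD.1 hDK hl)
      (((integrable_const 1).add (hD.const_mul l)).add (hD_sq.const_mul c)) hpt
  filter_upwards [hmono, condExp_one_add_mul_add_mul_sq hm hD hD_sq l c, hD_mean]
    with ω h_mono h_lin h_mean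
  calc μ[fun ω => exp (l * D ω)|m] ω ≤ 1 + l * μ[D|m] ω + c * μ[fun ω => D ω ^ 2|m] ω :=
        h_mono.trans_eq h_lin
    _ ≤ 1 + c * μ[fun ω => D ω ^ 2|m] ω := by
        linarith [mul_nonpos_of_nonneg_of_nonpos hl h_mean]
    _ ≤ exp (c * μ[fun ω => D ω ^ 2|m] ω) := by
        linarith [add_one_le_exp (c * μ[fun ω => D ω ^ 2|m] ω)]

end CondExp

variable {ℱ : Filtration ℕ m0} {X : ℕ → Ω → ℝ} {K : ℝ}

noncomputable def predictableQuadVariation (μ : Measure Ω) (ℱ : Filtration ℕ m0)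
    (X : ℕ → Ω → ℝ) (n : ℕ) (ω : Ω) : ℝ :=
  ∑ j ∈ range n, μ[fun ω' => (X (j + 1) ω' - X j ω') ^ 2|ℱ j] ω

theorem predictableQuadVariation_nonneg (n : ℕ) :
    0 ≤ᵐ[μ] predictableQuadVariation μ ℱ X n := by
  have h := ae_all_iff.2 fun j : ℕ =>
    condExp_nonneg (m := ℱ j) (f := fun ω => (X (j + 1) ω - X j ω) ^ 2)
      (ae_of_all μ fun ω => sq_nonneg _)
  filter_upwards [h] with ω hω
  exact sum_nonneg fun j _ => hω j

theorem stronglyAdapted_predictableQuadVariation :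
    StronglyAdapted ℱ (predictableQuadVariation μ ℱ X) := fun _ =>
  stronglyMeasurable_fun_sum _ fun _ hj =>
    stronglyMeasurable_condExp.mono (ℱ.mono (mem_range.1 hj).le)

theorem ae_abs_sub_zero_le_mul (hbdd : ∀ i, ∀ᵐ ω ∂μ, |X (i + 1) ω - X i ω| ≤ K) (n : ℕ) :
    ∀ᵐ ω ∂μ, |X n ω - X 0 ω| ≤ n * K := by
  filter_upwards [ae_all_iff.2 hbdd] with ω hω
  have := dist_le_range_sum_of_dist_le (f := fun i => X i ω) n (d := fun _ => K)
    fun {k} _ => by rw [Real.dist_eq, abs_sub_comm]; exact hω k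
  simpa [Real.dist_eq, abs_sub_comm] using this

theorem Supermartingale.condExp_succ_sub_nonpos [IsFiniteMeasure μ] (hX : Supermartingale X ℱ μ)
    (n : ℕ) : μ[X (n + 1) - X n|ℱ n] ≤ᵐ[μ] 0 := by
  filter_upwards [condExp_sub (hX.integrable (n + 1)) (hX.integrable n) (ℱ n),
    hX.condExp_ae_le n.le_succ] with ω h_sub h_le
  rw [h_sub, Pi.sub_apply,
    condExp_of_stronglyMeasurable (ℱ.le n) (hX.stronglyAdapted n) (hX.integrable n)]
  exact sub_nonpos.2 h_le

theorem Supermartingale.exp_mul_sub_predictableQuadVariation [IsFiniteMeasure μ]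
    (hX : Supermartingale X ℱ μ) (hbdd : ∀ i, ∀ᵐ ω ∂μ, |X (i + 1) ω - X i ω| ≤ K) {l : ℝ}
    (hl : 0 ≤ l) (hlK : l * K < 1) :
    Supermartingale (fun n ω => exp (l * (X n ω - X 0 ω) -
      l ^ 2 / (2 * (1 - l * K)) * predictableQuadVariation μ ℱ X n ω)) ℱ μ := by
  set c := l ^ 2 / (2 * (1 - l * K))
  have hc : 0 ≤ c := div_nonneg (sq_nonneg l) (by linarith)
  set Y := fun n ω => l * (X n ω - X 0 ω) - c * predictableQuadVariation μ ℱ X n ω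
  have hY_meas : StronglyAdapted ℱ Y := fun n =>
    (((hX.stronglyMeasurable n).sub ((hX.stronglyMeasurable 0).mono
      (ℱ.mono (Nat.zero_le n)))).const_mul l).sub
      ((stronglyAdapted_predictableQuadVariation n).const_mul c)
  have hZ_meas : StronglyAdapted ℱ fun n ω => exp (Y n ω) := fun n =>
    continuous_exp.comp_stronglyMeasurable (hY_meas n)
  have hZ_int (n : ℕ) : Integrable (fun ω => exp (Y n ω)) μ := by
    refine integrable_exp_of_ae_le ((hY_meas n).mono (ℱ.le n)).aestronglyMeasurable
      (C := l * (n * K)) ?_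
    filter_upwards [ae_abs_sub_zero_le_mul hbdd n, predictableQuadVariation_nonneg n]
      with ω hXn hV
    have : l * (X n ω - X 0 ω) ≤ l * (n * K) := by gcongr; exact (le_abs_self _).trans hXn
    nlinarith [mul_nonneg hc hV]
  refine supermartingale_nat hZ_meas hZ_int fun n => ?_
  set D := fun ω => X (n + 1) ω - X n ω
  set W := μ[fun ω => D ω ^ 2|ℱ n]
  set F := fun ω => exp (Y n ω) * exp (-(c * W ω))
  have hZ_succ : (fun ω => exp (Y (n + 1) ω)) = F * fun ω => exp (l * D ω) := by
    funext ω
    simp only [Y, F, D, W, Pi.mul_apply, ← exp_add, predictableQuadVariation, sum_range_succ]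
    ring_nf
  have hD : Integrable D μ := (hX.integrable (n + 1)).sub (hX.integrable n)
  have hpull : μ[F * fun ω => exp (l * D ω)|ℱ n] =ᵐ[μ] F * μ[fun ω => exp (l * D ω)|ℱ n] :=
    condExp_mul_of_stronglyMeasurable_left ((hZ_meas n).mul
      (continuous_exp.comp_stronglyMeasurable (stronglyMeasurable_condExp.const_mul c).neg))
      (hZ_succ ▸ hZ_int (n + 1)) (integrable_exp_mul_of_ae_abs_le hD.1 (hbdd n) hl)
  change μ[fun ω => exp (Y (n + 1) ω)|ℱ n] ≤ᵐ[μ] fun ω => exp (Y n ω)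
  rw [hZ_succ]
  filter_upwards [hpull, condExp_exp_mul_le_exp_mul_condExp_sq (ℱ.le n) hD (hbdd n)
    (hX.condExp_succ_sub_nonpos n) hl hlK] with ω h_pull h_mgf
  rw [h_pull, Pi.mul_apply]
  calc F ω * μ[fun ω => exp (l * D ω)|ℱ n] ω ≤ F ω * exp (c * W ω) := by gcongr
    _ = exp (Y n ω) := by rw [mul_assoc, ← exp_add, neg_add_cancel, exp_zero, mul_one]

end MeasureTheory

/-- Freedman's inequality for discrete-time supermartingales with bounded increments. -/
theorem freedman_inequality
    {Ω : Type*} {mΩ : MeasurableSpace Ω} (μ : Measure Ω) [IsProbabilityMeasure μ]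
    (ℱ : Filtration ℕ mΩ) (X : ℕ → Ω → ℝ)
    (hX : Supermartingale X ℱ μ)
    (K : ℝ) (hK : 0 < K)
    (hbdd : ∀ i : ℕ, ∀ᵐ ω ∂μ, |X (i + 1) ω - X i ω| ≤ K)
    (t v : ℝ) (ht : 0 < t) (hv : 0 < v) :
    μ {ω : Ω | ∃ i : ℕ, X 0 ω + t ≤ X i ω ∧
        (∑ j ∈ Finset.range i,
          (μ[fun ω' => (X (j + 1) ω' - X j ω') ^ 2 | ℱ j]) ω) ≤ v}
      ≤ ENNReal.ofReal (Real.exp (-(t ^ 2) / (2 * (v + K * t)))) := by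
  have hvKt : 0 < v + K * t := by positivity
  set l := t / (v + K * t)
  have hl : 0 ≤ l := by positivity
  have hlK : l * K < 1 := by rw [div_mul_eq_mul_div, div_lt_one hvKt]; linarith
  set c := l ^ 2 / (2 * (1 - l * K))
  have hexponent : l * t - c * v = t ^ 2 / (2 * (v + K * t)) := by
    have h1 : 1 - l * K = v / (v + K * t) := by simp only [l]; field_simp; ring
    simp only [c, h1, l]; field_simp; ring
  have hZ := hX.exp_mul_sub_predictableQuadVariation hbdd hl hlK
  refine (measure_mono ?_).trans
    ((hZ.measure_exists_le_le (fun _ _ => (exp_pos _).le)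
      (exp_pos (t ^ 2 / (2 * (v + K * t))))).trans_eq ?_)
  · rintro ω ⟨i, hXi, hVi⟩
    refine ⟨i, ?_⟩
    rw [← hexponent, exp_le_exp]
    have hc : 0 ≤ c := div_nonneg (sq_nonneg l) (by linarith)
    exact sub_le_sub (mul_le_mul_of_nonneg_left (by linarith) hl)
      (mul_le_mul_of_nonneg_left hVi hc)
  · simp [predictableQuadVariation, ← exp_neg, neg_div]
end

section
/- Let H be a (simple) graph with vertex set V(H), let u₁,…,u_k be distinct vertices of H, and let F be the subgraph of H induced on {u₁,…,u_k}. There exists a constant C > 0, depending only on H, such that the following holds. Let G be an (ε, v(H)−1)-quasirandom graph on n vertices with 0 < ε ≤ 1/C and ε·d(G)^{e(H)}·n ≥ C, and let φ : {u₁,…,u_k} → V(G) be an injective graph homomorphism from F to G. Then the number of injective graph homomorphisms from H to G whose restriction to {u₁,…,u_k} equals φ lies between (1 − Cε)·d(G)^{e(H)−e(F)}·n^{v(H)−k} and (1 + Cε)·d(G)^{e(H)−e(F)}·n^{v(H)−k}. -/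
open scoped Classical

noncomputable section

/-- The number of edges of a graph on `Fin n`. -/
def edgeCount {n : ℕ} (G : SimpleGraph (Fin n)) : ℕ :=
  (Finset.univ.filter (fun e : Finset (Fin n) =>
    e.card = 2 ∧ ∀ u ∈ e, ∀ v ∈ e, u ≠ v → G.Adj u v)).card

/-- The density of a graph on `Fin n`. -/
def dens {n : ℕ} (G : SimpleGraph (Fin n)) : ℝ :=
  (edgeCount G : ℝ) / (n.choose 2 : ℝ)

/-- `G` is `(ε,h)`-quasirandom: every set `A` of at most `h` vertices has
`(1 ± ε) d(G)^|A| n` common neighbours. -/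
def QuasiRandom {n : ℕ} (G : SimpleGraph (Fin n)) (ε : ℝ) (h : ℕ) : Prop :=
  ∀ A : Finset (Fin n), A.card ≤ h →
    (1 - ε) * dens G ^ A.card * n ≤
      ((Finset.univ.filter (fun v : Fin n => ∀ w ∈ A, G.Adj w v)).card : ℝ) ∧
    ((Finset.univ.filter (fun v : Fin n => ∀ w ∈ A, G.Adj w v)).card : ℝ) ≤
      (1 + ε) * dens G ^ A.card * n

/-- The number of edges of a graph on a finite vertex type. -/
def edgeCnt {V : Type*} [Fintype V] (H : SimpleGraph V) : ℕ :=
  (Finset.univ.filter (fun e : Finset V =>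
    e.card = 2 ∧ ∀ u ∈ e, ∀ v ∈ e, u ≠ v → H.Adj u v)).card

/-- The number of edges of `H` lying inside the set of rooted vertices `u₁,…,u_k`
(i.e. the number of edges of the induced subgraph `F`). -/
def rootedEdgeCnt {V : Type*} [Fintype V] {k : ℕ} (H : SimpleGraph V)
    (u : Fin k → V) : ℕ :=
  (Finset.univ.filter (fun e : Finset V =>
    e.card = 2 ∧ (∀ x ∈ e, x ∈ Set.range u) ∧
      ∀ a ∈ e, ∀ b ∈ e, a ≠ b → H.Adj a b)).card

/-!
Embed the non-root vertices one at a time. Once an embedding of `H` restricted to a vertex set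
`D` containing the roots is fixed, a new vertex `x` can go to any common neighbour of the
images of its `d` neighbours in `D`, except the at most `v(H)` images already used. By
quasirandomness there are `(1 ± ε) d(G)^d n` such common neighbours, and the hypothesis
`ε d(G)^{e(H)} n ≥ C` makes the used images negligible, so each step multiplies the count by
`(1 ± 2ε) d(G)^d n`. The degrees `d` add up to `e(H) - e(F)` over the `v(H) - k` steps.
-/

open Finset hiding dens

namespace SimpleGraph

variable {V : Type*} [DecidableEq V] (H : SimpleGraph V)

def edgesWithin (D : Finset V) : Finset (Finset V) :=
  (D.powersetCard 2).filter fun e => ∀ a ∈ e, ∀ b ∈ e, a ≠ b → H.Adj a b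

variable {H}

lemma edgesWithin_mono {D E : Finset V} (h : D ⊆ E) : H.edgesWithin D ⊆ H.edgesWithin E :=
  filter_subset_filter _ (powersetCard_mono h)

lemma card_edgesWithin_insert {D : Finset V} {x : V} (hx : x ∉ D) :
    #(H.edgesWithin (insert x D)) = #(H.edgesWithin D) + #(D.filter (H.Adj x)) := by
  have hpair : ∀ w ∈ D, ((∀ a ∈ ({x, w} : Finset V), ∀ b ∈ ({x, w} : Finset V),
      a ≠ b → H.Adj a b) ↔ H.Adj x w) := by
    intro w hw
    have : x ≠ w := by rintro rfl; exact hx hw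
    simp only [mem_insert, mem_singleton]
    constructor
    · exact fun h => h x (.inl rfl) w (.inr rfl) this
    · rintro h a (rfl | rfl) b (rfl | rfl) hab
      exacts [absurd rfl hab, h, h.symm, absurd rfl hab]
  rw [edgesWithin, powersetCard_succ_insert hx, filter_union, card_union_of_disjoint,
    powersetCard_one, map_eq_image, image_image, filter_image, ← edgesWithin]
  · rw [card_image_of_injOn]
    · congr 2; exact filter_congr hpair
    · intro a ha b hb hab
      have : a ∈ ({x, b} : Finset V) := by
        simp only [Function.comp_apply, Function.Embedding.coeFn_mk] at hab
        rw [← hab]; simp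
      grind
  · refine Finset.disjoint_left.2 ?_
    intro e he he'
    obtain ⟨w, hw, rfl⟩ := mem_image.1 (mem_filter.1 he').1
    exact hx (mem_powersetCard.1 (mem_filter.1 he).1 |>.1 (mem_insert_self x w))

variable [Fintype V]

lemma card_edgesWithin_univ : #(H.edgesWithin univ) = edgeCnt H := by
  unfold edgeCnt edgesWithin
  congr 1; ext e; simp

lemma card_edgesWithin_image {k : ℕ} (u : Fin k → V) :
    #(H.edgesWithin (univ.image u)) = rootedEdgeCnt H u := by
  unfold rootedEdgeCnt edgesWithin
  congr 1; ext e; simp [subset_iff, and_comm, and_assoc]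

end SimpleGraph

section QuasiRandom

variable {n : ℕ}

def commonNbrs (G : SimpleGraph (Fin n)) (A : Finset (Fin n)) : Finset (Fin n) :=
  univ.filter fun v => ∀ w ∈ A, G.Adj w v

lemma dens_nonneg (G : SimpleGraph (Fin n)) : 0 ≤ dens G := by
  unfold dens; positivity

lemma edgeCount_le_choose (G : SimpleGraph (Fin n)) : edgeCount G ≤ n.choose 2 := by
  calc edgeCount G ≤ #((univ : Finset (Fin n)).powersetCard 2) :=
        card_le_card fun e he => mem_powersetCard_univ.2 (mem_filter.1 he).2.1
    _ = n.choose 2 := by simp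

lemma dens_le_one (G : SimpleGraph (Fin n)) : dens G ≤ 1 :=
  div_le_one_of_le₀ (by exact_mod_cast edgeCount_le_choose G) (by positivity)

lemma QuasiRandom.card_commonNbrs_sdiff_bounds {G : SimpleGraph (Fin n)} {ε : ℝ} {h : ℕ}
    (hG : QuasiRandom G ε h) {A B : Finset (Fin n)} (hA : #A ≤ h)
    (hB : (#B : ℝ) ≤ ε * dens G ^ #A * n) :
    (1 - 2 * ε) * dens G ^ #A * n ≤ #(commonNbrs G A \ B) ∧
      (#(commonNbrs G A \ B) : ℝ) ≤ (1 + ε) * dens G ^ #A * n := by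
  obtain ⟨hlo, hhi⟩ : (1 - ε) * dens G ^ #A * n ≤ #(commonNbrs G A) ∧
      (#(commonNbrs G A) : ℝ) ≤ (1 + ε) * dens G ^ #A * n := hG A hA
  have hsub : (#(commonNbrs G A \ B) : ℝ) ≤ #(commonNbrs G A) := by
    exact_mod_cast card_le_card sdiff_subset
  have hsdiff : (#(commonNbrs G A) : ℝ) ≤ #(commonNbrs G A \ B) + #B := by
    exact_mod_cast card_le_card_sdiff_add_card
  exact ⟨by linarith, hsub.trans hhi⟩

end QuasiRandom

section RootedEmbeddings

variable {V : Type*} {n k : ℕ} (H : SimpleGraph V) (G : SimpleGraph (Fin n))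
  (u : Fin k → V) (φ : Fin k → Fin n)

def IsRootedEmbeddingOn (D : Finset V) (ψ : V → Fin n) : Prop :=
  Set.InjOn ψ D ∧ (∀ a ∈ D, ∀ b ∈ D, H.Adj a b → G.Adj (ψ a) (ψ b)) ∧ ∀ i, ψ (u i) = φ i

def extensionChoices (D : Finset V) (x : V) (ψ : V → Fin n) : Finset (Fin n) :=
  commonNbrs G ((D.filter (H.Adj x)).image ψ) \ D.image ψ

variable {H G u φ}

lemma IsRootedEmbeddingOn.congr {D : Finset V} {ψ ψ' : V → Fin n}
    (hψ : IsRootedEmbeddingOn H G u φ D ψ) (h : Set.EqOn ψ ψ' D) (hu : ∀ i, u i ∈ D) :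
    IsRootedEmbeddingOn H G u φ D ψ' := by
  obtain ⟨hinj, hhom, hroot⟩ := hψ
  refine ⟨hinj.congr h, fun a ha b hb hab => ?_, fun i => ?_⟩
  · rw [← h ha, ← h hb]; exact hhom a ha b hb hab
  · rw [← h (hu i)]; exact hroot i

lemma mem_extensionChoices {D : Finset V} {x : V} {ψ : V → Fin n} {v : Fin n} :
    v ∈ extensionChoices H G D x ψ ↔
      (∀ w ∈ D, H.Adj x w → G.Adj (ψ w) v) ∧ ∀ w ∈ D, ψ w ≠ v := by
  simp only [extensionChoices, commonNbrs, mem_sdiff, mem_filter, mem_univ, true_and,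
    forall_mem_image, and_imp]
  simp only [mem_image, not_exists, not_and]

lemma extensionChoices_congr {D : Finset V} {x : V} {ψ ψ' : V → Fin n} (h : Set.EqOn ψ ψ' D) :
    extensionChoices H G D x ψ = extensionChoices H G D x ψ' := by
  rw [extensionChoices, extensionChoices, image_congr h,
    image_congr (h.mono (coe_subset.2 (filter_subset _ _)))]

lemma isRootedEmbeddingOn_insert [DecidableEq V] {D : Finset V} {x : V} {ψ : V → Fin n}
    (hx : x ∉ D) :
    IsRootedEmbeddingOn H G u φ (insert x D) ψ ↔
      IsRootedEmbeddingOn H G u φ D ψ ∧ ψ x ∈ extensionChoices H G D x ψ := by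
  have hx' : x ∉ (D : Set V) := hx
  simp only [IsRootedEmbeddingOn, coe_insert, Set.injOn_insert hx', mem_extensionChoices,
    forall_mem_insert, H.irrefl, IsEmpty.forall_iff, true_and, H.adj_comm x, G.adj_comm (ψ x),
    forall_and, Set.mem_image, mem_coe, not_exists, not_and]
  tauto

end RootedEmbeddings

section PaddedEmbeddings

variable {V : Type*} [Fintype V] [DecidableEq V] {n k : ℕ} (H : SimpleGraph V)
  (G : SimpleGraph (Fin n)) (u : Fin k → V) (φ : Fin k → Fin n) (z : Fin n)

/-- Padding with the constant `z` outside `D` makes the rooted embeddings of `H[D]` a finset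
of functions `V → Fin n`. -/
def paddedEmbeddings (D : Finset V) : Finset (V → Fin n) :=
  univ.filter fun ψ => IsRootedEmbeddingOn H G u φ D ψ ∧ ∀ a ∉ D, ψ a = z

lemma paddedEmbeddings_univ :
    paddedEmbeddings H G u φ z univ = univ.filter fun ψ : V → Fin n => Function.Injective ψ ∧
      (∀ a b : V, H.Adj a b → G.Adj (ψ a) (ψ b)) ∧ ∀ i : Fin k, ψ (u i) = φ i := by
  ext ψ
  simp [paddedEmbeddings, IsRootedEmbeddingOn, Set.injOn_univ]

variable {H G u φ z}

lemma card_paddedEmbeddings_insert {D : Finset V} {x : V} (hx : x ∉ D) (hu : ∀ i, u i ∈ D) :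
    #(paddedEmbeddings H G u φ z (insert x D)) =
      ∑ ψ ∈ paddedEmbeddings H G u φ z D, #(extensionChoices H G D x ψ) := by
  have hupdate : ∀ (ψ : V → Fin n) v, Set.EqOn ψ (Function.update ψ x v) D :=
    fun ψ v a ha => (Function.update_of_ne (ne_of_mem_of_not_mem ha hx) v ψ).symm
  rw [← card_sigma]
  refine card_nbij' (fun ψ => ⟨Function.update ψ x z, ψ x⟩)
    (fun p => Function.update p.1 x p.2) ?_ ?_ ?_ ?_
  · rintro ψ hψ
    simp only [paddedEmbeddings, coe_filter, mem_univ, true_and, Set.mem_ofPred_eq,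
      isRootedEmbeddingOn_insert hx] at hψ
    obtain ⟨⟨hemb, hchoice⟩, hpad⟩ := hψ
    simp only [coe_sigma, Set.mem_sigma_iff, paddedEmbeddings, coe_filter, mem_univ, true_and,
      Set.mem_ofPred_eq, mem_coe, ← extensionChoices_congr (hupdate ψ z)]
    refine ⟨⟨hemb.congr (hupdate ψ z) hu, fun a ha => ?_⟩, hchoice⟩
    rcases eq_or_ne a x with rfl | hax
    · exact Function.update_self a z ψ
    · rw [Function.update_of_ne hax]; exact hpad a (by simp [hax, ha])
  · rintro ⟨ψ, v⟩ hψv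
    simp only [coe_sigma, Set.mem_sigma_iff, paddedEmbeddings, coe_filter, mem_univ, true_and,
      Set.mem_ofPred_eq, mem_coe] at hψv
    obtain ⟨⟨hemb, hpad⟩, hv⟩ := hψv
    simp only [paddedEmbeddings, coe_filter, mem_univ, true_and, Set.mem_ofPred_eq,
      isRootedEmbeddingOn_insert hx, Function.update_self,
      ← extensionChoices_congr (hupdate ψ v)]
    refine ⟨⟨hemb.congr (hupdate ψ v) hu, hv⟩, fun a ha => ?_⟩
    rw [mem_insert, not_or] at ha
    rw [Function.update_of_ne ha.1]; exact hpad a ha.2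
  · intro ψ _
    simp
  · rintro ⟨ψ, v⟩ hψv
    have hψx : ψ x = z := ((mem_filter.1 (mem_sigma.1 hψv).1).2).2 x hx
    simp [hψx]

end PaddedEmbeddings

section Counting

variable {V : Type*} [Fintype V] [DecidableEq V] {n k : ℕ} {H : SimpleGraph V}
  {G : SimpleGraph (Fin n)} {u : Fin k → V} {φ : Fin k → Fin n} {z : Fin n} {ε : ℝ}

lemma card_extensionChoices_bounds (hG : QuasiRandom G ε (Fintype.card V - 1))
    {D : Finset V} {x : V} (hx : x ∉ D) {ψ : V → Fin n} (hψ : Set.InjOn ψ D)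
    (hbig : (Fintype.card V : ℝ) ≤ ε * dens G ^ #(D.filter (H.Adj x)) * n) :
    (1 - 2 * ε) * dens G ^ #(D.filter (H.Adj x)) * n ≤ #(extensionChoices H G D x ψ) ∧
      (#(extensionChoices H G D x ψ) : ℝ) ≤ (1 + ε) * dens G ^ #(D.filter (H.Adj x)) * n := by
  have hD : #D + 1 ≤ Fintype.card V := by
    rw [← card_insert_of_notMem hx]; exact card_le_univ _
  have hA : #((D.filter (H.Adj x)).image ψ) = #(D.filter (H.Adj x)) :=
    card_image_of_injOn (hψ.mono (coe_subset.2 (filter_subset _ _)))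
  have hB : (#(D.image ψ) : ℝ) ≤ Fintype.card V := by
    exact_mod_cast card_image_le.trans (by omega)
  rw [← hA] at hbig ⊢
  exact hG.card_commonNbrs_sdiff_bounds
    (by rw [hA]; exact (card_filter_le _ _).trans (by omega)) (hB.trans hbig)

lemma card_paddedEmbeddings_insert_bounds (hG : QuasiRandom G ε (Fintype.card V - 1))
    {D : Finset V} {x : V} (hx : x ∉ D) (hu : ∀ i, u i ∈ D)
    (hbig : (Fintype.card V : ℝ) ≤ ε * dens G ^ #(D.filter (H.Adj x)) * n) :
    (1 - 2 * ε) * dens G ^ #(D.filter (H.Adj x)) * n * #(paddedEmbeddings H G u φ z D) ≤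
        #(paddedEmbeddings H G u φ z (insert x D)) ∧
      (#(paddedEmbeddings H G u φ z (insert x D)) : ℝ) ≤
        (1 + ε) * dens G ^ #(D.filter (H.Adj x)) * n * #(paddedEmbeddings H G u φ z D) := by
  have hchoices : ∀ ψ ∈ paddedEmbeddings H G u φ z D, _ := fun ψ hψ =>
    card_extensionChoices_bounds hG hx (mem_filter.1 hψ).2.1.1 hbig
  rw [card_paddedEmbeddings_insert hx hu, Nat.cast_sum, mul_comm _ (#_ : ℝ),
    mul_comm _ (#_ : ℝ), ← nsmul_eq_mul, ← nsmul_eq_mul]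
  exact ⟨card_nsmul_le_sum _ _ _ fun ψ hψ => (hchoices ψ hψ).1,
    sum_le_card_nsmul _ _ _ fun ψ hψ => (hchoices ψ hψ).2⟩

lemma card_paddedEmbeddings_image (hu : Function.Injective u) (hφ : Function.Injective φ)
    (hhom : ∀ i j, H.Adj (u i) (u j) → G.Adj (φ i) (φ j)) :
    #(paddedEmbeddings H G u φ z (univ.image u)) = 1 := by
  rw [card_eq_one]
  refine ⟨Function.extend u φ fun _ => z, ?_⟩
  ext ψ
  simp only [paddedEmbeddings, IsRootedEmbeddingOn, mem_filter, mem_univ, true_and,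
    mem_singleton, coe_image, coe_univ, Set.image_univ, mem_image, forall_exists_index,
    forall_apply_eq_imp_iff]
  constructor
  · rintro ⟨⟨-, -, hroot⟩, hpad⟩
    funext a
    by_cases ha : ∃ i, u i = a
    · obtain ⟨i, rfl⟩ := ha
      rw [hroot i, hu.extend_apply]
    · rw [hpad a ha, Function.extend_apply' _ _ _ ha]
  · rintro rfl
    refine ⟨⟨?_, fun i j hij => ?_, fun i => hu.extend_apply _ _ i⟩,
      fun a ha => Function.extend_apply' _ _ _ ha⟩
    · rintro _ ⟨i, rfl⟩ _ ⟨j, rfl⟩ h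
      rw [hu.extend_apply, hu.extend_apply] at h
      rw [hφ h]
    · rw [hu.extend_apply, hu.extend_apply]
      exact hhom i j hij

lemma card_paddedEmbeddings_bounds (hu : Function.Injective u) (hφ : Function.Injective φ)
    (hhom : ∀ i j, H.Adj (u i) (u j) → G.Adj (φ i) (φ j)) (hε : 0 ≤ ε) (hε2 : ε ≤ 1 / 2)
    (hG : QuasiRandom G ε (Fintype.card V - 1))
    (hbig : (Fintype.card V : ℝ) ≤ ε * dens G ^ edgeCnt H * n)
    (s : Finset V) (hs : Disjoint s (univ.image u)) :
    (1 - 2 * ε) ^ #s * dens G ^ (#(H.edgesWithin (univ.image u ∪ s)) -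
        #(H.edgesWithin (univ.image u))) * n ^ #s ≤
        #(paddedEmbeddings H G u φ z (univ.image u ∪ s)) ∧
      (#(paddedEmbeddings H G u φ z (univ.image u ∪ s)) : ℝ) ≤
        (1 + ε) ^ #s * dens G ^ (#(H.edgesWithin (univ.image u ∪ s)) -
          #(H.edgesWithin (univ.image u))) * n ^ #s := by
  induction s using Finset.induction_on with
  | empty => simp [card_paddedEmbeddings_image hu hφ hhom]
  | @insert x s hxs ih =>
    set R := univ.image u
    set D := R ∪ s
    obtain ⟨ihlo, ihhi⟩ := ih (disjoint_of_subset_left (subset_insert x s) hs)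
    have hxD : x ∉ D := by
      simpa [D, hxs] using disjoint_left.1 hs (mem_insert_self x s)
    have huD : ∀ i, u i ∈ D := fun i => mem_union_left s (mem_image_of_mem u (mem_univ i))
    set deg := #(D.filter (H.Adj x))
    have hedges : #(H.edgesWithin (insert x D)) = #(H.edgesWithin D) + deg :=
      SimpleGraph.card_edgesWithin_insert hxD
    have hRD : #(H.edgesWithin R) ≤ #(H.edgesWithin D) :=
      card_le_card (SimpleGraph.edgesWithin_mono subset_union_left)
    have hdeg : deg ≤ edgeCnt H := by
      rw [← SimpleGraph.card_edgesWithin_univ]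
      have := card_le_card (SimpleGraph.edgesWithin_mono (H := H) (subset_univ (insert x D)))
      omega
    have hbig' : (Fintype.card V : ℝ) ≤ ε * dens G ^ deg * n :=
      hbig.trans (by
        gcongr ε * ?_ * _
        exact pow_le_pow_of_le_one (dens_nonneg G) (dens_le_one G) hdeg)
    obtain ⟨hlo, hhi⟩ := card_paddedEmbeddings_insert_bounds (φ := φ) (z := z) hG hxD huD hbig'
    rw [union_insert, card_insert_of_notMem hxs, hedges, Nat.sub_add_comm hRD]
    have hd : 0 ≤ dens G ^ deg := pow_nonneg (dens_nonneg G) deg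
    have hstep_lo : 0 ≤ (1 - 2 * ε) * dens G ^ deg * n := by
      have : 0 ≤ 1 - 2 * ε := by linarith
      positivity
    constructor
    · calc _ = (1 - 2 * ε) ^ #s * dens G ^ (#(H.edgesWithin D) - #(H.edgesWithin R)) * n ^ #s *
              ((1 - 2 * ε) * dens G ^ deg * n) := by ring
        _ ≤ #(paddedEmbeddings H G u φ z D) * ((1 - 2 * ε) * dens G ^ deg * n) :=
          mul_le_mul_of_nonneg_right ihlo hstep_lo
        _ ≤ _ := by linarith
    · calc _ ≤ (1 + ε) * dens G ^ deg * n * #(paddedEmbeddings H G u φ z D) := hhi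
        _ ≤ (1 + ε) * dens G ^ deg * n * ((1 + ε) ^ #s *
              dens G ^ (#(H.edgesWithin D) - #(H.edgesWithin R)) * n ^ #s) := by gcongr
        _ = _ := by ring

end Counting

lemma one_sub_mul_le_one_sub_two_mul_pow {C ε : ℝ} {s : ℕ} (hε : 0 ≤ ε) (hε1 : ε ≤ 1)
    (hC : 2 * s ≤ C) : 1 - C * ε ≤ (1 - 2 * ε) ^ s := by
  have hbern := one_add_mul_le_pow (a := -(2 * ε)) (by linarith) s
  rw [← sub_eq_add_neg] at hbern
  nlinarith [mul_le_mul_of_nonneg_right hC hε]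

lemma one_add_pow_le_one_add_two_pow_sub_one_mul {ε : ℝ} (hε : 0 ≤ ε) (hε1 : ε ≤ 1) (s : ℕ) :
    (1 + ε) ^ s ≤ 1 + (2 ^ s - 1) * ε := by
  induction s with
  | zero => norm_num
  | succ t ih =>
    have h2 : (1 : ℝ) ≤ 2 ^ t := one_le_pow₀ (by norm_num)
    calc (1 + ε) ^ (t + 1) = (1 + ε) ^ t * (1 + ε) := pow_succ _ _
      _ ≤ (1 + (2 ^ t - 1) * ε) * (1 + ε) := by gcongr
      _ ≤ 1 + (2 ^ (t + 1) - 1) * ε := by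
        rw [pow_succ]
        nlinarith [mul_nonneg (mul_nonneg (sub_nonneg.2 h2) hε) (sub_nonneg.2 hε1)]

lemma one_add_pow_le_one_add_mul {C ε : ℝ} {s : ℕ} (hε : 0 ≤ ε) (hε1 : ε ≤ 1)
    (hC : 2 ^ s ≤ C + 1) : (1 + ε) ^ s ≤ 1 + C * ε :=
  (one_add_pow_le_one_add_two_pow_sub_one_mul hε hε1 s).trans (by gcongr; linarith)

/-- Rooted extension counting in quasirandom graphs: the number of embeddings of `H`
into a quasirandom graph `G` extending a given embedding `φ` of the induced subgraph
`F = H[{u₁,…,u_k}]` is `(1 ± Cε) d(G)^(e(H)-e(F)) n^(v(H)-k)`. -/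
theorem rooted_extension_count
    {V : Type*} [Fintype V] [DecidableEq V] (H : SimpleGraph V)
    (k : ℕ) (u : Fin k → V) (hu : Function.Injective u) :
    ∃ C : ℝ, 0 < C ∧
    ∀ n : ℕ, ∀ ε : ℝ, 0 < ε → ε ≤ 1 / C →
    ∀ G : SimpleGraph (Fin n), QuasiRandom G ε (Fintype.card V - 1) →
    C ≤ ε * dens G ^ edgeCnt H * n →
    ∀ φ : Fin k → Fin n, Function.Injective φ →
    (∀ i j : Fin k, H.Adj (u i) (u j) → G.Adj (φ i) (φ j)) →
    (1 - C * ε) * dens G ^ (edgeCnt H - rootedEdgeCnt H u) *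
        (n : ℝ) ^ (Fintype.card V - k) ≤
      ((Finset.univ.filter (fun ψ : V → Fin n => Function.Injective ψ ∧
          (∀ a b : V, H.Adj a b → G.Adj (ψ a) (ψ b)) ∧
          ∀ i : Fin k, ψ (u i) = φ i)).card : ℝ) ∧
    ((Finset.univ.filter (fun ψ : V → Fin n => Function.Injective ψ ∧
        (∀ a b : V, H.Adj a b → G.Adj (ψ a) (ψ b)) ∧
        ∀ i : Fin k, ψ (u i) = φ i)).card : ℝ) ≤
      (1 + C * ε) * dens G ^ (edgeCnt H - rootedEdgeCnt H u) *
        (n : ℝ) ^ (Fintype.card V - k) := by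
  set m := Fintype.card V
  refine ⟨2 ^ m + 2 * m + 2, by positivity, fun n ε hε hεC G hG hbig φ hφ hhom => ?_⟩
  have h2m : (2 : ℝ) ^ (m - k) ≤ 2 ^ m := pow_le_pow_right₀ one_le_two (Nat.sub_le m k)
  have hmk : ((m - k : ℕ) : ℝ) ≤ m := by exact_mod_cast Nat.sub_le m k
  have hm : (1 : ℝ) ≤ 2 ^ m ∧ (0 : ℝ) ≤ m := ⟨one_le_pow₀ one_le_two, m.cast_nonneg⟩
  have hε2 : ε ≤ 1 / 2 := hεC.trans (one_div_le_one_div_of_le two_pos (by linarith))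
  have hn : 0 < n := Nat.pos_of_ne_zero <| by rintro rfl; simp at hbig; linarith
  obtain ⟨hlo, hhi⟩ := card_paddedEmbeddings_bounds (z := ⟨0, hn⟩) hu hφ hhom hε.le hε2 hG
    (le_trans (by linarith) hbig) (univ \ univ.image u) sdiff_disjoint
  rw [union_sdiff_of_subset (subset_univ _), card_univ_sdiff, card_image_of_injective _ hu,
    card_univ, Fintype.card_fin, SimpleGraph.card_edgesWithin_univ,
    SimpleGraph.card_edgesWithin_image, paddedEmbeddings_univ] at hlo hhi
  have hlower := one_sub_mul_le_one_sub_two_mul_pow (C := 2 ^ m + 2 * m + 2) hε.le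
    (by linarith) (by linarith : 2 * ((m - k : ℕ) : ℝ) ≤ _)
  have hupper := one_add_pow_le_one_add_mul (C := 2 ^ m + 2 * m + 2) hε.le (by linarith)
    (by linarith : (2 : ℝ) ^ (m - k) ≤ _)
  have hP : 0 ≤ dens G ^ (edgeCnt H - rootedEdgeCnt H u) * (n : ℝ) ^ (m - k) :=
    mul_nonneg (pow_nonneg (dens_nonneg G) _) (by positivity)
  simp only [mul_assoc] at hlo hhi ⊢
  exact ⟨(mul_le_mul_of_nonneg_right hlower hP).trans hlo,
    hhi.trans (mul_le_mul_of_nonneg_right hupper hP)⟩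
end
end

section
/- There exists n₀ such that for every n ≥ n₀ there exist a 3-uniform hypergraph T with exactly 10n vertices and exactly 120n hyperedges, and a set Z of 2n vertices of T, such that for every subset Z′ ⊆ Z with |Z′| = n, the hyperedges of T that avoid Z′ contain a perfect matching of V(T) ∖ Z′, i.e., a collection of 3n pairwise disjoint hyperedges of T covering all 9n vertices of V(T) ∖ Z′. -/
/-!
The template is built from a bipartite graph between `L = Z ⊔ X` (`|Z| = 2n`, `|X| = n`) and
`R` (`|R| = 2n`): a graph edge `ℓr` becomes the triple `{ℓ, r₀, r₁}`, where `r₀, r₁` are two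
private vertices of `r`, and `n` disjoint padding triples bring the vertex count to
`3n + 4n + 3n = 10n`. If `Z'` is any `n`-subset of `Z`, a perfect matching of `L ∖ Z'` onto `R`
gives a perfect matching of the hypergraph with `Z'` removed, so it suffices that Hall's condition
holds for every `S ⊆ L` with `|S ∩ Z| ≤ n`.

Such a graph with at most `119n` edges is found by the probabilistic method: every vertex of `L`
picks 33 neighbours in `R` and every vertex of `R` picks 10 neighbours in `X`, uniformly at random.
If Hall's condition fails for `S`, the set `B` of vertices of `R` without neighbour in `S` has
`|S| + |B| > 2n`. When `|B| ≤ n / 2`, the `10|B|` picks of `B` land in the fewer than `|B|` vertices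
of `X ∖ S`; otherwise some `2n + 1 - |B|` vertices of `S` pick all their neighbours outside `B`.
For each value of `c = |B| - 1`, respectively `c = 2n - |B|`, a union bound over the choices of
these sets gives probability at most `4⁻⁽ᶜ⁺¹⁾`, so Hall's condition fails with probability at most
`2/3`. Arbitrary further triples bring the number of edges from `120n` or fewer to exactly `120n`.
-/

open Finset
open scoped Nat

lemma card_filter_forall_mem_mul_pow {σ γ : Type*} [Fintype σ] [DecidableEq σ] [Fintype γ]
    [DecidableEq γ] (A : Finset σ) (T : Finset γ) :
    #{h : σ → γ | ∀ a ∈ A, h a ∈ T} * Fintype.card γ ^ #A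
      = #T ^ #A * Fintype.card γ ^ Fintype.card σ := by
  have hpi : ({h : σ → γ | ∀ a ∈ A, h a ∈ T} : Finset _)
      = Fintype.piFinset fun a => if a ∈ A then T else univ := by
    ext h
    simp only [mem_filter, mem_univ, true_and, Fintype.mem_piFinset]
    exact ⟨fun hh a => by split_ifs with ha <;> simp [hh, ha],
      fun hh a ha => by simpa [ha] using hh a⟩
  rw [hpi, Fintype.card_piFinset, ← prod_mul_prod_compl A,
    prod_eq_pow_card fun a ha => by rw [if_pos ha],
    prod_eq_pow_card fun a ha => by rw [if_neg (mem_compl.1 ha), Finset.card_univ],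
    card_compl, mul_assoc, ← pow_add, Nat.sub_add_cancel (card_le_univ A)]

lemma mul_card_biUnion_powersetCard_le {α β Ω : Type*} [Fintype α] [Fintype β] [DecidableEq Ω]
    (F : Finset α → Finset β → Finset Ω) {i j N x : ℕ}
    (h : ∀ s t, #s = i → #t = j → N * #(F s t) ≤ x) :
    N * #((powersetCard i univ).biUnion fun s => (powersetCard j univ).biUnion (F s))
      ≤ (Fintype.card α).choose i * (Fintype.card β).choose j * x :=
  calc N * #((powersetCard i univ).biUnion fun s => (powersetCard j univ).biUnion (F s))
      ≤ N * ∑ s ∈ powersetCard i univ, ∑ t ∈ powersetCard j univ, #(F s t) :=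
        Nat.mul_le_mul_left _ (card_biUnion_le.trans (sum_le_sum fun _ _ => card_biUnion_le))
    _ = ∑ s ∈ powersetCard i univ, ∑ t ∈ powersetCard j univ, N * #(F s t) := by
        simp_rw [mul_sum]
    _ ≤ ∑ s ∈ powersetCard i univ, ∑ t ∈ powersetCard j univ, x :=
        sum_le_sum fun s hs => sum_le_sum fun t ht =>
          h s t (mem_powersetCard.1 hs).2 (mem_powersetCard.1 ht).2
    _ = (Fintype.card α).choose i * (Fintype.card β).choose j * x := by
        simp only [sum_const, card_powersetCard, card_univ, smul_eq_mul]; ring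

namespace Nat

lemma pow_self_le_four_pow_mul_factorial (k : ℕ) : k ^ k ≤ 4 ^ k * k ! := by
  have hcentral : (2 * k).choose k ≤ 4 ^ k :=
    (choose_mono k (by omega)).trans (choose_middle_le_pow k)
  have hfac : (2 * k)! = (2 * k).choose k * (k ! * k !) := by
    rw [← choose_mul_factorial_mul_factorial (show k ≤ 2 * k by omega),
      show 2 * k - k = k by omega, mul_assoc]
  refine le_of_mul_le_mul_left ?_ (factorial_pos k)
  calc k ! * k ^ k ≤ k ! * (k + 1) ^ k := mul_le_mul_left _ (Nat.pow_le_pow_left (by omega) _)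
    _ ≤ (k + k)! := factorial_mul_pow_le_factorial
    _ = (2 * k).choose k * (k ! * k !) := by rw [← two_mul, hfac]
    _ ≤ 4 ^ k * (k ! * k !) := mul_le_mul_right _ hcentral
    _ = k ! * (4 ^ k * k !) := by ring

lemma choose_mul_pow_self_le (m k : ℕ) : m.choose k * k ^ k ≤ 4 ^ k * m ^ k :=
  calc m.choose k * k ^ k ≤ m.choose k * (4 ^ k * k !) :=
        mul_le_mul_left _ (pow_self_le_four_pow_mul_factorial k)
    _ = 4 ^ k * m.descFactorial k := by rw [descFactorial_eq_factorial_mul_choose]; ring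
    _ ≤ 4 ^ k * m ^ k := mul_le_mul_left _ (descFactorial_le_pow m k)

lemma choose_mul_choose_mul_pow_le (M N c : ℕ) :
    M.choose (c + 1) * N.choose c * c ^ (2 * c + 1) ≤ 2 ^ (4 * c + 2) * M ^ (c + 1) * N ^ c :=
  calc M.choose (c + 1) * N.choose c * c ^ (2 * c + 1)
      = (M.choose (c + 1) * c ^ (c + 1)) * (N.choose c * c ^ c) := by ring
    _ ≤ (M.choose (c + 1) * (c + 1) ^ (c + 1)) * (N.choose c * c ^ c) := by gcongr; omega
    _ ≤ (4 ^ (c + 1) * M ^ (c + 1)) * (4 ^ c * N ^ c) :=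
        Nat.mul_le_mul (choose_mul_pow_self_le _ _) (choose_mul_pow_self_le _ _)
    _ = 2 ^ (4 * c + 2) * M ^ (c + 1) * N ^ c := by
        rw [show (4 : ℕ) = 2 ^ 2 by rfl, ← pow_mul, ← pow_mul]; ring

lemma mul_le_of_mul_le_mul_of_mul_le {a b K N T : ℕ} (hN : 0 < N) (ha : N * a ≤ K * T)
    (hK : b * K ≤ N) : b * a ≤ T := by
  refine le_of_mul_le_mul_left ?_ hN
  calc N * (b * a) = b * (N * a) := by ring
    _ ≤ b * (K * T) := Nat.mul_le_mul_left _ ha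
    _ = b * K * T := by ring
    _ ≤ N * T := Nat.mul_le_mul_right _ hK

lemma le_choose_ten_mul_three {n : ℕ} (hn : 1 ≤ n) : 120 * n ≤ (10 * n).choose 3 := by
  have h := descFactorial_eq_factorial_mul_choose (10 * n) 3
  simp only [descFactorial, factorial, succ_eq_add_one, Nat.sub_zero] at h
  have h72 : 72 ≤ (10 * n - 2) * (10 * n - 1) :=
    Nat.mul_le_mul (by omega : 8 ≤ _) (by omega : 9 ≤ _)
  have := Nat.mul_le_mul_right (10 * n) h72
  nlinarith

end Nat

lemma four_pow_mul_choose_mul_choose_le_of_two_mul_le {n c : ℕ} (h : 2 * (c + 1) ≤ n) :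
    4 ^ (c + 1) * ((2 * n).choose (c + 1) * n.choose c * c ^ ((c + 1) * 10))
      ≤ n ^ ((c + 1) * 10) := by
  set K := (2 * n).choose (c + 1) * n.choose c
  have hK : K * c ^ (2 * c + 1) ≤ 2 ^ (4 * c + 2) * (2 * n) ^ (c + 1) * n ^ c :=
    Nat.choose_mul_choose_mul_pow_le _ _ _
  have hsmall : (2 * c) ^ (8 * c + 9) ≤ n ^ (8 * c + 9) := Nat.pow_le_pow_left (by omega) _
  rw [show 4 ^ (c + 1) = 2 ^ (2 * (c + 1)) by rw [pow_mul]; norm_num]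
  refine Nat.le_of_mul_le_mul_left ?_ (pow_pos two_pos (8 * c + 9))
  calc 2 ^ (8 * c + 9) * (2 ^ (2 * (c + 1)) * (K * c ^ ((c + 1) * 10)))
      = 2 ^ (2 * (c + 1)) * (K * c ^ (2 * c + 1)) * (2 * c) ^ (8 * c + 9) := by ring
    _ ≤ 2 ^ (2 * (c + 1)) * (2 ^ (4 * c + 2) * (2 * n) ^ (c + 1) * n ^ c) * n ^ (8 * c + 9) := by
        gcongr
    _ = 2 ^ (7 * c + 5) * n ^ ((c + 1) * 10) := by ring
    _ ≤ 2 ^ (8 * c + 9) * n ^ ((c + 1) * 10) := by gcongr <;> omega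

lemma four_pow_mul_choose_mul_choose_le_of_two_mul_lt {n c : ℕ} (h : 2 * c < 3 * n) :
    4 ^ (c + 1) * ((3 * n).choose (c + 1) * (2 * n).choose c * c ^ ((c + 1) * 33))
      ≤ (2 * n) ^ ((c + 1) * 33) := by
  set K := (3 * n).choose (c + 1) * (2 * n).choose c
  have hK : K * c ^ (2 * c + 1) ≤ 2 ^ (4 * c + 2) * (3 * n) ^ (c + 1) * (2 * n) ^ c :=
    Nat.choose_mul_choose_mul_pow_le _ _ _
  have hsmall : 4 ^ (31 * c + 32) * c ^ (31 * c + 32)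
      ≤ 3 ^ (31 * c + 32) * (2 * n) ^ (31 * c + 32) := by
    rw [← mul_pow, ← mul_pow]
    exact Nat.pow_le_pow_left (by omega) _
  have hconst : 3 ^ (32 * c + 33) ≤ 2 ^ (57 * c + 61) :=
    calc 3 ^ (32 * c + 33) = (3 ^ 32) ^ c * 3 ^ 33 := by rw [pow_add, pow_mul]
      _ ≤ (2 ^ 57) ^ c * 2 ^ 61 :=
          Nat.mul_le_mul (Nat.pow_le_pow_left (by norm_num) c) (by norm_num)
      _ = 2 ^ (57 * c + 61) := by rw [pow_add, pow_mul]
  have h4 : ∀ k, (4 : ℕ) ^ k = 2 ^ (2 * k) := fun k => by rw [pow_mul]; norm_num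
  rw [h4] at hsmall ⊢
  refine Nat.le_of_mul_le_mul_left ?_ (pow_pos two_pos (63 * c + 65))
  calc 2 ^ (63 * c + 65) * (2 ^ (2 * (c + 1)) * (K * c ^ ((c + 1) * 33)))
      = 2 ^ (c + 1) * 2 ^ (2 * (c + 1)) * (K * c ^ (2 * c + 1))
          * (2 ^ (2 * (31 * c + 32)) * c ^ (31 * c + 32)) := by ring
    _ ≤ 2 ^ (c + 1) * 2 ^ (2 * (c + 1)) * (2 ^ (4 * c + 2) * (3 * n) ^ (c + 1) * (2 * n) ^ c)
          * (3 ^ (31 * c + 32) * (2 * n) ^ (31 * c + 32)) := by gcongr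
    _ = 2 ^ (6 * c + 4) * 3 ^ (32 * c + 33) * (2 * n) ^ ((c + 1) * 33) := by ring
    _ ≤ 2 ^ (6 * c + 4) * 2 ^ (57 * c + 61) * (2 * n) ^ ((c + 1) * 33) := by gcongr
    _ = 2 ^ (63 * c + 65) * (2 * n) ^ ((c + 1) * 33) := by ring

lemma three_mul_sum_le_of_four_pow_mul_le {x : ℕ → ℕ} {m T : ℕ}
    (h : ∀ c < m, 4 ^ (c + 1) * x c ≤ T) : 3 * ∑ c ∈ range m, x c ≤ T := by
  have hterm : ∀ c ∈ range m, (x c : ℚ) ≤ T * (1 / 4) ^ (c + 1) := fun c hc => by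
    have : (4 ^ (c + 1) * x c : ℚ) ≤ T := by exact_mod_cast h c (mem_range.1 hc)
    rw [one_div_pow, mul_one_div, le_div_iff₀ (by positivity)]
    linarith
  have hgeom : ∑ c ∈ range m, (1 / 4 : ℚ) ^ c ≤ 4 / 3 := by
    have := geom_sum_Ico_le_of_lt_one (x := (1 / 4 : ℚ)) (m := 0) (n := m)
      (by norm_num) (by norm_num)
    rw [← range_eq_Ico] at this
    norm_num at this ⊢
    exact this
  have hsum : (3 * ∑ c ∈ range m, x c : ℚ) ≤ T :=
    calc (3 * ∑ c ∈ range m, x c : ℚ) ≤ 3 * ∑ c ∈ range m, (T * (1 / 4) ^ (c + 1) : ℚ) := by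
          push_cast; gcongr with c hc; exact hterm c hc
      _ = 3 * (T / 4) * ∑ c ∈ range m, (1 / 4 : ℚ) ^ c := by
          rw [mul_sum, mul_sum]; congr 1; ext c; ring
      _ ≤ 3 * (T / 4) * (4 / 3) := by gcongr
      _ = T := by ring
  exact_mod_cast hsum

lemma exists_equiv_forall_rel_of_hall {α β : Type*} [Fintype α] [Fintype β] (r : α → β → Prop)
    [DecidableRel r] (hcard : Fintype.card α = Fintype.card β)
    (hall : ∀ A : Finset α, #A ≤ #{b | ∃ a ∈ A, r a b}) : ∃ e : α ≃ β, ∀ a, r a (e a) := by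
  obtain ⟨f, hinj, hf⟩ := (Fintype.all_card_le_filter_rel_iff_exists_injective r).1 hall
  exact ⟨Equiv.ofBijective f ((Fintype.bijective_iff_injective_and_card f).2 ⟨hinj, hcard⟩), hf⟩

lemma Finpartition.card_parts_mul_eq_card {α : Type*} [DecidableEq α] {s : Finset α}
    (P : Finpartition s) {m : ℕ} (hP : ∀ p ∈ P.parts, #p = m) : #P.parts * m = #s := by
  rw [← P.sum_card_parts, sum_congr rfl hP, sum_const, smul_eq_mul]

lemma exists_uniform_superset_card_eq {V : Type*} [Fintype V] [DecidableEq V]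
    {E₀ : Finset (Finset V)} {r m : ℕ} (h₀ : ∀ e ∈ E₀, #e = r) (hE₀ : #E₀ ≤ m)
    (hm : m ≤ (Fintype.card V).choose r) :
    ∃ E, E₀ ⊆ E ∧ (∀ e ∈ E, #e = r) ∧ #E = m := by
  obtain ⟨E, hE₀E, hE, hEcard⟩ := exists_subsuperset_card_eq
    (fun e he => mem_powersetCard.2 ⟨subset_univ e, h₀ e he⟩) hE₀
    (by rwa [card_powersetCard, card_univ] : m ≤ #(powersetCard r (univ : Finset V)))
  exact ⟨E, hE₀E, fun e he => (mem_powersetCard.1 (hE he)).2, hEcard⟩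

section Resilient

variable {V : Type*} [Fintype V] [DecidableEq V]

/-- A finpartition of `Z'ᶜ` with parts in `E` is a perfect matching of the hypergraph `E` with
`Z'` deleted. -/
def IsResilientTemplate (E : Finset (Finset V)) (Z : Finset V) (k : ℕ) : Prop :=
  ∀ Z' ⊆ Z, #Z' = k → ∃ P : Finpartition Z'ᶜ, P.parts ⊆ E

lemma IsResilientTemplate.mono {E E' : Finset (Finset V)} {Z : Finset V} {k : ℕ}
    (h : IsResilientTemplate E Z k) (hE : E ⊆ E') : IsResilientTemplate E' Z k :=
  fun Z' hZ' hk => (h Z' hZ' hk).imp fun _ hP => hP.trans hE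

end Resilient

section Template

variable {L R Q W : Type*} (ι : (L ⊕ R × Fin 2) ⊕ Q × Fin 3 ≃ W)

def leftEmbedding : L ↪ W := (Function.Embedding.inl.trans .inl).trans ι.toEmbedding

@[simp]
lemma leftEmbedding_apply (ℓ : L) : leftEmbedding ι ℓ = ι (.inl (.inl ℓ)) := rfl

variable [DecidableEq L] [DecidableEq R] [DecidableEq Q] [DecidableEq W]

def linkEdge (p : L × R) : Finset W :=
  ({.inl (.inl p.1), .inl (.inr (p.2, 0)), .inl (.inr (p.2, 1))} : Finset _).map ι.toEmbedding

def padEdge (q : Q) : Finset W :=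
  ({.inr (q, 0), .inr (q, 1), .inr (q, 2)} : Finset _).map ι.toEmbedding

def templateEdges [Fintype Q] (H : Finset (L × R)) : Finset (Finset W) :=
  H.image (linkEdge ι) ∪ univ.image (padEdge ι)

variable {ι}

@[simp]
lemma mem_linkEdge {w : (L ⊕ R × Fin 2) ⊕ Q × Fin 3} {ℓ : L} {r : R} :
    ι w ∈ linkEdge ι (ℓ, r) ↔ w = .inl (.inl ℓ) ∨ ∃ i, w = .inl (.inr (r, i)) := by
  simp [linkEdge, Fin.exists_fin_two]

@[simp]
lemma mem_padEdge {w : (L ⊕ R × Fin 2) ⊕ Q × Fin 3} {q : Q} :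
    ι w ∈ padEdge ι q ↔ ∃ i, w = .inr (q, i) := by
  simp [padEdge, Fin.exists_fin_succ]

lemma card_templateEdges_of_mem [Fintype Q] {H : Finset (L × R)} {e : Finset W}
    (he : e ∈ templateEdges ι H) : #e = 3 := by
  simp only [templateEdges, mem_union, mem_image, mem_univ, true_and] at he
  rcases he with ⟨⟨ℓ, r⟩, -, rfl⟩ | ⟨q, rfl⟩ <;> simp [linkEdge, padEdge]

lemma card_templateEdges_le [Fintype Q] (H : Finset (L × R)) :
    #(templateEdges ι H) ≤ #H + Fintype.card Q :=
  (card_union_le _ _).trans (add_le_add card_image_le card_image_le)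

section Matching

variable (ι) [Fintype L] [Fintype Q] {D : Finset L} (f : {ℓ // ℓ ∉ D} ≃ R)

def matchingEdges : Finset (Finset W) :=
  univ.image (fun ℓ => linkEdge ι (ℓ.1, f ℓ)) ∪ univ.image (padEdge ι)

variable {ι f}

lemma mem_matchingEdges {e : Finset W} :
    e ∈ matchingEdges ι f ↔ (∃ ℓ, linkEdge ι (ℓ.1, f ℓ) = e) ∨ ∃ q, padEdge ι q = e := by
  simp [matchingEdges]

lemma matchingEdges_subset_templateEdges {H : Finset (L × R)} (hf : ∀ ℓ, (ℓ.1, f ℓ) ∈ H) :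
    matchingEdges ι f ⊆ templateEdges ι H := by
  intro e he
  rcases mem_matchingEdges.1 he with ⟨ℓ, rfl⟩ | ⟨q, rfl⟩
  · exact mem_union_left _ (mem_image_of_mem _ (hf ℓ))
  · exact mem_union_right _ (mem_image_of_mem _ (mem_univ q))

lemma subset_compl_of_mem_matchingEdges [Fintype W] {e : Finset W} (he : e ∈ matchingEdges ι f) :
    e ⊆ (D.map (leftEmbedding ι))ᶜ := by
  intro v hv
  obtain ⟨w, rfl⟩ := ι.surjective v
  simp only [mem_compl, mem_map, leftEmbedding_apply, ι.apply_eq_iff_eq]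
  rintro ⟨ℓ, hℓD, rfl⟩
  rcases mem_matchingEdges.1 he with ⟨ℓ', rfl⟩ | ⟨q, rfl⟩
  · obtain rfl : ℓ = ℓ' := by simpa using hv
    exact ℓ'.2 hℓD
  · simp at hv

lemma existsUnique_mem_matchingEdges {v : W} (hv : v ∉ D.map (leftEmbedding ι)) :
    ∃! e, e ∈ matchingEdges ι f ∧ v ∈ e := by
  obtain ⟨w, rfl⟩ := ι.surjective v
  have hlink (ℓ) : linkEdge ι (ℓ.1, f ℓ) ∈ matchingEdges ι f := mem_matchingEdges.2 (.inl ⟨ℓ, rfl⟩)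
  have hpad (q) : padEdge ι q ∈ matchingEdges ι f := mem_matchingEdges.2 (.inr ⟨q, rfl⟩)
  rcases w with (ℓ | ⟨r, i⟩) | ⟨q, i⟩
  · have hℓ : ℓ ∉ D := fun h => hv (mem_map_of_mem _ h)
    refine ⟨_, ⟨hlink ⟨ℓ, hℓ⟩, by simp⟩, fun e ⟨he, hve⟩ => ?_⟩
    rcases mem_matchingEdges.1 he with ⟨ℓ', rfl⟩ | ⟨q, rfl⟩
    · obtain rfl : ℓ = ℓ' := by simpa using hve
      rfl
    · simp at hve
  · refine ⟨_, ⟨hlink (f.symm r), by simp⟩, fun e ⟨he, hve⟩ => ?_⟩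
    rcases mem_matchingEdges.1 he with ⟨ℓ', rfl⟩ | ⟨q, rfl⟩
    · obtain rfl : r = f ℓ' := by simpa using hve
      simp
    · simp at hve
  · refine ⟨_, ⟨hpad q, by simp⟩, fun e ⟨he, hve⟩ => ?_⟩
    rcases mem_matchingEdges.1 he with ⟨ℓ', rfl⟩ | ⟨q', rfl⟩
    · simp at hve
    · obtain rfl : q = q' := by simpa using hve
      rfl

end Matching

theorem isResilientTemplate_templateEdges [Fintype L] [Fintype Q] [Fintype W]
    {H : Finset (L × R)} {Z : Finset L} {k : ℕ}
    (hH : ∀ D ⊆ Z, #D = k → ∃ f : {ℓ // ℓ ∉ D} ≃ R, ∀ ℓ, (ℓ.1, f ℓ) ∈ H) :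
    IsResilientTemplate (templateEdges ι H) (Z.map (leftEmbedding ι)) k := by
  intro Z' hZ' hk
  obtain ⟨D, hDZ, rfl⟩ := subset_map_iff.1 hZ'
  obtain ⟨f, hf⟩ := hH D hDZ (by rwa [card_map] at hk)
  have hsub : matchingEdges ι f ⊆ templateEdges ι H := matchingEdges_subset_templateEdges hf
  exact ⟨.ofExistsUnique (matchingEdges ι f) (fun e he => subset_compl_of_mem_matchingEdges he)
    (fun v hv => existsUnique_mem_matchingEdges (mem_compl.1 hv))
    (fun h => by simpa using card_templateEdges_of_mem (hsub h)), hsub⟩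

end Template

namespace RandomBipartite

variable {n : ℕ}

/-- `ω.1 (ℓ, k)` is the `k`-th neighbour picked by `ℓ ∈ L = Z ⊕ X`, and `ω.2 (r, k)` is the `k`-th
neighbour in `X` picked by `r ∈ R`, where `Z = Fin (2 * n)`, `X = Fin n` and `R = Fin (2 * n)`. -/
abbrev Sample (n : ℕ) : Type :=
  ((Fin (2 * n) ⊕ Fin n) × Fin 33 → Fin (2 * n)) × (Fin (2 * n) × Fin 10 → Fin n)

def edges (ω : Sample n) : Finset ((Fin (2 * n) ⊕ Fin n) × Fin (2 * n)) :=
  univ.image (fun p => (p.1, ω.1 p)) ∪ univ.image (fun q => (.inr (ω.2 q), q.1))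

def neighbors (ω : Sample n) (S : Finset (Fin (2 * n) ⊕ Fin n)) : Finset (Fin (2 * n)) :=
  {r | ∃ ℓ ∈ S, (ℓ, r) ∈ edges ω}

def IsGood (ω : Sample n) : Prop :=
  ∀ S : Finset (Fin (2 * n) ⊕ Fin n), #S.toLeft ≤ n → #S ≤ #(neighbors ω S)

lemma card_edges_le (ω : Sample n) : #(edges ω) ≤ 119 * n := by
  refine (card_union_le _ _).trans ((add_le_add card_image_le card_image_le).trans_eq ?_)
  simp only [card_univ, Fintype.card_prod, Fintype.card_sum, Fintype.card_fin]
  ring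

lemma card_templateEdges_edges_le {W : Type*} [DecidableEq W]
    (ι : ((Fin (2 * n) ⊕ Fin n) ⊕ Fin (2 * n) × Fin 2) ⊕ Fin n × Fin 3 ≃ W) (ω : Sample n) :
    #(templateEdges ι (edges ω)) ≤ 120 * n := by
  have htemplate := card_templateEdges_le (ι := ι) (edges ω)
  rw [Fintype.card_fin] at htemplate
  linarith [card_edges_le ω]

lemma exists_equiv_of_isGood {ω : Sample n} (hω : IsGood ω) {D : Finset (Fin (2 * n) ⊕ Fin n)}
    (hD : D ⊆ univ.map .inl) (hDcard : #D = n) :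
    ∃ f : {ℓ // ℓ ∉ D} ≃ Fin (2 * n), ∀ ℓ, (ℓ.1, f ℓ) ∈ edges ω := by
  obtain ⟨D₀, -, rfl⟩ := subset_map_iff.1 hD
  rw [card_map] at hDcard
  refine exists_equiv_forall_rel_of_hall (fun (ℓ : {ℓ // ℓ ∉ D₀.map .inl}) r => (ℓ.1, r) ∈ edges ω)
    ?_ fun A => ?_
  · rw [Fintype.card_subtype_compl, Fintype.card_coe, card_map, hDcard]
    simp
  · have hleft : (A.map (.subtype _)).toLeft ⊆ D₀ᶜ := fun ℓ hℓ => by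
      simp only [mem_toLeft, mem_map, Function.Embedding.coe_subtype] at hℓ
      obtain ⟨⟨_, hℓD⟩, -, rfl⟩ := hℓ
      simpa using hℓD
    have hA := hω (A.map (.subtype _))
      ((card_le_card hleft).trans (by rw [card_compl, Fintype.card_fin, hDcard]; omega))
    simpa [neighbors] using hA

def concentratedEvent (B : Finset (Fin (2 * n))) (W : Finset (Fin n)) : Finset (Sample n) :=
  (univ : Finset _) ×ˢ ({g | ∀ p ∈ B ×ˢ univ, g p ∈ W} : Finset (Fin (2 * n) × Fin 10 → Fin n))

def avoidingEvent (A : Finset (Fin (2 * n) ⊕ Fin n)) (B : Finset (Fin (2 * n))) :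
    Finset (Sample n) :=
  ({f | ∀ p ∈ A ×ˢ univ, f p ∈ Bᶜ} : Finset ((Fin (2 * n) ⊕ Fin n) × Fin 33 → Fin (2 * n))) ×ˢ
    (univ : Finset _)

variable (n) in
def concentratedPicks (c : ℕ) : Finset (Sample n) :=
  (powersetCard (c + 1) univ).biUnion fun B => (powersetCard c univ).biUnion (concentratedEvent B)

variable (n) in
def avoidingPicks (c : ℕ) : Finset (Sample n) :=
  (powersetCard (c + 1) univ).biUnion fun A =>
    (powersetCard (2 * n - c) univ).biUnion (avoidingEvent A)

lemma card_concentratedEvent_mul (B : Finset (Fin (2 * n))) (W : Finset (Fin n)) :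
    #(concentratedEvent B W) * n ^ (#B * 10) = #W ^ (#B * 10) * Fintype.card (Sample n) := by
  have hcount := card_filter_forall_mem_mul_pow (B ×ˢ (univ : Finset (Fin 10))) W
  rw [← Fintype.card_fun, card_product, card_univ, Fintype.card_fin, Fintype.card_fin] at hcount
  rw [concentratedEvent, card_product, card_univ, mul_assoc, hcount, Fintype.card_prod]
  ring

lemma card_avoidingEvent_mul (A : Finset (Fin (2 * n) ⊕ Fin n)) (B : Finset (Fin (2 * n))) :
    #(avoidingEvent A B) * (2 * n) ^ (#A * 33)
      = (2 * n - #B) ^ (#A * 33) * Fintype.card (Sample n) := by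
  have hcount := card_filter_forall_mem_mul_pow (A ×ˢ (univ : Finset (Fin 33))) Bᶜ
  simp only [card_product, card_univ, Fintype.card_fin, card_compl] at hcount
  rw [avoidingEvent, card_product, card_univ, Fintype.card_prod,
    Fintype.card_fun (α := (_ ⊕ _) × _), Fintype.card_fin, mul_right_comm, hcount]
  ring

section Missed

variable {ω : Sample n} {S : Finset (Fin (2 * n) ⊕ Fin n)} {B : Finset (Fin (2 * n))}

lemma exists_missed_of_not_isGood (h : ¬ IsGood ω) :
    ∃ S B, #S.toLeft ≤ n ∧ 2 * n < #S + #B ∧ ∀ ℓ ∈ S, ∀ r ∈ B, (ℓ, r) ∉ edges ω := by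
  simp only [IsGood, not_forall, not_le, exists_prop] at h
  obtain ⟨S, hS, hlt⟩ := h
  refine ⟨S, (neighbors ω S)ᶜ, hS, ?_, fun ℓ hℓ r hr hedge => mem_compl.1 hr ?_⟩
  · have := card_le_univ (neighbors ω S)
    rw [Fintype.card_fin] at this
    rw [card_compl, Fintype.card_fin]
    omega
  · simp only [neighbors, mem_filter, mem_univ, true_and]
    exact ⟨ℓ, hℓ, hedge⟩

lemma mem_concentratedPicks_of_missed (hS : #S.toLeft ≤ n) (hSB : 2 * n < #S + #B)
    (hB : 2 * #B ≤ n) (hmiss : ∀ ℓ ∈ S, ∀ r ∈ B, (ℓ, r) ∉ edges ω) :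
    ω ∈ concentratedPicks n (#B - 1) := by
  have hright : #S.toRight ≤ n := (card_le_univ _).trans_eq (by simp)
  have hsplit := card_toLeft_add_card_toRight (u := S)
  have hpicks : ∀ p ∈ B ×ˢ univ, ω.2 p ∈ S.toRightᶜ := by
    rintro ⟨r, k⟩ hp
    rw [mem_compl]
    intro hmem
    exact hmiss _ (mem_toRight.1 hmem) r (mem_product.1 hp).1
      (mem_union_right _ (mem_image_of_mem _ (mem_univ (r, k))))
  obtain ⟨W, hW, -, hWcard⟩ := exists_subsuperset_card_eq (subset_univ S.toRightᶜ)
    (n := #B - 1) (by rw [card_compl, Fintype.card_fin]; omega)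
    (by rw [card_univ, Fintype.card_fin]; omega)
  exact mem_biUnion.2 ⟨B, mem_powersetCard.2 ⟨subset_univ _, by omega⟩,
    mem_biUnion.2 ⟨W, mem_powersetCard.2 ⟨subset_univ _, hWcard⟩,
      mem_product.2 ⟨mem_univ _, mem_filter.2 ⟨mem_univ _, fun p hp => hW (hpicks p hp)⟩⟩⟩⟩

lemma mem_avoidingPicks_of_missed (hSB : 2 * n < #S + #B)
    (hmiss : ∀ ℓ ∈ S, ∀ r ∈ B, (ℓ, r) ∉ edges ω) :
    ω ∈ avoidingPicks n (2 * n - #B) := by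
  have hBle : #B ≤ 2 * n := (card_le_univ _).trans_eq (by simp)
  obtain ⟨A, hAS, hAcard⟩ := exists_subset_card_eq (s := S) (n := 2 * n - #B + 1) (by omega)
  have hpicks : ∀ p ∈ A ×ˢ (univ : Finset (Fin 33)), ω.1 p ∈ Bᶜ := by
    rintro ⟨ℓ, k⟩ hp
    rw [mem_compl]
    intro hmem
    exact hmiss ℓ (hAS (mem_product.1 hp).1) _ hmem
      (mem_union_left _ (mem_image_of_mem _ (mem_univ (ℓ, k))))
  exact mem_biUnion.2 ⟨A, mem_powersetCard.2 ⟨subset_univ _, hAcard⟩,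
    mem_biUnion.2 ⟨B, mem_powersetCard.2 ⟨subset_univ _, by omega⟩,
      mem_product.2 ⟨mem_filter.2 ⟨mem_univ _, hpicks⟩, mem_univ _⟩⟩⟩

end Missed

lemma mem_biUnion_of_not_isGood {ω : Sample n} (h : ¬ IsGood ω) :
    ω ∈ (range (n / 2)).biUnion (concentratedPicks n) ∪
      (range ((3 * n + 1) / 2)).biUnion (avoidingPicks n) := by
  obtain ⟨S, B, hS, hSB, hmiss⟩ := exists_missed_of_not_isGood h
  rcases le_or_gt (2 * #B) n with hB | hB
  · have hc : #B - 1 ∈ range (n / 2) := by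
      have hsplit := card_toLeft_add_card_toRight (u := S)
      have hright : #S.toRight ≤ n := (card_le_univ _).trans_eq (by simp)
      rw [mem_range]; omega
    exact mem_union_left _ (mem_biUnion.2 ⟨_, hc, mem_concentratedPicks_of_missed hS hSB hB hmiss⟩)
  · have hc : 2 * n - #B ∈ range ((3 * n + 1) / 2) := by
      have hBle : #B ≤ 2 * n := (card_le_univ _).trans_eq (by simp)
      rw [mem_range]; omega
    exact mem_union_right _ (mem_biUnion.2 ⟨_, hc, mem_avoidingPicks_of_missed hSB hmiss⟩)


lemma four_pow_mul_card_concentratedPicks_le {c : ℕ} (h : 2 * (c + 1) ≤ n) :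
    4 ^ (c + 1) * #(concentratedPicks n c) ≤ Fintype.card (Sample n) := by
  refine Nat.mul_le_of_mul_le_mul_of_mul_le (pow_pos (by omega : 0 < n) ((c + 1) * 10)) ?_
    (four_pow_mul_choose_mul_choose_le_of_two_mul_le h)
  refine (mul_card_biUnion_powersetCard_le (x := c ^ ((c + 1) * 10) * Fintype.card (Sample n))
    _ fun B W hB hW => ?_).trans_eq (by simp [mul_assoc])
  rw [mul_comm, ← hB, ← hW, card_concentratedEvent_mul]

lemma four_pow_mul_card_avoidingPicks_le {c : ℕ} (h : 2 * c < 3 * n) :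
    4 ^ (c + 1) * #(avoidingPicks n c) ≤ Fintype.card (Sample n) := by
  refine Nat.mul_le_of_mul_le_mul_of_mul_le (pow_pos (by omega : 0 < 2 * n) ((c + 1) * 33)) ?_
    (four_pow_mul_choose_mul_choose_le_of_two_mul_lt h)
  refine (mul_card_biUnion_powersetCard_le (x := c ^ ((c + 1) * 33) * Fintype.card (Sample n))
    _ fun A B hA hB => ?_).trans_eq ?_
  · rw [mul_comm, ← hA, card_avoidingEvent_mul, hB, Nat.sub_sub_self (by omega)]
  · rw [Fintype.card_sum, Fintype.card_fin, Fintype.card_fin, Nat.choose_symm (by omega),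
      show 2 * n + n = 3 * n by ring]
    ring

theorem exists_isGood (hn : 1 ≤ n) : ∃ ω : Sample n, IsGood ω := by
  by_contra! hbad
  have hcover : (univ : Finset (Sample n)) ⊆ (range (n / 2)).biUnion (concentratedPicks n) ∪
      (range ((3 * n + 1) / 2)).biUnion (avoidingPicks n) :=
    fun ω _ => mem_biUnion_of_not_isGood (hbad ω)
  have hconc : 3 * ∑ c ∈ range (n / 2), #(concentratedPicks n c) ≤ Fintype.card (Sample n) :=
    three_mul_sum_le_of_four_pow_mul_le fun _ hc =>
      four_pow_mul_card_concentratedPicks_le (by omega)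
  have havoid : 3 * ∑ c ∈ range ((3 * n + 1) / 2), #(avoidingPicks n c) ≤ Fintype.card (Sample n) :=
    three_mul_sum_le_of_four_pow_mul_le fun _ hc => four_pow_mul_card_avoidingPicks_le (by omega)
  have hunion := (card_le_card hcover).trans
    ((card_union_le _ _).trans (add_le_add card_biUnion_le card_biUnion_le))
  have : NeZero n := ⟨by omega⟩
  have hpos : 0 < Fintype.card (Sample n) := Fintype.card_pos
  rw [card_univ] at hunion
  omega

end RandomBipartite

/-- Existence of resilient templates: a 3-uniform hypergraph on `10n` vertices with
`120n` hyperedges and a flexible set `Z` of `2n` vertices such that after the removal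
of any `n` vertices of `Z`, the remaining `9n` vertices are perfectly matchable. -/
theorem resilient_template_exists :
    ∃ n₀ : ℕ, ∀ n : ℕ, n₀ ≤ n →
    ∃ E : Finset (Finset (Fin (10 * n))), ∃ Z : Finset (Fin (10 * n)),
      (∀ e ∈ E, e.card = 3) ∧ E.card = 120 * n ∧ Z.card = 2 * n ∧
      ∀ Z' ⊆ Z, Z'.card = n →
        ∃ M ⊆ E, M.card = 3 * n ∧
          (∀ e ∈ M, ∀ v ∈ e, v ∉ Z') ∧
          (∀ e ∈ M, ∀ f ∈ M, e ≠ f → Disjoint e f) ∧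
          (∀ v : Fin (10 * n), v ∉ Z' → ∃ e ∈ M, v ∈ e) := by
  refine ⟨1, fun n hn => ?_⟩
  obtain ⟨ω, hω⟩ := RandomBipartite.exists_isGood hn
  let ι : ((Fin (2 * n) ⊕ Fin n) ⊕ Fin (2 * n) × Fin 2) ⊕ Fin n × Fin 3 ≃ Fin (10 * n) :=
    Fintype.equivFinOfCardEq <| by
      simp only [Fintype.card_sum, Fintype.card_prod, Fintype.card_fin]; ring
  have hres := isResilientTemplate_templateEdges (ι := ι) (Z := univ.map .inl) (k := n)
    fun _ hD hDcard => RandomBipartite.exists_equiv_of_isGood hω hD hDcard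
  obtain ⟨E, hE₀E, hE, hEcard⟩ := exists_uniform_superset_card_eq
    (fun _ he => card_templateEdges_of_mem he) (RandomBipartite.card_templateEdges_edges_le ι ω)
    (by simpa using Nat.le_choose_ten_mul_three hn)
  refine ⟨E, (univ.map .inl).map (leftEmbedding ι), hE, hEcard, by simp, fun Z' hZ' hZ'card => ?_⟩
  obtain ⟨P, hPE⟩ := hres.mono hE₀E Z' hZ' hZ'card
  have hparts := P.card_parts_mul_eq_card fun p hp => hE p (hPE hp)
  rw [card_compl, Fintype.card_fin, hZ'card] at hparts
  exact ⟨P.parts, hPE, by omega, fun e he v hv => mem_compl.1 (P.le he hv),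
    fun e he f hf hef => P.disjoint he hf hef, fun v hv => P.exists_mem (mem_compl.2 hv)⟩
end

section
/- For every c ∈ (0,1/2) and every β > 0 there exist ε > 0 and n₀ such that the following holds for all n ≥ n₀. Let G be an (ε,2)-quasirandom graph on n vertices whose density γ = d(G) satisfies c ≤ γ ≤ 1 − c. Let X, Y, Z be sets of ordered pairs of distinct vertices of G, each of size at least cn, such that within each of X, Y, Z the pairs are pairwise disjoint (no vertex appears in two pairs of the same set). Then the number of triples ((x₁,x₂), (y₁,y₂), (z₁,z₂)) ∈ X × Y × Z such that {x₁,y₂}, {y₁,z₂} and {z₁,x₂} are all edges of G is at least γ³·|X|·|Y|·|Z|/8 − β·n³. -/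
open scoped Classical
set_option maxHeartbeats 2000000
noncomputable section

namespace LinkedAux

variable {n : ℕ}

def degR (G : SimpleGraph (Fin n)) (u : Fin n) : ℝ :=
  ((Finset.univ.filter (fun v => G.Adj u v)).card : ℝ)

def codR (G : SimpleGraph (Fin n)) (u v : Fin n) : ℝ :=
  ((Finset.univ.filter (fun w => G.Adj u w ∧ G.Adj v w)).card : ℝ)

def gY (G : SimpleGraph (Fin n)) (Y : Finset (Fin n × Fin n)) (a b : Fin n) : ℝ :=
  ((Y.filter (fun y => G.Adj a y.2 ∧ G.Adj b y.1)).card : ℝ)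

def hZ (G : SimpleGraph (Fin n)) (Z : Finset (Fin n × Fin n)) (a : Fin n) : ℝ :=
  ((Z.filter (fun z => G.Adj a z.1)).card : ℝ)

lemma card_filter_real {α : Type*} (s : Finset α) (p : α → Prop) [DecidablePred p] :
    ((s.filter p).card : ℝ) = ∑ x ∈ s, (if p x then (1:ℝ) else 0) := by simp

lemma degR_nonneg (G : SimpleGraph (Fin n)) (u : Fin n) : 0 ≤ degR G u := by
  unfold degR; positivity

lemma degR_le (G : SimpleGraph (Fin n)) (u : Fin n) : degR G u ≤ n := by
  unfold degR
  exact_mod_cast (Finset.card_filter_le _ _).trans (by simp)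

lemma codR_nonneg (G : SimpleGraph (Fin n)) (u v : Fin n) : 0 ≤ codR G u v := by
  unfold codR; positivity

lemma codR_self (G : SimpleGraph (Fin n)) (u : Fin n) : codR G u u = degR G u := by
  unfold codR degR
  congr 1
  exact_mod_cast congrArg Finset.card (by apply Finset.filter_congr; intro x _; simp)

lemma sum_ind_one (G : SimpleGraph (Fin n)) (u : Fin n) :
    ∑ a : Fin n, (if G.Adj a u then (1:ℝ) else 0) = degR G u := by
  unfold degR
  rw [card_filter_real]
  apply Finset.sum_congr rfl
  intro a _
  simp [G.adj_comm]

lemma sum_ind_two (G : SimpleGraph (Fin n)) (u v : Fin n) :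
    ∑ a : Fin n, (if G.Adj a u then (1:ℝ) else 0) * (if G.Adj a v then (1:ℝ) else 0)
      = codR G u v := by
  unfold codR
  rw [show (Finset.univ.filter fun w => G.Adj u w ∧ G.Adj v w)
      = Finset.univ.filter (fun a => G.Adj a u ∧ G.Adj a v) from
    Finset.filter_congr fun x _ => by rw [G.adj_comm u x, G.adj_comm v x]]
  rw [card_filter_real]
  apply Finset.sum_congr rfl
  intro a _
  by_cases h1 : G.Adj a u <;> by_cases h2 : G.Adj a v <;> simp [h1, h2]

lemma sum_comm3 {α β δ : Type*} (A : Finset α) (B : Finset β) (s : Finset δ)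
    (f : α → β → δ → ℝ) :
    ∑ a ∈ A, ∑ b ∈ B, ∑ y ∈ s, f a b y = ∑ y ∈ s, ∑ a ∈ A, ∑ b ∈ B, f a b y := by
  calc ∑ a ∈ A, ∑ b ∈ B, ∑ y ∈ s, f a b y
      = ∑ a ∈ A, ∑ y ∈ s, ∑ b ∈ B, f a b y :=
        Finset.sum_congr rfl fun a _ => Finset.sum_comm
    _ = ∑ y ∈ s, ∑ a ∈ A, ∑ b ∈ B, f a b y := Finset.sum_comm

lemma gY_eq_sum (G : SimpleGraph (Fin n)) (Y : Finset (Fin n × Fin n)) (a b : Fin n) :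
    gY G Y a b = ∑ y ∈ Y, (if G.Adj a y.2 then (1:ℝ) else 0) * (if G.Adj b y.1 then (1:ℝ) else 0) := by
  unfold gY
  rw [card_filter_real]
  apply Finset.sum_congr rfl
  intro y _
  by_cases h1 : G.Adj a y.2 <;> by_cases h2 : G.Adj b y.1 <;> simp [h1, h2]

lemma hZ_eq_sum (G : SimpleGraph (Fin n)) (Z : Finset (Fin n × Fin n)) (a : Fin n) :
    hZ G Z a = ∑ z ∈ Z, (if G.Adj a z.1 then (1:ℝ) else 0) := by
  unfold hZ
  rw [card_filter_real]

lemma gY_nonneg (G : SimpleGraph (Fin n)) (Y : Finset (Fin n × Fin n)) (a b : Fin n) :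
    0 ≤ gY G Y a b := by unfold gY; positivity

lemma sum_gY (G : SimpleGraph (Fin n)) (Y : Finset (Fin n × Fin n)) :
    ∑ a : Fin n, ∑ b : Fin n, gY G Y a b = ∑ y ∈ Y, degR G y.2 * degR G y.1 := by
  simp only [gY_eq_sum]
  rw [sum_comm3]
  apply Finset.sum_congr rfl
  intro y _
  have h1 : ∀ a : Fin n, ∑ b : Fin n, (if G.Adj a y.2 then (1:ℝ) else 0) * (if G.Adj b y.1 then (1:ℝ) else 0)
      = (if G.Adj a y.2 then (1:ℝ) else 0) * degR G y.1 := by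
    intro a
    rw [← Finset.mul_sum, sum_ind_one]
  rw [Finset.sum_congr rfl (fun a _ => h1 a), ← Finset.sum_mul, sum_ind_one]

lemma sum_gY_sq (G : SimpleGraph (Fin n)) (Y : Finset (Fin n × Fin n)) :
    ∑ a : Fin n, ∑ b : Fin n, (gY G Y a b)^2
      = ∑ y ∈ Y, ∑ y' ∈ Y, codR G y.2 y'.2 * codR G y.1 y'.1 := by
  have step1 : ∀ a b : Fin n, (gY G Y a b)^2
      = ∑ p ∈ Y ×ˢ Y,
          ((if G.Adj a p.1.2 then (1:ℝ) else 0) * (if G.Adj a p.2.2 then (1:ℝ) else 0)) *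
          ((if G.Adj b p.1.1 then (1:ℝ) else 0) * (if G.Adj b p.2.1 then (1:ℝ) else 0)) := by
    intro a b
    rw [gY_eq_sum, sq, Finset.sum_mul_sum, Finset.sum_product]
    exact Finset.sum_congr rfl fun y _ => Finset.sum_congr rfl fun y' _ => by ring
  calc ∑ a : Fin n, ∑ b : Fin n, (gY G Y a b)^2
      = ∑ p ∈ Y ×ˢ Y, ∑ a : Fin n, ∑ b : Fin n,
          ((if G.Adj a p.1.2 then (1:ℝ) else 0) * (if G.Adj a p.2.2 then (1:ℝ) else 0)) *
          ((if G.Adj b p.1.1 then (1:ℝ) else 0) * (if G.Adj b p.2.1 then (1:ℝ) else 0)) := by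
        simp only [step1]
        rw [sum_comm3]
    _ = ∑ p ∈ Y ×ˢ Y, codR G p.1.2 p.2.2 * codR G p.1.1 p.2.1 := by
        apply Finset.sum_congr rfl
        intro p _
        rw [← Finset.sum_mul_sum, sum_ind_two, sum_ind_two]
    _ = ∑ y ∈ Y, ∑ y' ∈ Y, codR G y.2 y'.2 * codR G y.1 y'.1 := by
        rw [Finset.sum_product]

lemma sum_hZ (G : SimpleGraph (Fin n)) (Z : Finset (Fin n × Fin n)) :
    ∑ a : Fin n, hZ G Z a = ∑ z ∈ Z, degR G z.1 := by
  simp only [hZ_eq_sum]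
  rw [Finset.sum_comm]
  exact Finset.sum_congr rfl fun z _ => sum_ind_one G z.1

lemma sum_hZ_sq (G : SimpleGraph (Fin n)) (Z : Finset (Fin n × Fin n)) :
    ∑ a : Fin n, (hZ G Z a)^2 = ∑ z ∈ Z, ∑ z' ∈ Z, codR G z.1 z'.1 := by
  have step1 : ∀ a : Fin n, (hZ G Z a)^2
      = ∑ p ∈ Z ×ˢ Z, (if G.Adj a p.1.1 then (1:ℝ) else 0) * (if G.Adj a p.2.1 then (1:ℝ) else 0) := by
    intro a
    rw [hZ_eq_sum, sq, Finset.sum_mul_sum, Finset.sum_product]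
  calc ∑ a : Fin n, (hZ G Z a)^2
      = ∑ p ∈ Z ×ˢ Z, ∑ a : Fin n,
          (if G.Adj a p.1.1 then (1:ℝ) else 0) * (if G.Adj a p.2.1 then (1:ℝ) else 0) := by
        simp only [step1]; rw [Finset.sum_comm]
    _ = ∑ p ∈ Z ×ˢ Z, codR G p.1.1 p.2.1 := Finset.sum_congr rfl fun p _ => sum_ind_two G _ _
    _ = ∑ z ∈ Z, ∑ z' ∈ Z, codR G z.1 z'.1 := Finset.sum_product _ _ _

lemma sum_sub_sq {α : Type*} (s : Finset α) (u : α → ℝ) (m : ℝ) :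
    ∑ i ∈ s, (u i - m)^2
      = (∑ i ∈ s, (u i)^2) - 2*m*(∑ i ∈ s, u i) + s.card * m^2 := by
  rw [Finset.sum_congr rfl (fun i _ => sub_sq (u i) m), Finset.sum_add_distrib,
    Finset.sum_sub_distrib, Finset.sum_const, nsmul_eq_mul]
  rw [show ∀ (x : α → ℝ), ∑ i ∈ s, 2 * x i * m = 2*m*∑ i ∈ s, x i from fun x => by
    rw [Finset.mul_sum]; exact Finset.sum_congr rfl fun i _ => by ring]

lemma abs_sum_le_sqrt {α : Type*} (s : Finset α) (u : α → ℝ) :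
    ∑ i ∈ s, |u i| ≤ Real.sqrt (s.card * ∑ i ∈ s, (u i)^2) := by
  have h := sq_sum_le_card_mul_sum_sq (s := s) (f := fun i => |u i|)
  rw [show (∑ i ∈ s, |u i|) = Real.sqrt ((∑ i ∈ s, |u i|)^2) from
    (Real.sqrt_sq (by positivity)).symm]
  apply Real.sqrt_le_sqrt
  simpa [sq_abs] using h

end LinkedAux

open LinkedAux

/-- Counting linked triples of pairs in a quasirandom graph. -/
theorem linked_pairs_count :
    ∀ c : ℝ, 0 < c → c < 1/2 → ∀ β : ℝ, 0 < β →
    ∃ ε : ℝ, 0 < ε ∧ ∃ n₀ : ℕ, ∀ n : ℕ, n₀ ≤ n →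
    ∀ G : SimpleGraph (Fin n), QuasiRandom G ε 2 →
    c ≤ dens G → dens G ≤ 1 - c →
    ∀ X Y Z : Finset (Fin n × Fin n),
    (∀ p ∈ X, p.1 ≠ p.2) → (∀ p ∈ Y, p.1 ≠ p.2) → (∀ p ∈ Z, p.1 ≠ p.2) →
    (∀ p ∈ X, ∀ q ∈ X, p ≠ q →
      ({p.1, p.2} : Finset (Fin n)) ∩ {q.1, q.2} = ∅) →
    (∀ p ∈ Y, ∀ q ∈ Y, p ≠ q →
      ({p.1, p.2} : Finset (Fin n)) ∩ {q.1, q.2} = ∅) →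
    (∀ p ∈ Z, ∀ q ∈ Z, p ≠ q →
      ({p.1, p.2} : Finset (Fin n)) ∩ {q.1, q.2} = ∅) →
    c * n ≤ (X.card : ℝ) → c * n ≤ (Y.card : ℝ) → c * n ≤ (Z.card : ℝ) →
    dens G ^ 3 * X.card * Y.card * Z.card / 8 - β * (n : ℝ) ^ 3 ≤
      (((X ×ˢ (Y ×ˢ Z)).filter (fun w =>
        G.Adj w.1.1 w.2.1.2 ∧ G.Adj w.2.1.1 w.2.2.2 ∧ G.Adj w.2.2.1 w.1.2)).card : ℝ) := by
  intro c hc hc2 β hβ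
  refine ⟨min (c/2) (β^2/96), lt_min (by linarith) (by positivity), ⌈(16:ℝ)/β^2⌉₊ + 1, ?_⟩
  intro n hn G hq hγl hγu X Y Z hX12 hY12 hZ12 hXdis hYdis hZdis hXc hYc hZc
  clear hX12 hY12 hZ12 hXc hYc hZc
  set ε : ℝ := min (c/2) (β^2/96) with hεdef
  set γ : ℝ := dens G with hγdef
  set nR : ℝ := (n : ℝ) with hnRdef
  set SX : ℝ := (X.card : ℝ) with hSXdef
  set SY : ℝ := (Y.card : ℝ) with hSYdef
  set SZ : ℝ := (Z.card : ℝ) with hSZdef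
  have hε0 : 0 ≤ ε := le_min (by linarith) (by positivity)
  have hε1 : ε ≤ 1 := le_trans (min_le_left _ _) (by linarith)
  have hε96 : ε ≤ β^2/96 := min_le_right _ _
  have hγ0 : 0 < γ := lt_of_lt_of_le hc hγl
  have hγ1 : γ ≤ 1 := by linarith
  have hn0 : 0 < n := lt_of_lt_of_le (Nat.succ_pos _) hn
  have hnR0 : (0:ℝ) ≤ nR := Nat.cast_nonneg n
  have hnRb : 16/β^2 ≤ nR := by
    have h1 : ((16:ℝ)/β^2) ≤ (⌈(16:ℝ)/β^2⌉₊ : ℝ) := Nat.le_ceil _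
    have h2 : ((⌈(16:ℝ)/β^2⌉₊ : ℕ) : ℝ) ≤ nR := by
      rw [hnRdef]
      exact_mod_cast le_trans (Nat.le_succ _) hn
    linarith
  -- degree and codegree bounds
  have hdeg : ∀ u : Fin n, (1-ε)*γ*nR ≤ degR G u ∧ degR G u ≤ (1+ε)*γ*nR := by
    intro u
    have h := hq {u} (by simp)
    simp only [Finset.card_singleton, pow_one, Finset.mem_singleton, forall_eq] at h
    constructor
    · simpa [degR] using h.1
    · simpa [degR] using h.2
  have hcod : ∀ u v : Fin n, u ≠ v →
      (1-ε)*γ^2*nR ≤ codR G u v ∧ codR G u v ≤ (1+ε)*γ^2*nR := by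
    intro u v huv
    have hcard : ({u, v} : Finset (Fin n)).card = 2 := by
      rw [Finset.card_insert_of_notMem (by simpa using huv), Finset.card_singleton]
    have h := hq {u, v} (le_of_eq hcard)
    rw [hcard] at h
    simp only [Finset.mem_insert, Finset.mem_singleton, forall_eq_or_imp, forall_eq] at h
    constructor
    · simpa [codR] using h.1
    · simpa [codR] using h.2
  -- distinctness of coordinates
  have hdist : ∀ (W : Finset (Fin n × Fin n)),
      (∀ p ∈ W, ∀ q ∈ W, p ≠ q → ({p.1, p.2} : Finset (Fin n)) ∩ {q.1, q.2} = ∅) →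
      ∀ p ∈ W, ∀ q ∈ W, p ≠ q → p.1 ≠ q.1 ∧ p.1 ≠ q.2 ∧ p.2 ≠ q.1 ∧ p.2 ≠ q.2 := by
    intro W hW p hp q hq hpq
    have h := hW p hp q hq hpq
    refine ⟨fun he => ?_, fun he => ?_, fun he => ?_, fun he => ?_⟩
    · exact Finset.notMem_empty p.1 (h ▸ (by simp [he] : p.1 ∈ ({p.1, p.2} : Finset (Fin n)) ∩ {q.1, q.2}))
    · exact Finset.notMem_empty p.1 (h ▸ (by simp [he] : p.1 ∈ ({p.1, p.2} : Finset (Fin n)) ∩ {q.1, q.2}))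
    · exact Finset.notMem_empty p.2 (h ▸ (by simp [he] : p.2 ∈ ({p.1, p.2} : Finset (Fin n)) ∩ {q.1, q.2}))
    · exact Finset.notMem_empty p.2 (h ▸ (by simp [he] : p.2 ∈ ({p.1, p.2} : Finset (Fin n)) ∩ {q.1, q.2}))
  have hcardle : ∀ (W : Finset (Fin n × Fin n)),
      (∀ p ∈ W, ∀ q ∈ W, p ≠ q → p.1 ≠ q.1) → (W.card : ℝ) ≤ nR := by
    intro W hW
    have h : W.card ≤ Fintype.card (Fin n) := by
      rw [← Finset.card_univ]
      apply Finset.card_le_card_of_injOn (fun p => p.1) (fun _ _ => Finset.mem_univ _)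
      intro p hp q hq he
      by_contra hne
      exact hW p (Finset.mem_coe.mp hp) q (Finset.mem_coe.mp hq) hne he
    rw [Fintype.card_fin] at h
    rw [hnRdef]
    exact_mod_cast h
  have hSXle : SX ≤ nR := hcardle X (fun p hp q hq hne => (hdist X hXdis p hp q hq hne).1)
  have hSYle : SY ≤ nR := hcardle Y (fun p hp q hq hne => (hdist Y hYdis p hp q hq hne).1)
  have hSZle : SZ ≤ nR := hcardle Z (fun p hp q hq hne => (hdist Z hZdis p hp q hq hne).1)
  have hSX0 : 0 ≤ SX := Nat.cast_nonneg _
  have hSY0 : 0 ≤ SY := Nat.cast_nonneg _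
  have hSZ0 : 0 ≤ SZ := Nat.cast_nonneg _
  set m2 : ℝ := γ^2 * SY with hm2def
  set m1 : ℝ := γ * SZ with hm1def
  have hm20 : 0 ≤ m2 := by positivity
  have hγsq : γ^2 ≤ 1 := by nlinarith
  have hm2le : m2 ≤ nR := by
    rw [hm2def]
    nlinarith [hγsq, hSY0, hSYle]
  have hγ4le : γ^4 ≤ 1 := by nlinarith [hγsq, sq_nonneg γ]
  have hSYsq : SY^2 ≤ nR^2 := by nlinarith [hSY0, hSYle]
  have hSZsq : SZ^2 ≤ nR^2 := by nlinarith [hSZ0, hSZle]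
  have hg4 : γ^4*SY^2 ≤ nR^2 := by
    have := mul_le_mul hγ4le hSYsq (sq_nonneg SY) zero_le_one
    linarith
  have hg2 : γ^2*SZ^2 ≤ nR^2 := by
    have := mul_le_mul hγsq hSZsq (sq_nonneg SZ) zero_le_one
    linarith
  have hSYnR2 : SY*nR^2 ≤ nR^3 := by nlinarith [hSY0, hSYle, sq_nonneg nR]
  have hSZnR : SZ*nR ≤ nR^2 := by nlinarith [hSZ0, hSZle]
  have hε6 : (0:ℝ) ≤ 6*ε - ε^2 := by nlinarith [hε0, hε1]
  -- sqrt error term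
  set K : ℝ := Real.sqrt (6*ε*nR^4 + nR^3) with hKdef
  have hK0 : 0 ≤ K := Real.sqrt_nonneg _
  have hKle : K ≤ β/2 * nR^2 := by
    rw [hKdef, show β/2*nR^2 = Real.sqrt ((β/2*nR^2)^2) from (Real.sqrt_sq (by positivity)).symm]
    apply Real.sqrt_le_sqrt
    have h16 : (1:ℝ) ≤ β^2/16 * nR := by
      have h := mul_le_mul_of_nonneg_left hnRb (le_of_lt (show (0:ℝ) < β^2/16 by positivity))
      have he : β^2/16 * (16/β^2) = 1 := by field_simp
      linarith [he ▸ h]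
    have h2 : nR^3 ≤ β^2/16 * nR^4 := by nlinarith [pow_nonneg hnR0 3]
    have h3 : 6*ε*nR^4 ≤ β^2/16 * nR^4 := by nlinarith [pow_nonneg hnR0 4]
    have h4 : (β/2*nR^2)^2 = β^2/4*nR^4 := by ring
    have h5 : 0 ≤ β^2 * nR^4 := by positivity
    linarith
  -- variance bound for g
  have hgsum : SY * ((1-ε)*γ*nR)^2 ≤ ∑ a : Fin n, ∑ b : Fin n, gY G Y a b := by
    rw [sum_gY]
    have hterm : ∀ y ∈ Y, ((1-ε)*γ*nR)^2 ≤ degR G y.2 * degR G y.1 := by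
      intro y _
      have h2 := hdeg y.2
      have h1 := hdeg y.1
      have hL : 0 ≤ (1-ε)*γ*nR := by
        apply mul_nonneg (mul_nonneg (by linarith) hγ0.le) hnR0
      have hmm := mul_le_mul h2.1 h1.1 hL (degR_nonneg G y.2)
      calc ((1-ε)*γ*nR)^2 = ((1-ε)*γ*nR) * ((1-ε)*γ*nR) := sq ((1-ε)*γ*nR)
        _ ≤ degR G y.2 * degR G y.1 := hmm
    calc SY * ((1-ε)*γ*nR)^2 = ∑ _y ∈ Y, ((1-ε)*γ*nR)^2 := by
          rw [Finset.sum_const, nsmul_eq_mul]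
      _ ≤ _ := Finset.sum_le_sum hterm
  have hgsq : ∑ a : Fin n, ∑ b : Fin n, (gY G Y a b)^2
      ≤ SY^2 * ((1+ε)*γ^2*nR)^2 + SY * nR^2 := by
    rw [sum_gY_sq]
    have hU2 : (0:ℝ) ≤ (1+ε)*γ^2*nR := by
      apply mul_nonneg (mul_nonneg (by linarith) (sq_nonneg γ)) hnR0
    have hterm : ∀ y ∈ Y, ∀ y' ∈ Y,
        codR G y.2 y'.2 * codR G y.1 y'.1
          ≤ ((1+ε)*γ^2*nR)^2 + (if y = y' then nR^2 else 0) := by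
      intro y hy y' hy'
      by_cases hyy : y = y'
      · subst hyy
        rw [if_pos rfl, codR_self, codR_self]
        have hmm := mul_le_mul (degR_le G y.2) (degR_le G y.1) (degR_nonneg G y.1) hnR0
        have he : nR*nR = nR^2 := (sq nR).symm
        have := sq_nonneg ((1+ε)*γ^2*nR)
        linarith
      · rw [if_neg hyy]
        have hd := hdist Y hYdis y hy y' hy' hyy
        have hb2 := (hcod y.2 y'.2 hd.2.2.2).2
        have hb1 := (hcod y.1 y'.1 hd.1).2
        have hmm := mul_le_mul hb2 hb1 (codR_nonneg G y.1 y'.1) hU2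
        have he : ((1+ε)*γ^2*nR)*((1+ε)*γ^2*nR) = ((1+ε)*γ^2*nR)^2 := (sq _).symm
        rw [add_zero]
        linarith
    calc ∑ y ∈ Y, ∑ y' ∈ Y, codR G y.2 y'.2 * codR G y.1 y'.1
        ≤ ∑ y ∈ Y, ∑ y' ∈ Y, (((1+ε)*γ^2*nR)^2 + (if y = y' then nR^2 else 0)) :=
          Finset.sum_le_sum fun y hy => Finset.sum_le_sum fun y' hy' => hterm y hy y' hy'
      _ = SY^2 * ((1+ε)*γ^2*nR)^2 + SY * nR^2 := by
          have hin : ∀ y ∈ Y, ∑ y' ∈ Y, (((1+ε)*γ^2*nR)^2 + (if y = y' then nR^2 else 0))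
              = SY * ((1+ε)*γ^2*nR)^2 + nR^2 := by
            intro y hy
            rw [Finset.sum_add_distrib, Finset.sum_const, nsmul_eq_mul, Finset.sum_ite_eq,
              if_pos hy]
          rw [Finset.sum_congr rfl hin, Finset.sum_add_distrib]
          simp only [Finset.sum_const, nsmul_eq_mul]
          ring
  have hEA : ∑ p ∈ (Finset.univ ×ˢ Finset.univ : Finset (Fin n × Fin n)),
      (gY G Y p.1 p.2 - m2)^2 ≤ 6*ε*nR^4 + nR^3 := by
    rw [sum_sub_sq]
    have hcardP : (((Finset.univ ×ˢ Finset.univ : Finset (Fin n × Fin n))).card : ℝ) = nR * nR := by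
      rw [Finset.card_product, Finset.card_univ, Fintype.card_fin]
      push_cast
      ring
    have hs1 : ∑ p ∈ (Finset.univ ×ˢ Finset.univ : Finset (Fin n × Fin n)), gY G Y p.1 p.2
        = ∑ a : Fin n, ∑ b : Fin n, gY G Y a b := Finset.sum_product _ _ _
    have hs2 : ∑ p ∈ (Finset.univ ×ˢ Finset.univ : Finset (Fin n × Fin n)), (gY G Y p.1 p.2)^2
        = ∑ a : Fin n, ∑ b : Fin n, (gY G Y a b)^2 := Finset.sum_product _ _ _
    rw [hcardP, hs1, hs2]
    have key : SY^2 * ((1+ε)*γ^2*nR)^2 + SY * nR^2 - 2*m2*(SY * ((1-ε)*γ*nR)^2)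
        + nR*nR*m2^2 ≤ 6*ε*nR^4 + nR^3 := by
      have hrw : SY^2 * ((1+ε)*γ^2*nR)^2 + SY * nR^2 - 2*(γ^2*SY)*(SY * ((1-ε)*γ*nR)^2)
          + nR*nR*(γ^2*SY)^2 = γ^4*SY^2*nR^2*(6*ε - ε^2) + SY*nR^2 := by ring
      rw [hm2def, hrw]
      have h2 : γ^4*SY^2*nR^2*(6*ε - ε^2) ≤ 6*ε*nR^4 := by
        have hA : γ^4*SY^2*nR^2*(6*ε - ε^2) ≤ nR^2*nR^2*(6*ε - ε^2) :=
          mul_le_mul_of_nonneg_right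
            (mul_le_mul_of_nonneg_right hg4 (sq_nonneg nR)) hε6
        have he : nR^2*nR^2*(6*ε - ε^2) = 6*ε*nR^4 - ε^2*nR^4 := by ring
        have hp : 0 ≤ ε^2*nR^4 := by positivity
        linarith
      linarith [hSYnR2]
    have hmono : -(2*m2*(∑ a : Fin n, ∑ b : Fin n, gY G Y a b))
        ≤ -(2*m2*(SY * ((1-ε)*γ*nR)^2)) := by
      have := mul_le_mul_of_nonneg_left hgsum (by linarith : (0:ℝ) ≤ 2*m2)
      linarith
    linarith
  -- variance bound for h
  have hhsum : SZ * ((1-ε)*γ*nR) ≤ ∑ a : Fin n, hZ G Z a := by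
    rw [sum_hZ]
    have hterm : ∀ z ∈ Z, (1-ε)*γ*nR ≤ degR G z.1 := fun z _ => (hdeg z.1).1
    calc SZ * ((1-ε)*γ*nR) = ∑ _z ∈ Z, (1-ε)*γ*nR := by rw [Finset.sum_const, nsmul_eq_mul]
      _ ≤ _ := Finset.sum_le_sum hterm
  have hhsq : ∑ a : Fin n, (hZ G Z a)^2 ≤ SZ^2 * ((1+ε)*γ^2*nR) + SZ * nR := by
    rw [sum_hZ_sq]
    have hU2 : (0:ℝ) ≤ (1+ε)*γ^2*nR := by
      apply mul_nonneg (mul_nonneg (by linarith) (sq_nonneg γ)) hnR0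
    have hterm : ∀ z ∈ Z, ∀ z' ∈ Z,
        codR G z.1 z'.1 ≤ (1+ε)*γ^2*nR + (if z = z' then nR else 0) := by
      intro z hz z' hz'
      by_cases hzz : z = z'
      · subst hzz
        rw [if_pos rfl, codR_self]
        linarith [degR_le G z.1, hU2]
      · rw [if_neg hzz]
        have hd := hdist Z hZdis z hz z' hz' hzz
        have hb := (hcod z.1 z'.1 hd.1).2
        linarith
    calc ∑ z ∈ Z, ∑ z' ∈ Z, codR G z.1 z'.1
        ≤ ∑ z ∈ Z, ∑ z' ∈ Z, ((1+ε)*γ^2*nR + (if z = z' then nR else 0)) :=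
          Finset.sum_le_sum fun z hz => Finset.sum_le_sum fun z' hz' => hterm z hz z' hz'
      _ = SZ^2 * ((1+ε)*γ^2*nR) + SZ * nR := by
          have hin : ∀ z ∈ Z, ∑ z' ∈ Z, ((1+ε)*γ^2*nR + (if z = z' then nR else 0))
              = SZ * ((1+ε)*γ^2*nR) + nR := by
            intro z hz
            rw [Finset.sum_add_distrib, Finset.sum_const, nsmul_eq_mul, Finset.sum_ite_eq,
              if_pos hz]
          rw [Finset.sum_congr rfl hin, Finset.sum_add_distrib]
          simp only [Finset.sum_const, nsmul_eq_mul]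
          ring
  have hEB : ∑ a : Fin n, (hZ G Z a - m1)^2 ≤ 3*ε*nR^3 + nR^2 := by
    rw [sum_sub_sq]
    have hcardU : ((Finset.univ : Finset (Fin n)).card : ℝ) = nR := by
      rw [Finset.card_univ, Fintype.card_fin]
    rw [hcardU]
    have key : SZ^2 * ((1+ε)*γ^2*nR) + SZ * nR - 2*m1*(SZ * ((1-ε)*γ*nR)) + nR*m1^2
        ≤ 3*ε*nR^3 + nR^2 := by
      have hrw : SZ^2 * ((1+ε)*γ^2*nR) + SZ * nR - 2*(γ*SZ)*(SZ * ((1-ε)*γ*nR))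
          + nR*(γ*SZ)^2 = γ^2*SZ^2*nR*(3*ε) + SZ*nR := by ring
      rw [hm1def, hrw]
      have h2 : γ^2*SZ^2*nR*(3*ε) ≤ 3*ε*nR^3 := by
        have hA : γ^2*SZ^2*nR*(3*ε) ≤ nR^2*nR*(3*ε) :=
          mul_le_mul_of_nonneg_right
            (mul_le_mul_of_nonneg_right hg2 hnR0) (by linarith : (0:ℝ) ≤ 3*ε)
        have he : nR^2*nR*(3*ε) = 3*ε*nR^3 := by ring
        linarith
      linarith [hSZnR]
    have hmono : -(2*m1*(∑ a : Fin n, hZ G Z a)) ≤ -(2*m1*(SZ * ((1-ε)*γ*nR))) := by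
      have hm10 : 0 ≤ m1 := by positivity
      have := mul_le_mul_of_nonneg_left hhsum (by linarith : (0:ℝ) ≤ 2*m1)
      linarith
    linarith
  -- Cauchy–Schwarz bounds on absolute deviations
  have hTA : ∑ p ∈ (Finset.univ ×ˢ Finset.univ : Finset (Fin n × Fin n)),
      |gY G Y p.1 p.2 - m2| ≤ nR * K := by
    have h1 := abs_sum_le_sqrt (Finset.univ ×ˢ Finset.univ : Finset (Fin n × Fin n))
      (fun p => gY G Y p.1 p.2 - m2)
    have hcardP : (((Finset.univ ×ˢ Finset.univ : Finset (Fin n × Fin n))).card : ℝ) = nR * nR := by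
      rw [Finset.card_product, Finset.card_univ, Fintype.card_fin]
      push_cast
      ring
    rw [hcardP] at h1
    calc ∑ p ∈ (Finset.univ ×ˢ Finset.univ : Finset (Fin n × Fin n)), |gY G Y p.1 p.2 - m2|
        ≤ Real.sqrt (nR * nR * ∑ p ∈ (Finset.univ ×ˢ Finset.univ : Finset (Fin n × Fin n)),
            (gY G Y p.1 p.2 - m2)^2) := h1
      _ ≤ Real.sqrt (nR * nR * (6*ε*nR^4 + nR^3)) := by
          apply Real.sqrt_le_sqrt
          apply mul_le_mul_of_nonneg_left hEA (mul_nonneg hnR0 hnR0)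
      _ = nR * K := by
          rw [hKdef, Real.sqrt_mul (mul_nonneg hnR0 hnR0), Real.sqrt_mul_self hnR0]
  have hTB : ∑ a : Fin n, |hZ G Z a - m1| ≤ K := by
    have h1 := abs_sum_le_sqrt (Finset.univ : Finset (Fin n)) (fun a => hZ G Z a - m1)
    have hcardU : ((Finset.univ : Finset (Fin n)).card : ℝ) = nR := by
      rw [Finset.card_univ, Fintype.card_fin]
    rw [hcardU] at h1
    calc ∑ a : Fin n, |hZ G Z a - m1|
        ≤ Real.sqrt (nR * ∑ a : Fin n, (hZ G Z a - m1)^2) := h1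
      _ ≤ Real.sqrt (6*ε*nR^4 + nR^3) := by
          apply Real.sqrt_le_sqrt
          have h := mul_le_mul_of_nonneg_left hEB hnR0
          have he : nR*(3*ε*nR^3 + nR^2) = 3*ε*nR^4 + nR^3 := by ring
          have hp : 0 ≤ 3*ε*nR^4 := by positivity
          linarith
      _ = K := hKdef.symm
  -- transfer to sums over X, Z via injectivity
  have hT1 : ∑ q ∈ X ×ˢ Z, |gY G Y q.1.1 q.2.2 - m2|
      ≤ ∑ p ∈ (Finset.univ ×ˢ Finset.univ : Finset (Fin n × Fin n)), |gY G Y p.1 p.2 - m2| := by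
    have hinj : ∀ q ∈ X ×ˢ Z, ∀ q' ∈ X ×ˢ Z,
        (fun q : (Fin n × Fin n) × (Fin n × Fin n) => (q.1.1, q.2.2)) q
          = (fun q : (Fin n × Fin n) × (Fin n × Fin n) => (q.1.1, q.2.2)) q' → q = q' := by
      intro q hq q' hq' he
      rw [Finset.mem_product] at hq hq'
      have he' : (q.1.1, q.2.2) = (q'.1.1, q'.2.2) := he
      injection he' with h1 h2
      have e1 : q.1 = q'.1 := by
        by_contra hne
        exact (hdist X hXdis q.1 hq.1 q'.1 hq'.1 hne).1 h1
      have e2 : q.2 = q'.2 := by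
        by_contra hne
        exact (hdist Z hZdis q.2 hq.2 q'.2 hq'.2 hne).2.2.2 h2
      exact Prod.ext e1 e2
    have himg := Finset.sum_image (f := fun p : Fin n × Fin n => |gY G Y p.1 p.2 - m2|) hinj
    calc ∑ q ∈ X ×ˢ Z, |gY G Y q.1.1 q.2.2 - m2|
        = ∑ p ∈ (X ×ˢ Z).image (fun q => (q.1.1, q.2.2)), |gY G Y p.1 p.2 - m2| := himg.symm
      _ ≤ _ := by
          apply Finset.sum_le_sum_of_subset_of_nonneg
          · intro p _
            simp [Finset.mem_product]
          · intro p _ _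
            exact abs_nonneg _
  have hT2 : ∑ x ∈ X, |hZ G Z x.2 - m1| ≤ ∑ a : Fin n, |hZ G Z a - m1| := by
    have hinj : ∀ x ∈ X, ∀ x' ∈ X, x.2 = x'.2 → x = x' := by
      intro x hx x' hx' he
      by_contra hne
      exact (hdist X hXdis x hx x' hx' hne).2.2.2 he
    have himg := Finset.sum_image (f := fun a : Fin n => |hZ G Z a - m1|) hinj
    calc ∑ x ∈ X, |hZ G Z x.2 - m1|
        = ∑ a ∈ X.image (fun x => x.2), |hZ G Z a - m1| := himg.symm
      _ ≤ _ := by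
          apply Finset.sum_le_sum_of_subset_of_nonneg
          · intro a _
            exact Finset.mem_univ a
          · intro a _ _
            exact abs_nonneg _
  -- the main count
  have hN : (((X ×ˢ (Y ×ˢ Z)).filter (fun w =>
        G.Adj w.1.1 w.2.1.2 ∧ G.Adj w.2.1.1 w.2.2.2 ∧ G.Adj w.2.2.1 w.1.2)).card : ℝ)
      = ∑ x ∈ X, ∑ z ∈ Z, (if G.Adj x.2 z.1 then (1:ℝ) else 0) * gY G Y x.1 z.2 := by
    rw [card_filter_real]
    rw [Finset.sum_product]
    have hx1 : ∀ x ∈ X, ∑ w ∈ Y ×ˢ Z,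
        (if G.Adj x.1 w.1.2 ∧ G.Adj w.1.1 w.2.2 ∧ G.Adj w.2.1 x.2 then (1:ℝ) else 0)
        = ∑ z ∈ Z, (if G.Adj x.2 z.1 then (1:ℝ) else 0) * gY G Y x.1 z.2 := by
      intro x _
      rw [Finset.sum_product]
      rw [Finset.sum_comm]
      apply Finset.sum_congr rfl
      intro z _
      rw [gY_eq_sum, Finset.mul_sum]
      apply Finset.sum_congr rfl
      intro y _
      rw [G.adj_comm x.2 z.1, G.adj_comm z.2 y.1]
      by_cases h1 : G.Adj x.1 y.2 <;> by_cases h2 : G.Adj y.1 z.2 <;>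
        by_cases h3 : G.Adj z.1 x.2 <;> simp [h1, h2, h3]
    exact Finset.sum_congr rfl hx1
  -- lower bound the count
  have hMlb : SX * m1 - K ≤ ∑ x ∈ X, hZ G Z x.2 := by
    have hpt : ∀ x ∈ X, m1 - |hZ G Z x.2 - m1| ≤ hZ G Z x.2 := by
      intro x _
      have h := le_abs_self (m1 - hZ G Z x.2)
      rw [abs_sub_comm (hZ G Z x.2) m1]
      linarith
    have := Finset.sum_le_sum hpt
    rw [Finset.sum_sub_distrib, Finset.sum_const, nsmul_eq_mul] at this
    have h2 : ∑ x ∈ X, |hZ G Z x.2 - m1| ≤ K := le_trans hT2 hTB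
    calc SX * m1 - K ≤ SX * m1 - ∑ x ∈ X, |hZ G Z x.2 - m1| := by linarith
      _ ≤ ∑ x ∈ X, hZ G Z x.2 := by rw [hSXdef]; linarith [this]
  have hstep : m2 * (∑ x ∈ X, hZ G Z x.2) - ∑ q ∈ X ×ˢ Z, |gY G Y q.1.1 q.2.2 - m2|
      ≤ ∑ x ∈ X, ∑ z ∈ Z, (if G.Adj x.2 z.1 then (1:ℝ) else 0) * gY G Y x.1 z.2 := by
    have hpt : ∀ x ∈ X, ∀ z ∈ Z,
        m2 * (if G.Adj x.2 z.1 then (1:ℝ) else 0) - |gY G Y x.1 z.2 - m2|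
          ≤ (if G.Adj x.2 z.1 then (1:ℝ) else 0) * gY G Y x.1 z.2 := by
      intro x _ z _
      by_cases hadj : G.Adj x.2 z.1
      · rw [if_pos hadj]
        have h := le_abs_self (m2 - gY G Y x.1 z.2)
        rw [abs_sub_comm (gY G Y x.1 z.2) m2]
        linarith
      · rw [if_neg hadj]
        simp only [mul_zero, zero_mul]
        linarith [abs_nonneg (gY G Y x.1 z.2 - m2)]
    have e1 : ∑ x ∈ X, hZ G Z x.2
        = ∑ x ∈ X, ∑ z ∈ Z, (if G.Adj x.2 z.1 then (1:ℝ) else 0) :=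
      Finset.sum_congr rfl fun x _ => hZ_eq_sum G Z x.2
    have e2 : ∑ q ∈ X ×ˢ Z, |gY G Y q.1.1 q.2.2 - m2|
        = ∑ x ∈ X, ∑ z ∈ Z, |gY G Y x.1 z.2 - m2| := Finset.sum_product _ _ _
    rw [e1, e2, Finset.mul_sum, ← Finset.sum_sub_distrib]
    apply Finset.sum_le_sum
    intro x hx
    rw [Finset.mul_sum, ← Finset.sum_sub_distrib]
    exact Finset.sum_le_sum fun z hz => hpt x hx z hz
  -- put everything together
  rw [hN]
  have hTbound : ∑ q ∈ X ×ˢ Z, |gY G Y q.1.1 q.2.2 - m2| ≤ nR * K := le_trans hT1 hTA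
  have hMK : m2 * (SX * m1 - K) ≤ m2 * (∑ x ∈ X, hZ G Z x.2) :=
    mul_le_mul_of_nonneg_left hMlb hm20
  have hprod : m2 * (SX * m1) = γ^3 * SX * SY * SZ := by
    rw [hm2def, hm1def]; ring
  have hKfin : 2 * nR * K ≤ β * nR^3 := by
    have h := mul_le_mul_of_nonneg_left hKle (by linarith : (0:ℝ) ≤ 2*nR)
    have he : 2*nR*(β/2*nR^2) = β*nR^3 := by ring
    linarith
  have hfinal : γ^3 * SX * SY * SZ - β * nR^3
      ≤ ∑ x ∈ X, ∑ z ∈ Z, (if G.Adj x.2 z.1 then (1:ℝ) else 0) * gY G Y x.1 z.2 := by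
    have h1 : m2 * K ≤ nR * K := mul_le_mul_of_nonneg_right hm2le hK0
    calc γ^3 * SX * SY * SZ - β * nR^3
        ≤ m2 * (SX * m1) - m2*K - nR*K := by
          rw [hprod]
          linarith
      _ = m2 * (SX * m1 - K) - nR*K := by ring
      _ ≤ m2 * (∑ x ∈ X, hZ G Z x.2) - ∑ q ∈ X ×ˢ Z, |gY G Y q.1.1 q.2.2 - m2| := by
          linarith
      _ ≤ _ := hstep
  have hpos : 0 ≤ γ^3 * SX * SY * SZ := by positivity
  linarith
end
end
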